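/- arXiv:math/9808109 — 8 statements merged into one kernel-verified Lean document; each statement's English description precedes it below -/
import Mathlib

section
/- (Quispel–Capel representation.) Let n be a positive integer and let f, z ∈ ℝⁿ satisfy z ≠ 0 and ⟨f, z⟩ = 0 (the Euclidean inner product vanishes). Define the matrix J by J_{ij} = (f_i z_j − f_j z_i)/‖z‖², where ‖z‖² = Σ_k z_k². Then J is skew-symmetric (J_{ji} = −J_{ij} for all i, j) and J·z = f. In particular, if a vector field f : ℝⁿ → ℝⁿ has H as an integral (⟨f(x), ∇H(x)⟩ = 0 for all x), then at every point x where ∇H(x) ≠ 0, taking z = ∇H(x) gives a skew-symmetric matrix J(x) with J(x)·∇H(x) = f(x). -/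
open Matrix

noncomputable def grad {n : ℕ} (F : (Fin n → ℝ) → ℝ) (x : Fin n → ℝ) : Fin n → ℝ :=
  fun i => fderiv ℝ F x (Pi.single i 1)

lemma qc_core (n : ℕ) (f z : Fin n → ℝ) (hz : z ≠ 0)
    (horth : ∑ k, f k * z k = 0) :
    (let J : Matrix (Fin n) (Fin n) ℝ :=
        fun i j => (f i * z j - f j * z i) / (∑ k, (z k) ^ 2);
      (∀ i j, J j i = -J i j) ∧ J.mulVec z = f) := by
  intro J
  have hS : (∑ k, (z k) ^ 2) ≠ 0 := by
    intro h
    apply hz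
    funext k
    have := (Finset.sum_eq_zero_iff_of_nonneg (fun i _ => sq_nonneg (z i))).mp h k (Finset.mem_univ k)
    simpa [pow_eq_zero_iff] using this
  constructor
  · intro i j; ring
  · funext i
    simp only [J, mulVec, dotProduct]
    have : ∑ j, (f i * z j - f j * z i) / (∑ k, (z k) ^ 2) * z j
        = (f i * (∑ j, (z j) ^ 2) - (∑ j, f j * z j) * z i) / (∑ k, (z k) ^ 2) := by
      simp only [div_mul_eq_mul_div, ← Finset.sum_div]
      congr 1
      rw [Finset.mul_sum, Finset.sum_mul, ← Finset.sum_sub_distrib]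
      apply Finset.sum_congr rfl
      intro j _
      ring
    rw [this, horth]
    field_simp
    ring

/-- Quispel–Capel representation: if `⟨f,z⟩ = 0` and `z ≠ 0`, the matrix
`J_{ij} = (f_i z_j − f_j z_i)/‖z‖²` is skew-symmetric and satisfies `J·z = f`.
In particular, a vector field with integral `H` can be written as `f = J∇H`
wherever `∇H ≠ 0`. -/
theorem quispel_capel_representation
    (n : ℕ) (hn : 0 < n) (f z : Fin n → ℝ) (hz : z ≠ 0)
    (horth : ∑ k, f k * z k = 0) :
    (let J : Matrix (Fin n) (Fin n) ℝ :=
        fun i j => (f i * z j - f j * z i) / (∑ k, (z k) ^ 2);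
      (∀ i j, J j i = -J i j) ∧ J.mulVec z = f) ∧
    (∀ (F : (Fin n → ℝ) → (Fin n → ℝ)) (H : (Fin n → ℝ) → ℝ), Differentiable ℝ H →
      (∀ x, ∑ k, F x k * grad H x k = 0) →
      ∀ x : Fin n → ℝ, grad H x ≠ 0 →
        (let J : Matrix (Fin n) (Fin n) ℝ :=
            fun i j => (F x i * grad H x j - F x j * grad H x i) /
              (∑ k, (grad H x k) ^ 2);
          (∀ i j, J j i = -J i j) ∧ J.mulVec (grad H x) = F x)) := by
  constructor
  · exact qc_core n f z hz horth
  · intro F H _ hint x hgx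
    exact qc_core n (F x) (grad H x) hgx (hint x)
end

section
/- Let n and p be positive integers, let I¹, …, Iᵖ : ℝⁿ → ℝ be differentiable, and let K : ℝⁿ → Λ^{p+1}(ℝⁿ) assign to each point x an alternating (p+1)-multilinear real-valued form K(x) on ℝⁿ. Define the vector field f : ℝⁿ → ℝⁿ by f(x)_i = K(x)(e_i, ∇I¹(x), …, ∇Iᵖ(x)), where e_i is the i-th standard basis vector. If u : ℝ → ℝⁿ is differentiable and satisfies u'(t) = f(u(t)) for all t, then every Iʲ is conserved: Iʲ(u(t)) = Iʲ(u(0)) for all t ∈ ℝ and all j = 1, …, p. -/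
/-- Any linear functional on `ℝⁿ` is determined by its values on the standard basis. -/
lemma lin_apply_eq_sum {n : ℕ} (L : (Fin n → ℝ) →ₗ[ℝ] ℝ) (v : Fin n → ℝ) :
    L v = ∑ i, v i * L (Pi.single i 1) := by
  have hv : v = ∑ i, v i • (Pi.single i 1 : Fin n → ℝ) := by
    simp [← Pi.single_smul, Finset.univ_sum_single]
  conv_lhs => rw [hv]
  simp [smul_eq_mul]

/-- If `f(x)_i = K(x)(e_i, ∇I¹(x), …, ∇Iᵖ(x))` with `K(x)` an alternating
`(p+1)`-form, then every `Iʲ` is conserved along solutions of `u̇ = f(u)`. -/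
theorem integrals_conserved_of_alternating_form
    (n p : ℕ) (hn : 0 < n) (hp : 0 < p)
    (I : Fin p → (Fin n → ℝ) → ℝ) (hI : ∀ j, Differentiable ℝ (I j))
    (K : (Fin n → ℝ) → AlternatingMap ℝ (Fin n → ℝ) ℝ (Fin (p + 1)))
    (u : ℝ → (Fin n → ℝ)) (hu : Differentiable ℝ u)
    (hode : ∀ t, deriv u t = fun i =>
      K (u t) (Fin.cons (Pi.single i 1) (fun j : Fin p => grad (I j) (u t)))) :
    ∀ (t : ℝ) (j : Fin p), I j (u t) = I j (u 0) := by
  intro t j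
  have hdiff : Differentiable ℝ (fun s => I j (u s)) := (hI j).comp hu
  have hderiv : ∀ s, deriv (fun s => I j (u s)) s = 0 := by
    intro s
    set x := u s with hx
    set g : Fin p → (Fin n → ℝ) := fun k => grad (I k) x with hg
    -- the linear map v ↦ K x (Fin.cons v g)
    set L : (Fin n → ℝ) →ₗ[ℝ] ℝ :=
      { toFun := fun v => K x (Fin.cons v g)
        map_add' := by
          intro a b
          have h := (K x).toMultilinearMap.map_update_add (Fin.cons a g) 0 a b
          simpa [Fin.update_cons_zero] using h
        map_smul' := by
          intro c a
          have h := (K x).toMultilinearMap.map_update_smul (Fin.cons a g) 0 c a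
          simpa [Fin.update_cons_zero] using h } with hL
    have hchain : HasDerivAt (fun s => I j (u s))
        (fderiv ℝ (I j) x (deriv u s)) s :=
      ((hI j x).hasFDerivAt).comp_hasDerivAt s (hu s).hasDerivAt
    rw [hchain.deriv]
    have h1 : fderiv ℝ (I j) x (deriv u s)
        = ∑ i, (deriv u s i) * grad (I j) x i := by
      have := lin_apply_eq_sum ((fderiv ℝ (I j) x) : (Fin n → ℝ) →ₗ[ℝ] ℝ) (deriv u s)
      simpa [grad] using this
    rw [h1]
    have h2 : ∀ i, deriv u s i = L (Pi.single i 1) := by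
      intro i
      rw [hode s]
      rfl
    have h3 : (∑ i, (deriv u s i) * grad (I j) x i)
        = L (grad (I j) x) := by
      rw [lin_apply_eq_sum L (grad (I j) x)]
      apply Finset.sum_congr rfl
      intro i _
      rw [h2 i, mul_comm]
    rw [h3]
    have h4 : L (grad (I j) x) = K x (Fin.cons (grad (I j) x) g) := rfl
    rw [h4]
    apply (K x).map_eq_zero_of_eq _ (i := 0) (j := j.succ)
    · simp [g]
    · exact (Fin.succ_ne_zero j).symm
  have := is_const_of_deriv_eq_zero hdiff hderiv t 0
  exact this
end

section
/- Let n be a positive integer and let f : ℝⁿ → ℝⁿ. Then the following are equivalent: (1) Σ_{i} f_i(u) = 0 for all u ∈ ℝⁿ (so that Σ_i u_i is an integral of u̇ = f(u)); (2) there exist J : ℝⁿ → Matrix (Fin n) (Fin n) ℝ and g : ℝⁿ → ℝⁿ such that for every u ∈ ℝⁿ, Σ_i J(u)_{ij} = 0 for every column j, and f(u) = J(u) · g(u). -/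
open Matrix

/-- `Σ_i f_i(u) = 0` for all `u` iff `f` can be written as `f(u) = J(u)·g(u)`
with every column of `J(u)` summing to zero. -/
theorem zero_sum_iff_zero_column_sum_form
    (n : ℕ) (hn : 0 < n) (f : (Fin n → ℝ) → (Fin n → ℝ)) :
    (∀ u : Fin n → ℝ, ∑ i, f u i = 0) ↔
    (∃ (J : (Fin n → ℝ) → Matrix (Fin n) (Fin n) ℝ)
        (g : (Fin n → ℝ) → (Fin n → ℝ)),
      ∀ u : Fin n → ℝ,
        (∀ j, ∑ i, J u i j = 0) ∧ f u = (J u).mulVec (g u)) := by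
  have i0 : Fin n := ⟨0, hn⟩
  constructor
  · intro h
    refine ⟨fun u => Matrix.of fun i j => if j = i0 then f u i else 0,
      fun _ j => if j = i0 then 1 else 0, fun u => ⟨?_, ?_⟩⟩
    · intro j
      by_cases hj : j = i0 <;> simp [hj, h u]
    · funext i
      simp [Matrix.mulVec, dotProduct, ite_and]
  · rintro ⟨J, g, h⟩ u
    obtain ⟨hcol, hf⟩ := h u
    rw [hf]
    simp only [Matrix.mulVec, dotProduct]
    rw [Finset.sum_comm]
    simp [← Finset.sum_mul, hcol]
end

section
/- (Second-order two-point skew derivative on a smooth nonuniform grid.) Let c : ℝ → ℝ be four times continuously differentiable with c'(t) ≠ 0 for all t in a neighbourhood of 0, and let v : ℝ → ℝ be three times continuously differentiable. Then, as h → 0, (1/(2h)) · ( c'(h)·v(c(h))/(c'(h/2))² − c'(−h)·v(c(−h))/(c'(−h/2))² ) = v'(c(0)) + O(h²). That is, this two-point, anti-symmetric finite difference using the data v(c(±h)) and the grid map c approximates the derivative of v at c(0) to second order on smooth grids; when c(t) = t it reduces to the standard central difference. -/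
open Set

/-- MVT helper: if `f 0 = 0` and `|f'| ≤ C` on `uIcc 0 a` then `|f a| ≤ C * |a|`. -/
lemma aux_mvt_bound {f f' : ℝ → ℝ} {a C : ℝ}
    (hf : ∀ x ∈ Set.uIcc (0:ℝ) a, HasDerivAt f (f' x) x)
    (hb : ∀ x ∈ Set.uIcc (0:ℝ) a, |f' x| ≤ C) (h0 : f 0 = 0) :
    |f a| ≤ C * |a| := by
  have := (convex_uIcc (0:ℝ) a).norm_image_sub_le_of_norm_hasDerivWithin_le
    (f' := f') (fun x hx => (hf x hx).hasDerivWithinAt) hb Set.left_mem_uIcc Set.right_mem_uIcc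
  simpa [h0, Real.norm_eq_abs] using this

lemma aux_abs_le {x h : ℝ} (hx : x ∈ Set.uIcc (0:ℝ) h) : |x| ≤ |h| := by
  rcases Set.mem_uIcc.mp hx with ⟨h1, h2⟩ | ⟨h1, h2⟩ <;>
    exact abs_le.mpr ⟨by linarith [neg_abs_le h, abs_nonneg h],
      by linarith [le_abs_self h, abs_nonneg h]⟩

/-- Second-order two-point skew derivative on a smooth nonuniform grid:
`(1/(2h))·(c'(h)v(c(h))/c'(h/2)² − c'(−h)v(c(−h))/c'(−h/2)²) = v'(c(0)) + O(h²)`. -/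
theorem two_point_skew_derivative_nonuniform_grid
    (c : ℝ → ℝ) (hc : ContDiff ℝ 4 c)
    (hc' : ∃ ε > (0 : ℝ), ∀ t : ℝ, |t| < ε → deriv c t ≠ 0)
    (v : ℝ → ℝ) (hv : ContDiff ℝ 3 v) :
    ∃ C > (0 : ℝ), ∃ δ > (0 : ℝ), ∀ h : ℝ, 0 < |h| → |h| < δ →
      |(1 / (2 * h)) *
          (deriv c h * v (c h) / (deriv c (h / 2)) ^ 2 -
            deriv c (-h) * v (c (-h)) / (deriv c (-h / 2)) ^ 2) -
        deriv v (c 0)| ≤ C * |h| ^ 2 := by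
  obtain ⟨ε, hε, hne⟩ := hc'
  set g : ℝ → ℝ := deriv c with hg_def
  have hg : ContDiff ℝ 3 g := by
    have h4 : (4 : WithTop ℕ∞) = 3 + 1 := by norm_num
    rw [h4] at hc
    exact (contDiff_succ_iff_deriv.mp hc).2.2
  have hc3 : ContDiff ℝ 3 c := hc.of_le (by norm_num)
  set w : ℝ → ℝ := fun x => v (c x) with hw_def
  have hw : ContDiff ℝ 3 w := hv.comp hc3
  set F : ℝ → ℝ := fun x => g x * w x / (g (x / 2)) ^ 2 with hF_def
  set L : ℝ := deriv v (c 0) with hL_def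
  set s : Set ℝ := Set.Ioo (-ε) ε with hs_def
  have hs_open : IsOpen s := isOpen_Ioo
  have hmem : ∀ x : ℝ, |x| < ε → x ∈ s := fun x hx => by
    rw [abs_lt] at hx; exact ⟨by linarith [hx.1], hx.2⟩
  have habs : ∀ x ∈ s, |x| < ε := fun x hx => abs_lt.mpr ⟨by linarith [hx.1], hx.2⟩
  have hneg : ∀ x ∈ s, -x ∈ s := fun x hx => hmem _ (by rw [abs_neg]; exact habs x hx)
  have hgx : ∀ x ∈ s, g x ≠ 0 := fun x hx => hne x (habs x hx)
  have hgx2 : ∀ x ∈ s, g (x / 2) ≠ 0 := fun x hx => by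
    apply hne; rw [abs_div, abs_two]
    have := habs x hx; linarith [abs_nonneg x]
  -- F is C³ on s
  have hhalf : ContDiff ℝ 3 (fun x : ℝ => x / 2) := contDiff_id.div_const 2
  have hF : ContDiffOn ℝ 3 F s := by
    apply ContDiffOn.div ((hg.mul hw).contDiffOn)
    · exact ((hg.comp hhalf).pow 2).contDiffOn
    · exact fun x hx => pow_ne_zero 2 (hgx2 x hx)
  set F₁ : ℝ → ℝ := deriv F with hF1_def
  set F₂ : ℝ → ℝ := deriv F₁ with hF2_def
  set F₃ : ℝ → ℝ := deriv F₂ with hF3_def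
  have hF1 : ContDiffOn ℝ 2 F₁ s := hF.deriv_of_isOpen hs_open (by norm_num)
  have hF2 : ContDiffOn ℝ 1 F₂ s := hF1.deriv_of_isOpen hs_open (by norm_num)
  have hF3 : ContinuousOn F₃ s := hF2.continuousOn_deriv_of_isOpen hs_open le_rfl
  have hdF : ∀ x ∈ s, HasDerivAt F (F₁ x) x := fun x hx =>
    ((hF.differentiableOn (by norm_num)).differentiableAt (hs_open.mem_nhds hx)).hasDerivAt
  have hdF1 : ∀ x ∈ s, HasDerivAt F₁ (F₂ x) x := fun x hx =>
    ((hF1.differentiableOn (by norm_num)).differentiableAt (hs_open.mem_nhds hx)).hasDerivAt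
  have hdF2 : ∀ x ∈ s, HasDerivAt F₂ (F₃ x) x := fun x hx =>
    ((hF2.differentiableOn (by norm_num)).differentiableAt (hs_open.mem_nhds hx)).hasDerivAt
  have h0s : (0:ℝ) ∈ s := hmem 0 (by simpa using hε)
  -- the key value F₁ 0 = L
  have hF10 : F₁ 0 = L := by
    have hg0 : g 0 ≠ 0 := hgx 0 h0s
    have hgd : HasDerivAt g (deriv g 0) 0 :=
      ((hg.differentiable (by norm_num)) 0).hasDerivAt
    have hcd : HasDerivAt c (g 0) 0 := ((hc3.differentiable (by norm_num)) 0).hasDerivAt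
    have hvd : HasDerivAt v L (c 0) := ((hv.differentiable (by norm_num)) (c 0)).hasDerivAt
    have hwd : HasDerivAt w (L * g 0) 0 := hvd.comp 0 hcd
    have hhd : HasDerivAt (fun x : ℝ => x / 2) (1 / 2) 0 := by
      have := (hasDerivAt_id (0:ℝ)).div_const 2
      simpa using this
    have hgd' : HasDerivAt g (deriv g 0) ((fun x : ℝ => x / 2) 0) := by
      simpa using hgd
    have hgh : HasDerivAt (fun x : ℝ => g (x / 2)) (deriv g 0 * (1 / 2)) 0 :=
      by have := hgd'.comp 0 hhd; exact this
    have hnum : HasDerivAt (fun x => g x * w x) (deriv g 0 * w 0 + g 0 * (L * g 0)) 0 :=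
      hgd.mul hwd
    have hden := hgh.pow 2
    have hne0 : (g ((0:ℝ) / 2)) ^ 2 ≠ 0 := by
      rw [zero_div]; exact pow_ne_zero 2 hg0
    have htot := hnum.div hden hne0
    have hval := htot.deriv
    rw [hF1_def]
    rw [show ((fun x => g x * w x) / (fun x => g (x / 2)) ^ 2) = F from rfl] at hval
    rw [hval]
    simp only [Pi.pow_apply]
    rw [zero_div]
    field_simp
    ring
  -- auxiliary functions
  set G : ℝ → ℝ := fun x => F x - F (-x) - 2 * L * x with hG_def
  set G₁ : ℝ → ℝ := fun x => F₁ x + F₁ (-x) - 2 * L with hG1_def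
  set G₂ : ℝ → ℝ := fun x => F₂ x - F₂ (-x) with hG2_def
  set G₃ : ℝ → ℝ := fun x => F₃ x + F₃ (-x) with hG3_def
  have hGd : ∀ x ∈ s, HasDerivAt G (G₁ x) x := by
    intro x hx
    have h1 := hdF x hx
    have h2 : HasDerivAt (fun y => F (-y)) (F₁ (-x) * (-1)) x :=
      (hdF (-x) (hneg x hx)).comp x (by simpa using hasDerivAt_neg x)
    have h3 : HasDerivAt (fun y : ℝ => 2 * L * y) (2 * L) x := by
      simpa using (hasDerivAt_id x).const_mul (2 * L)
    have := (h1.sub h2).sub h3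
    refine this.congr_deriv ?_
    simp only [hG1_def]; ring
  have hG1d : ∀ x ∈ s, HasDerivAt G₁ (G₂ x) x := by
    intro x hx
    have h1 := hdF1 x hx
    have h2 : HasDerivAt (fun y => F₁ (-y)) (F₂ (-x) * (-1)) x :=
      (hdF1 (-x) (hneg x hx)).comp x (by simpa using hasDerivAt_neg x)
    have := (h1.add h2).sub_const (2 * L)
    refine this.congr_deriv ?_
    simp only [hG2_def]; ring
  have hG2d : ∀ x ∈ s, HasDerivAt G₂ (G₃ x) x := by
    intro x hx
    have h1 := hdF2 x hx
    have h2 : HasDerivAt (fun y => F₂ (-y)) (F₃ (-x) * (-1)) x :=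
      (hdF2 (-x) (hneg x hx)).comp x (by simpa using hasDerivAt_neg x)
    have := h1.sub h2
    refine this.congr_deriv ?_
    simp only [hG3_def]; ring
  have hG0 : G 0 = 0 := by simp [hG_def]
  have hG10 : G₁ 0 = 0 := by simp [hG1_def, hF10]; ring
  have hG20 : G₂ 0 = 0 := by simp [hG2_def]
  -- bound on F₃ on the compact K
  set K : Set ℝ := Set.Icc (-(ε/2)) (ε/2) with hK_def
  have hKs : K ⊆ s := fun x hx => by
    constructor <;> [linarith [hx.1]; linarith [hx.2]]
  obtain ⟨M, hM⟩ := isCompact_Icc.exists_bound_of_continuousOn (hF3.mono hKs)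
  set M' : ℝ := max M 0 with hM'_def
  have hM'0 : 0 ≤ M' := le_max_right M 0
  have hMK : ∀ x ∈ K, |F₃ x| ≤ M' := fun x hx =>
    le_trans (by simpa [Real.norm_eq_abs] using hM x hx) (le_max_left M 0)
  have hKneg : ∀ x ∈ K, -x ∈ K := fun x hx => ⟨by linarith [hx.2], by linarith [hx.1]⟩
  refine ⟨M' + 1, by linarith, ε / 2, by linarith, fun h hh0 hhδ => ?_⟩
  have hhK : h ∈ K := abs_le.mp hhδ.le |>.imp (fun a => a) (fun a => a) |> fun p => ⟨p.1, p.2⟩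
  have hTK : Set.uIcc (0:ℝ) h ⊆ K := fun x hx => by
    have := aux_abs_le hx
    exact ⟨by linarith [abs_le.mp (this.trans hhδ.le) |>.1,
      (abs_le.mp (le_of_lt (lt_of_le_of_lt this hhδ))).1], (abs_le.mp (this.trans hhδ.le)).2⟩
  have hTs : Set.uIcc (0:ℝ) h ⊆ s := fun x hx => hKs (hTK hx)
  -- step 1 : |G₂ x| ≤ 2 M' |h| on uIcc 0 h
  have step1 : ∀ x ∈ Set.uIcc (0:ℝ) h, |G₂ x| ≤ (2 * M' * |h|) := by
    intro x hx
    have hsubx : Set.uIcc (0:ℝ) x ⊆ Set.uIcc (0:ℝ) h :=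
      Set.uIcc_subset_uIcc Set.left_mem_uIcc hx
    have := aux_mvt_bound (f := G₂) (f' := G₃)
      (fun y hy => hG2d y (hTs (hsubx hy)))
      (fun y hy => by
        have hy1 := hTK (hsubx hy)
        calc |G₃ y| ≤ |F₃ y| + |F₃ (-y)| := by simp only [hG3_def]; exact abs_add_le _ _
          _ ≤ M' + M' := add_le_add (hMK y hy1) (hMK (-y) (hKneg y hy1))
          _ = 2 * M' := by ring) hG20
    calc |G₂ x| ≤ 2 * M' * |x| := this
      _ ≤ 2 * M' * |h| := by
          have := aux_abs_le hx
          nlinarith [abs_nonneg x]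
  -- step 2 : |G₁ x| ≤ 2 M' |h| |x|
  have step2 : ∀ x ∈ Set.uIcc (0:ℝ) h, |G₁ x| ≤ (2 * M' * |h|) * |x| := by
    intro x hx
    have hsubx : Set.uIcc (0:ℝ) x ⊆ Set.uIcc (0:ℝ) h :=
      Set.uIcc_subset_uIcc Set.left_mem_uIcc hx
    exact aux_mvt_bound (f := G₁) (f' := G₂)
      (fun y hy => hG1d y (hTs (hsubx hy)))
      (fun y hy => step1 y (hsubx hy)) hG10
  -- step 3 : |G h| ≤ 2 M' |h|² |h|
  have step3 : |G h| ≤ (2 * M' * |h| * |h|) * |h| := by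
    refine aux_mvt_bound (f := G) (f' := G₁)
      (fun y hy => hGd y (hTs hy))
      (fun y hy => ?_) hG0
    calc |G₁ y| ≤ (2 * M' * |h|) * |y| := step2 y hy
      _ ≤ 2 * M' * |h| * |h| := by
          have h1 := aux_abs_le hy
          exact mul_le_mul_of_nonneg_left h1 (by positivity)
  -- conclude
  have hhne : h ≠ 0 := fun hcon => by simp [hcon] at hh0
  have hexpr : (1 / (2 * h)) * (F h - F (-h)) - L = G h / (2 * h) := by
    simp only [hG_def]
    field_simp
  have hgoal : (1 / (2 * h)) *
      (deriv c h * v (c h) / (deriv c (h / 2)) ^ 2 -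
        deriv c (-h) * v (c (-h)) / (deriv c (-h / 2)) ^ 2) - deriv v (c 0)
      = G h / (2 * h) := by
    rw [← hexpr]
  rw [hgoal]
  rw [abs_div, abs_mul, abs_two]
  rw [div_le_iff₀ (by positivity)]
  calc |G h| ≤ (2 * M' * |h| * |h|) * |h| := step3
    _ ≤ (M' + 1) * |h| ^ 2 * (2 * |h|) := by nlinarith [abs_nonneg h, sq_nonneg (|h|)]
end

section
/- (The basic skew 3-tensor difference in one dimension.) Let v, w : ℝ → ℝ be five times continuously differentiable and let x ∈ ℝ. Write v_a = v(x + a·h) and w_a = w(x + a·h). Then, as h → 0, (v₁w₂ − v₂w₁) + (v₁w₋₁ − v₋₁w₁) + (v₋₂w₋₁ − v₋₁w₋₂) = h³·( 3·(v'(x)w''(x) − w'(x)v''(x)) + 2·(v(x)w'''(x) − w(x)v'''(x)) ) + O(h⁵). -/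
open Set Finset Nat

/-- degree-4 Taylor polynomial with given coefficients -/
noncomputable def P4 (c0 c1 c2 c3 c4 t : ℝ) : ℝ :=
  c0 + t * c1 + t ^ 2 / 2 * c2 + t ^ 3 / 6 * c3 + t ^ 4 / 24 * c4

lemma idw_eq {f : ℝ → ℝ} (hf : ContDiff ℝ 5 f) {s : Set ℝ} (hs : UniqueDiffOn ℝ s)
    {k : ℕ} (hk : (k : WithTop ℕ∞) ≤ 5) {y : ℝ} (hy : y ∈ s) :
    iteratedDerivWithin k f s y = iteratedDeriv k f y := by
  have hT : HasFTaylorSeriesUpTo 5 f (ftaylorSeries ℝ f) :=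
    (contDiff_iff_ftaylorSeries (n := 5)).1 (by exact_mod_cast hf)
  have h1 := (hT.hasFTaylorSeriesUpToOn s).eq_iteratedFDerivWithin_of_uniqueDiffOn hk hs hy
  have h2 := hT.eq_iteratedFDeriv (𝕜 := ℝ) hk y
  rw [iteratedDerivWithin_eq_iteratedFDerivWithin, iteratedDeriv_eq_iteratedFDeriv, ← h1, h2]

lemma sum_eq_P4 (f : ℝ → ℝ) (x t : ℝ) :
    ∑ k ∈ Finset.range 5, t ^ k / (k ! : ℝ) * iteratedDeriv k f x
      = P4 (f x) (deriv f x) (iteratedDeriv 2 f x) (iteratedDeriv 3 f x)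
          (iteratedDeriv 4 f x) t := by
  simp [Finset.sum_range_succ, P4, Nat.factorial, iteratedDeriv_one, iteratedDeriv_zero]
  try ring

lemma taylor_right (f : ℝ → ℝ) (hf : ContDiff ℝ 5 f) (x : ℝ) :
    ∃ C > (0:ℝ), ∀ h : ℝ, 0 ≤ h → h ≤ 1 →
      |f (x + h) - ∑ k ∈ Finset.range 5, h ^ k / (k ! : ℝ) * iteratedDeriv k f x|
        ≤ C * h ^ 5 := by
  obtain ⟨C, hC⟩ := (isCompact_Icc (a := x) (b := x + 1)).exists_bound_of_continuousOn
    ((hf.continuous_iteratedDeriv 5 (by exact_mod_cast le_rfl)).continuousOn)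
  have hab : x ≤ x + 1 := by linarith
  have huniq : UniqueDiffOn ℝ (Icc x (x + 1)) := uniqueDiffOn_Icc (by linarith)
  refine ⟨max C 0 + 1, by positivity, fun h h0 h1 => ?_⟩
  have hx : x + h ∈ Icc x (x + 1) := by constructor <;> linarith
  have hC' : ∀ y ∈ Icc x (x + 1),
      ‖iteratedDerivWithin 5 f (Icc x (x + 1)) y‖ ≤ max C 0 + 1 := by
    intro y hy
    rw [idw_eq hf huniq le_rfl hy]
    calc ‖iteratedDeriv 5 f y‖ ≤ C := hC y hy
      _ ≤ max C 0 + 1 := by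
        have := le_max_left C 0; linarith
  have hfon : ContDiffOn ℝ (4 + 1 : ℕ) f (Icc x (x + 1)) := by
    exact_mod_cast hf.contDiffOn
  have hbd := taylor_mean_remainder_bound (n := 4) hab hfon hx hC'
  have hty : taylorWithinEval f 4 (Icc x (x + 1)) x (x + h)
      = ∑ k ∈ Finset.range 5, h ^ k / (k ! : ℝ) * iteratedDeriv k f x := by
    rw [taylor_within_apply]
    refine Finset.sum_congr rfl fun k hk => ?_
    rw [idw_eq hf huniq (by
        simp only [Finset.mem_range] at hk
        exact_mod_cast Nat.le_of_lt_succ (by omega)) (left_mem_Icc.2 hab)]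
    have : x + h - x = h := by ring
    rw [this, smul_eq_mul]
    ring
  rw [hty] at hbd
  have : x + h - x = h := by ring
  rw [this] at hbd
  calc |f (x + h) - ∑ k ∈ Finset.range 5, h ^ k / (k ! : ℝ) * iteratedDeriv k f x|
      ≤ (max C 0 + 1) * h ^ (4 + 1) / (4 ! : ℝ) := hbd
    _ ≤ (max C 0 + 1) * h ^ 5 := by
        have h5 : (0:ℝ) ≤ (max C 0 + 1) * h ^ 5 := by positivity
        norm_num [Nat.factorial]
        linarith

lemma taylor_both (f : ℝ → ℝ) (hf : ContDiff ℝ 5 f) (x : ℝ) :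
    ∃ C > (0:ℝ), ∀ h : ℝ, |h| ≤ 1 →
      |f (x + h) - P4 (f x) (deriv f x) (iteratedDeriv 2 f x) (iteratedDeriv 3 f x)
          (iteratedDeriv 4 f x) h| ≤ C * |h| ^ 5 := by
  obtain ⟨C1, hC1pos, hC1⟩ := taylor_right f hf x
  have hg : ContDiff ℝ 5 (fun y => f (-y)) := hf.comp contDiff_neg
  obtain ⟨C2, hC2pos, hC2⟩ := taylor_right (fun y => f (-y)) hg (-x)
  refine ⟨C1 + C2, by linarith, fun h hh => ?_⟩
  rcases le_or_gt 0 h with h0 | h0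
  · have hb := hC1 h h0 (by rwa [abs_of_nonneg h0] at hh)
    rw [sum_eq_P4] at hb
    rw [abs_of_nonneg h0]
    nlinarith [pow_nonneg h0 5]
  · have h0' : (0:ℝ) ≤ -h := by linarith
    have hb := hC2 (-h) h0' (by rw [abs_of_neg h0] at hh; linarith)
    rw [show -x + -h = -(x + h) by ring] at hb
    simp only [neg_neg] at hb
    have e3 : ∑ k ∈ Finset.range 5, (-h) ^ k / (k ! : ℝ)
          * iteratedDeriv k (fun y => f (-y)) (-x)
        = ∑ k ∈ Finset.range 5, h ^ k / (k ! : ℝ) * iteratedDeriv k f x := by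
      refine Finset.sum_congr rfl fun k _ => ?_
      rw [iteratedDeriv_comp_neg, neg_neg, smul_eq_mul, neg_pow]
      have hok : ((-1:ℝ)) ^ k * ((-1:ℝ)) ^ k = 1 := by
        rw [← pow_add]; exact Even.neg_one_pow ⟨k, by ring⟩
      have : (-1:ℝ) ^ k * h ^ k / (k ! : ℝ) * ((-1:ℝ) ^ k * iteratedDeriv k f x)
          = ((-1:ℝ) ^ k * (-1:ℝ) ^ k) * (h ^ k / (k ! : ℝ) * iteratedDeriv k f x) := by
        ring
      rw [this, hok, one_mul]
    rw [e3, sum_eq_P4] at hb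
    rw [abs_of_neg h0]
    nlinarith [pow_nonneg h0' 5]

lemma abs_mul_sub (a b c d : ℝ) : |a * b - c * d| ≤ |a| * |b| + |c| * |d| := by
  rw [sub_eq_add_neg]
  refine (abs_add_le _ _).trans ?_
  rw [abs_neg, abs_mul, abs_mul]

lemma P4_bound (c0 c1 c2 c3 c4 t : ℝ) (ht : |t| ≤ 1) :
    |P4 c0 c1 c2 c3 c4 t| ≤ |c0| + |c1| + |c2| + |c3| + |c4| := by
  have htn := abs_nonneg t
  have e1 : |t * c1| ≤ |c1| := by
    rw [abs_mul]; exact mul_le_of_le_one_left (abs_nonneg _) ht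
  have ht2 : |t ^ 2| ≤ 1 := by rw [abs_pow]; exact pow_le_one₀ htn ht
  have ht3 : |t ^ 3| ≤ 1 := by rw [abs_pow]; exact pow_le_one₀ htn ht
  have ht4 : |t ^ 4| ≤ 1 := by rw [abs_pow]; exact pow_le_one₀ htn ht
  have e2 : |t ^ 2 / 2 * c2| ≤ |c2| := by
    rw [abs_mul, abs_div]
    have hc := abs_nonneg c2
    have h2 := abs_nonneg (t ^ 2)
    rw [show |(2:ℝ)| = 2 by norm_num]
    nlinarith
  have e3 : |t ^ 3 / 6 * c3| ≤ |c3| := by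
    rw [abs_mul, abs_div]
    have hc := abs_nonneg c3
    have h2 := abs_nonneg (t ^ 3)
    rw [show |(6:ℝ)| = 6 by norm_num]
    nlinarith
  have e4 : |t ^ 4 / 24 * c4| ≤ |c4| := by
    rw [abs_mul, abs_div]
    have hc := abs_nonneg c4
    have h2 := abs_nonneg (t ^ 4)
    rw [show |(24:ℝ)| = 24 by norm_num]
    nlinarith
  obtain ⟨a1, b1⟩ := abs_le.1 e1
  obtain ⟨a2, b2⟩ := abs_le.1 e2
  obtain ⟨a3, b3⟩ := abs_le.1 e3
  obtain ⟨a4, b4⟩ := abs_le.1 e4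
  have b0 := le_abs_self c0
  have a0 := neg_abs_le c0
  rw [abs_le]
  unfold P4
  constructor <;> linarith

lemma prod_diff_bound {A B P Q rv rw mv mw : ℝ} (h1 : |A - P| ≤ rv) (h2 : |B - Q| ≤ rw)
    (h3 : |P| ≤ mv) (h4 : |Q| ≤ mw) :
    |A * B - P * Q| ≤ rv * mw + mv * rw + rv * rw := by
  have e : A * B - P * Q = (A - P) * Q + P * (B - Q) + (A - P) * (B - Q) := by ring
  rw [e]
  have t1 : |(A - P) * Q| ≤ rv * mw := by
    rw [abs_mul]
    exact mul_le_mul h1 h4 (abs_nonneg _) ((abs_nonneg _).trans h1)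
  have t2 : |P * (B - Q)| ≤ mv * rw := by
    rw [abs_mul]
    exact mul_le_mul h3 h2 (abs_nonneg _) ((abs_nonneg _).trans h3)
  have t3 : |(A - P) * (B - Q)| ≤ rv * rw := by
    rw [abs_mul]
    exact mul_le_mul h1 h2 (abs_nonneg _) ((abs_nonneg _).trans h1)
  calc |(A - P) * Q + P * (B - Q) + (A - P) * (B - Q)|
      ≤ |(A - P) * Q + P * (B - Q)| + |(A - P) * (B - Q)| := abs_add_le _ _
    _ ≤ |(A - P) * Q| + |P * (B - Q)| + |(A - P) * (B - Q)| := by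
        linarith [abs_add_le ((A - P) * Q) (P * (B - Q))]
    _ ≤ _ := by linarith

lemma abs_add7 (a b c d e f g : ℝ) :
    |a + (b - c + d - e + f - g)| ≤ |a| + |b| + |c| + |d| + |e| + |f| + |g| := by
  have A : a + (b - c + d - e + f - g) = a + b + -c + d + -e + f + -g := by ring
  rw [A]
  calc |a + b + -c + d + -e + f + -g|
      ≤ |a + b + -c + d + -e + f| + |-g| := abs_add_le _ _
    _ ≤ |a + b + -c + d + -e| + |f| + |-g| := by linarith [abs_add_le (a + b + -c + d + -e) f]
    _ ≤ |a + b + -c + d| + |-e| + |f| + |-g| := by linarith [abs_add_le (a + b + -c + d) (-e)]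
    _ ≤ |a + b + -c| + |d| + |-e| + |f| + |-g| := by linarith [abs_add_le (a + b + -c) d]
    _ ≤ |a + b| + |-c| + |d| + |-e| + |f| + |-g| := by linarith [abs_add_le (a + b) (-c)]
    _ ≤ |a| + |b| + |-c| + |d| + |-e| + |f| + |-g| := by linarith [abs_add_le a b]
    _ = |a| + |b| + |c| + |d| + |e| + |f| + |g| := by rw [abs_neg, abs_neg, abs_neg]

set_option maxHeartbeats 2000000 in
/-- The basic skew 3-tensor finite difference in one dimension:
`(v₁w₂ − v₂w₁) + (v₁w₋₁ − v₋₁w₁) + (v₋₂w₋₁ − v₋₁w₋₂)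
  = h³·(3(v'w'' − w'v'') + 2(vw''' − wv''')) + O(h⁵)`,
where `v_a = v(x + a h)`, `w_a = w(x + a h)`. -/
theorem basic_skew_three_tensor_difference
    (v w : ℝ → ℝ) (hv : ContDiff ℝ 5 v) (hw : ContDiff ℝ 5 w) (x : ℝ) :
    ∃ C > (0 : ℝ), ∃ δ > (0 : ℝ), ∀ h : ℝ, 0 < |h| → |h| < δ →
      |(v (x + h) * w (x + 2 * h) - v (x + 2 * h) * w (x + h)) +
        (v (x + h) * w (x - h) - v (x - h) * w (x + h)) +
        (v (x - 2 * h) * w (x - h) - v (x - h) * w (x - 2 * h)) -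
        h ^ 3 *
          (3 * (deriv v x * iteratedDeriv 2 w x -
                deriv w x * iteratedDeriv 2 v x) +
           2 * (v x * iteratedDeriv 3 w x - w x * iteratedDeriv 3 v x))|
        ≤ C * |h| ^ 5 := by
  obtain ⟨Cv, hCvpos, hCv⟩ := taylor_both v hv x
  obtain ⟨Cw, hCwpos, hCw⟩ := taylor_both w hw x
  set v0 := v x with hv0
  set v1 := deriv v x with hv1
  set v2 := iteratedDeriv 2 v x with hv2
  set v3 := iteratedDeriv 3 v x with hv3
  set v4 := iteratedDeriv 4 v x with hv4
  set w0 := w x with hw0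
  set w1 := deriv w x with hw1
  set w2 := iteratedDeriv 2 w x with hw2
  set w3 := iteratedDeriv 3 w x with hw3
  set w4 := iteratedDeriv 4 w x with hw4
  refine ⟨(5/4*(|v1| * |w4| + |v4| * |w1|) + 1/2*(|v2| * |w3| + |v3| * |w2|)
      + 1/8*(|v3| * |w4| + |v4| * |w3|))
      + 6*(32*Cv*(|w0|+|w1|+|w2|+|w3|+|w4|) + 32*Cw*(|v0|+|v1|+|v2|+|v3|+|v4|)
        + 32*Cv*Cw) + 1, by positivity, 1/2, by norm_num, fun h hne hδ => ?_⟩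
  have h1 : |h| ≤ 1 := by linarith
  have h2 : |2*h| ≤ 1 := by rw [abs_mul, abs_two]; linarith
  have hmh : |-h| ≤ 1 := by rwa [abs_neg]
  have hm2h : |-(2*h)| ≤ 1 := by rwa [abs_neg]
  have hp5 : (0:ℝ) ≤ |h|^5 := by positivity
  have e2h : |2*h|^5 = 32*|h|^5 := by rw [abs_mul, abs_two]; ring
  have hsmall : |h|^5 ≤ 1/32 := by
    have := pow_le_pow_left₀ (abs_nonneg h) (le_of_lt hδ) 5
    norm_num at this
    linarith
  -- remainder bounds
  have Rv1 : |v (x + h) - P4 v0 v1 v2 v3 v4 h| ≤ 32*Cv*|h|^5 := by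
    have := hCv h h1
    have hn : 0 ≤ Cv*|h|^5 := mul_nonneg (le_of_lt hCvpos) hp5
    linarith
  have Rv2 : |v (x + 2*h) - P4 v0 v1 v2 v3 v4 (2*h)| ≤ 32*Cv*|h|^5 := by
    have := hCv (2*h) h2; rw [e2h] at this; linarith
  have Rv3 : |v (x - h) - P4 v0 v1 v2 v3 v4 (-h)| ≤ 32*Cv*|h|^5 := by
    have := hCv (-h) hmh
    rw [show x + -h = x - h by ring, abs_neg] at this
    have hn : 0 ≤ Cv*|h|^5 := mul_nonneg (le_of_lt hCvpos) hp5
    linarith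
  have Rv4 : |v (x - 2*h) - P4 v0 v1 v2 v3 v4 (-(2*h))| ≤ 32*Cv*|h|^5 := by
    have := hCv (-(2*h)) hm2h
    rw [show x + -(2*h) = x - 2*h by ring, abs_neg, e2h] at this
    linarith
  have Rw1 : |w (x + h) - P4 w0 w1 w2 w3 w4 h| ≤ 32*Cw*|h|^5 := by
    have := hCw h h1
    have hn : 0 ≤ Cw*|h|^5 := mul_nonneg (le_of_lt hCwpos) hp5
    linarith
  have Rw2 : |w (x + 2*h) - P4 w0 w1 w2 w3 w4 (2*h)| ≤ 32*Cw*|h|^5 := by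
    have := hCw (2*h) h2; rw [e2h] at this; linarith
  have Rw3 : |w (x - h) - P4 w0 w1 w2 w3 w4 (-h)| ≤ 32*Cw*|h|^5 := by
    have := hCw (-h) hmh
    rw [show x + -h = x - h by ring, abs_neg] at this
    have hn : 0 ≤ Cw*|h|^5 := mul_nonneg (le_of_lt hCwpos) hp5
    linarith
  have Rw4 : |w (x - 2*h) - P4 w0 w1 w2 w3 w4 (-(2*h))| ≤ 32*Cw*|h|^5 := by
    have := hCw (-(2*h)) hm2h
    rw [show x + -(2*h) = x - 2*h by ring, abs_neg, e2h] at this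
    linarith
  -- polynomial bounds
  have Pv1 := P4_bound v0 v1 v2 v3 v4 h h1
  have Pv2 := P4_bound v0 v1 v2 v3 v4 (2*h) h2
  have Pv3 := P4_bound v0 v1 v2 v3 v4 (-h) hmh
  have Pv4 := P4_bound v0 v1 v2 v3 v4 (-(2*h)) hm2h
  have Pw1 := P4_bound w0 w1 w2 w3 w4 h h1
  have Pw2 := P4_bound w0 w1 w2 w3 w4 (2*h) h2
  have Pw3 := P4_bound w0 w1 w2 w3 w4 (-h) hmh
  have Pw4 := P4_bound w0 w1 w2 w3 w4 (-(2*h)) hm2h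
  have hMV : (0:ℝ) ≤ |v0|+|v1|+|v2|+|v3|+|v4| := by positivity
  have hMW : (0:ℝ) ≤ |w0|+|w1|+|w2|+|w3|+|w4| := by positivity
  -- uniform product-difference bound
  have hKK : 32*Cv*|h|^5 * (|w0|+|w1|+|w2|+|w3|+|w4|)
      + (|v0|+|v1|+|v2|+|v3|+|v4|) * (32*Cw*|h|^5)
      + 32*Cv*|h|^5 * (32*Cw*|h|^5)
      ≤ (32*Cv*(|w0|+|w1|+|w2|+|w3|+|w4|) + 32*Cw*(|v0|+|v1|+|v2|+|v3|+|v4|)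
        + 32*Cv*Cw) * |h|^5 := by
    have hrr : 32*Cv*|h|^5 * (32*Cw*|h|^5) ≤ 32*Cv*Cw*|h|^5 := by
      have e : 32*Cv*|h|^5 * (32*Cw*|h|^5) = (32*Cv*Cw*|h|^5) * (32*|h|^5) := by ring
      rw [e]
      have h32 : 32*|h|^5 ≤ 1 := by linarith
      have hn : 0 ≤ 32*Cv*Cw*|h|^5 :=
        mul_nonneg (mul_nonneg (mul_nonneg (by norm_num) (le_of_lt hCvpos)) (le_of_lt hCwpos)) hp5
      nlinarith
    linarith
  have D1 : |v (x + h) * w (x + 2*h) - P4 v0 v1 v2 v3 v4 h * P4 w0 w1 w2 w3 w4 (2*h)|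
      ≤ (32*Cv*(|w0|+|w1|+|w2|+|w3|+|w4|) + 32*Cw*(|v0|+|v1|+|v2|+|v3|+|v4|)
        + 32*Cv*Cw) * |h|^5 :=
    (prod_diff_bound Rv1 Rw2 Pv1 Pw2).trans hKK
  have D2 : |v (x + 2*h) * w (x + h) - P4 v0 v1 v2 v3 v4 (2*h) * P4 w0 w1 w2 w3 w4 h|
      ≤ (32*Cv*(|w0|+|w1|+|w2|+|w3|+|w4|) + 32*Cw*(|v0|+|v1|+|v2|+|v3|+|v4|)
        + 32*Cv*Cw) * |h|^5 :=
    (prod_diff_bound Rv2 Rw1 Pv2 Pw1).trans hKK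
  have D3 : |v (x + h) * w (x - h) - P4 v0 v1 v2 v3 v4 h * P4 w0 w1 w2 w3 w4 (-h)|
      ≤ (32*Cv*(|w0|+|w1|+|w2|+|w3|+|w4|) + 32*Cw*(|v0|+|v1|+|v2|+|v3|+|v4|)
        + 32*Cv*Cw) * |h|^5 :=
    (prod_diff_bound Rv1 Rw3 Pv1 Pw3).trans hKK
  have D4 : |v (x - h) * w (x + h) - P4 v0 v1 v2 v3 v4 (-h) * P4 w0 w1 w2 w3 w4 h|
      ≤ (32*Cv*(|w0|+|w1|+|w2|+|w3|+|w4|) + 32*Cw*(|v0|+|v1|+|v2|+|v3|+|v4|)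
        + 32*Cv*Cw) * |h|^5 :=
    (prod_diff_bound Rv3 Rw1 Pv3 Pw1).trans hKK
  have D5 : |v (x - 2*h) * w (x - h) - P4 v0 v1 v2 v3 v4 (-(2*h)) * P4 w0 w1 w2 w3 w4 (-h)|
      ≤ (32*Cv*(|w0|+|w1|+|w2|+|w3|+|w4|) + 32*Cw*(|v0|+|v1|+|v2|+|v3|+|v4|)
        + 32*Cv*Cw) * |h|^5 :=
    (prod_diff_bound Rv4 Rw3 Pv4 Pw3).trans hKK
  have D6 : |v (x - h) * w (x - 2*h) - P4 v0 v1 v2 v3 v4 (-h) * P4 w0 w1 w2 w3 w4 (-(2*h))|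
      ≤ (32*Cv*(|w0|+|w1|+|w2|+|w3|+|w4|) + 32*Cw*(|v0|+|v1|+|v2|+|v3|+|v4|)
        + 32*Cv*Cw) * |h|^5 :=
    (prod_diff_bound Rv3 Rw4 Pv3 Pw4).trans hKK
  -- bound on the Q polynomial
  have hh2 : h^2 ≤ 1 := by nlinarith [sq_abs h, abs_nonneg h]
  have hh2n : (0:ℝ) ≤ h^2 := sq_nonneg h
  have B1 := abs_mul_sub v1 w4 v4 w1
  have B2 := abs_mul_sub v2 w3 v3 w2
  have B3 := abs_mul_sub v3 w4 v4 w3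
  have hQ : |5/4*(v1*w4 - v4*w1) + 1/2*(v2*w3 - v3*w2) + h^2/8*(v3*w4 - v4*w3)|
      ≤ 5/4*(|v1| * |w4| + |v4| * |w1|) + 1/2*(|v2| * |w3| + |v3| * |w2|)
        + 1/8*(|v3| * |w4| + |v4| * |w3|) := by
    have c3 : |h^2/8*(v3*w4 - v4*w3)| ≤ 1/8*(|v3| * |w4| + |v4| * |w3|) := by
      rw [abs_mul, abs_of_nonneg (by positivity : (0:ℝ) ≤ h^2/8)]
      have han := abs_nonneg (v3*w4 - v4*w3)
      have : h^2/8 * |v3*w4 - v4*w3| ≤ 1/8 * |v3*w4 - v4*w3| :=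
        mul_le_mul_of_nonneg_right (by linarith) han
      calc h^2/8 * |v3*w4 - v4*w3| ≤ 1/8 * |v3*w4 - v4*w3| := this
        _ ≤ 1/8*(|v3| * |w4| + |v4| * |w3|) := by linarith
    obtain ⟨l1, r1⟩ := abs_le.1 B1
    obtain ⟨l2, r2⟩ := abs_le.1 B2
    obtain ⟨l3, r3⟩ := abs_le.1 c3
    rw [abs_le]
    constructor <;> linarith
  have t0 : |h^5 * (5/4*(v1*w4 - v4*w1) + 1/2*(v2*w3 - v3*w2) + h^2/8*(v3*w4 - v4*w3))|
      ≤ (5/4*(|v1| * |w4| + |v4| * |w1|) + 1/2*(|v2| * |w3| + |v3| * |w2|)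
        + 1/8*(|v3| * |w4| + |v4| * |w3|)) * |h|^5 := by
    rw [abs_mul, abs_pow]
    calc |h|^5 * |5/4*(v1*w4 - v4*w1) + 1/2*(v2*w3 - v3*w2) + h^2/8*(v3*w4 - v4*w3)|
        ≤ |h|^5 * (5/4*(|v1| * |w4| + |v4| * |w1|) + 1/2*(|v2| * |w3| + |v3| * |w2|)
          + 1/8*(|v3| * |w4| + |v4| * |w3|)) := mul_le_mul_of_nonneg_left hQ hp5
      _ = _ := by ring
  -- key algebraic identity
  have key : (v (x + h) * w (x + 2 * h) - v (x + 2 * h) * w (x + h)) +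
        (v (x + h) * w (x - h) - v (x - h) * w (x + h)) +
        (v (x - 2 * h) * w (x - h) - v (x - h) * w (x - 2 * h)) -
        h ^ 3 * (3 * (v1 * w2 - w1 * v2) + 2 * (v0 * w3 - w0 * v3))
      = h^5 * (5/4*(v1*w4 - v4*w1) + 1/2*(v2*w3 - v3*w2) + h^2/8*(v3*w4 - v4*w3))
        + ((v (x + h) * w (x + 2*h) - P4 v0 v1 v2 v3 v4 h * P4 w0 w1 w2 w3 w4 (2*h))
          - (v (x + 2*h) * w (x + h) - P4 v0 v1 v2 v3 v4 (2*h) * P4 w0 w1 w2 w3 w4 h)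
          + (v (x + h) * w (x - h) - P4 v0 v1 v2 v3 v4 h * P4 w0 w1 w2 w3 w4 (-h))
          - (v (x - h) * w (x + h) - P4 v0 v1 v2 v3 v4 (-h) * P4 w0 w1 w2 w3 w4 h)
          + (v (x - 2*h) * w (x - h) - P4 v0 v1 v2 v3 v4 (-(2*h)) * P4 w0 w1 w2 w3 w4 (-h))
          - (v (x - h) * w (x - 2*h) - P4 v0 v1 v2 v3 v4 (-h) * P4 w0 w1 w2 w3 w4 (-(2*h)))) := by
    simp only [P4]
    ring
  rw [key]
  have tri := abs_add7
    (h^5 * (5/4*(v1*w4 - v4*w1) + 1/2*(v2*w3 - v3*w2) + h^2/8*(v3*w4 - v4*w3)))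
    (v (x + h) * w (x + 2*h) - P4 v0 v1 v2 v3 v4 h * P4 w0 w1 w2 w3 w4 (2*h))
    (v (x + 2*h) * w (x + h) - P4 v0 v1 v2 v3 v4 (2*h) * P4 w0 w1 w2 w3 w4 h)
    (v (x + h) * w (x - h) - P4 v0 v1 v2 v3 v4 h * P4 w0 w1 w2 w3 w4 (-h))
    (v (x - h) * w (x + h) - P4 v0 v1 v2 v3 v4 (-h) * P4 w0 w1 w2 w3 w4 h)
    (v (x - 2*h) * w (x - h) - P4 v0 v1 v2 v3 v4 (-(2*h)) * P4 w0 w1 w2 w3 w4 (-h))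
    (v (x - h) * w (x - 2*h) - P4 v0 v1 v2 v3 v4 (-h) * P4 w0 w1 w2 w3 w4 (-(2*h)))
  have expand : ((5/4*(|v1| * |w4| + |v4| * |w1|) + 1/2*(|v2| * |w3| + |v3| * |w2|)
      + 1/8*(|v3| * |w4| + |v4| * |w3|))
      + 6*(32*Cv*(|w0|+|w1|+|w2|+|w3|+|w4|) + 32*Cw*(|v0|+|v1|+|v2|+|v3|+|v4|)
        + 32*Cv*Cw) + 1) * |h|^5
      = (5/4*(|v1| * |w4| + |v4| * |w1|) + 1/2*(|v2| * |w3| + |v3| * |w2|)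
        + 1/8*(|v3| * |w4| + |v4| * |w3|)) * |h|^5
      + 6*((32*Cv*(|w0|+|w1|+|w2|+|w3|+|w4|) + 32*Cw*(|v0|+|v1|+|v2|+|v3|+|v4|)
        + 32*Cv*Cw) * |h|^5) + |h|^5 := by ring
  rw [expand]
  linarith [tri, t0, D1, D2, D3, D4, D5, D6]
end

section
/- (Translation-invariant skew Jacobian stencil on the square lattice.) Let v, w : ℝ² → ℝ be three times continuously differentiable, let x ∈ ℝ², and for a point p ∈ ℤ² write v_p = v(x + h·p), w_p = w(x + h·p). Define F(h) = (v_{(1,0)}w_{(0,1)} − v_{(0,1)}w_{(1,0)}) + (v_{(-1,1)}w_{(-1,0)} − v_{(-1,0)}w_{(-1,1)}) + (v_{(0,-1)}w_{(1,-1)} − v_{(1,-1)}w_{(0,-1)}). Then, as h → 0, F(h) = 3·h²·( v_x(x)w_y(x) − v_y(x)w_x(x) ) + O(h³). That is, the simplest translation-invariant completely skew 3-tensor on the square lattice yields a first-order-accurate discretization of the Jacobian. -/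
/-- Partial derivative in the `i`-th coordinate direction of a function on `ℝ²`. -/
noncomputable def pd {n : ℕ} (i : Fin n) (f : (Fin n → ℝ) → ℝ) (x : Fin n → ℝ) : ℝ :=
  fderiv ℝ f x (Pi.single i 1)

open Metric Set

set_option maxHeartbeats 1000000

/-- Second-order Taylor bound with cubic error along a direction, for a `C³` function. -/
lemma taylor_dir (f : (Fin 2 → ℝ) → ℝ) (hf : ContDiff ℝ 3 f) (x p : Fin 2 → ℝ) :
    ∃ C : ℝ, 0 ≤ C ∧ ∀ h : ℝ, |h| ≤ 1 →
      |f (x + h • p) - (f x + h * fderiv ℝ f x p +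
        h ^ 2 / 2 * fderiv ℝ (fun y => fderiv ℝ f y p) x p)| ≤ C * |h| ^ 3 := by
  have hc1 : ContDiff ℝ 2 (fun y => fderiv ℝ f y p) :=
    (hf.fderiv_right (m := 2) (by norm_num)).clm_apply contDiff_const
  have hc2 : ContDiff ℝ 1 (fun y => fderiv ℝ (fun z => fderiv ℝ f z p) y p) :=
    (hc1.fderiv_right (m := 1) (by norm_num)).clm_apply contDiff_const
  have hc3 : Continuous
      (fun y => fderiv ℝ (fun z => fderiv ℝ (fun u => fderiv ℝ f u p) z p) y p) :=
    ((hc2.fderiv_right (m := 0) (by norm_num)).clm_apply contDiff_const).continuous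
  have hLc : Continuous fun s : ℝ => x + s • p :=
    continuous_const.add (continuous_id.smul continuous_const)
  have hL : ∀ t : ℝ, HasDerivAt (fun s : ℝ => x + s • p) p t := by
    intro t
    simpa using ((hasDerivAt_id t).smul_const p).const_add x
  have hg : ∀ t : ℝ, HasDerivAt (fun s => f (x + s • p))
      (fderiv ℝ f (x + t • p) p) t := by
    intro t
    simpa [Function.comp_def] using
      ((hf.differentiable (by norm_num) _).hasFDerivAt).comp_hasDerivAt t (hL t)
  have hg1 : ∀ t : ℝ, HasDerivAt (fun s => fderiv ℝ f (x + s • p) p)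
      (fderiv ℝ (fun z => fderiv ℝ f z p) (x + t • p) p) t := by
    intro t
    simpa [Function.comp_def] using
      ((hc1.differentiable (by norm_num) _).hasFDerivAt).comp_hasDerivAt t (hL t)
  have hg2 : ∀ t : ℝ, HasDerivAt (fun s => fderiv ℝ (fun z => fderiv ℝ f z p) (x + s • p) p)
      (fderiv ℝ (fun z => fderiv ℝ (fun u => fderiv ℝ f u p) z p) (x + t • p) p) t := by
    intro t
    simpa [Function.comp_def] using
      ((hc2.differentiable (by norm_num) _).hasFDerivAt).comp_hasDerivAt t (hL t)
  obtain ⟨M, hM⟩ := (isCompact_closedBall (0:ℝ) 1).exists_bound_of_continuousOn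
    ((hc3.comp hLc).continuousOn)
  have hM0 : 0 ≤ M := le_trans (norm_nonneg _) (hM 0 (by simp))
  have hx0 : x + (0:ℝ) • p = x := by simp
  refine ⟨M, hM0, ?_⟩
  intro h hh
  -- step 1: Lipschitz bound for the second derivative on the unit ball
  have step1 : ∀ t ∈ closedBall (0:ℝ) 1,
      ‖fderiv ℝ (fun z => fderiv ℝ f z p) (x + t • p) p -
        fderiv ℝ (fun z => fderiv ℝ f z p) (x + (0:ℝ) • p) p‖ ≤ M * ‖t - 0‖ := by
    intro t ht
    exact (convex_closedBall (0:ℝ) 1).norm_image_sub_le_of_norm_hasDerivWithin_le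
      (fun s hs => (hg2 s).hasDerivWithinAt) (fun s hs => hM s hs) (by simp) ht
  have hsub : closedBall (0:ℝ) |h| ⊆ closedBall 0 1 := closedBall_subset_closedBall hh
  have h0mem : (0:ℝ) ∈ closedBall (0:ℝ) |h| := by
    simp [mem_closedBall, abs_nonneg]
  have hhmem : h ∈ closedBall (0:ℝ) |h| := by
    simp [mem_closedBall, Real.dist_eq]
  -- step 2: bound on the first-order remainder of the first derivative
  have hr1 : ∀ s : ℝ, HasDerivAt
      (fun s => fderiv ℝ f (x + s • p) p - fderiv ℝ f (x + (0:ℝ) • p) p -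
        s * fderiv ℝ (fun z => fderiv ℝ f z p) (x + (0:ℝ) • p) p)
      (fderiv ℝ (fun z => fderiv ℝ f z p) (x + s • p) p -
        fderiv ℝ (fun z => fderiv ℝ f z p) (x + (0:ℝ) • p) p) s := by
    intro s
    exact ((hg1 s).sub_const _).sub (hasDerivAt_mul_const _)
  have step2 : ∀ s ∈ closedBall (0:ℝ) |h|,
      ‖fderiv ℝ f (x + s • p) p - fderiv ℝ f (x + (0:ℝ) • p) p -
        s * fderiv ℝ (fun z => fderiv ℝ f z p) (x + (0:ℝ) • p) p‖ ≤ M * |h| * |h| := by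
    intro s hs
    have key := (convex_closedBall (0:ℝ) |h|).norm_image_sub_le_of_norm_hasDerivWithin_le
      (fun t ht => (hr1 t).hasDerivWithinAt)
      (C := M * |h|)
      (fun t ht => by
        have h1 := step1 t (hsub ht)
        have h2 : ‖t - 0‖ ≤ |h| := by
          simpa [Real.norm_eq_abs, Real.dist_eq] using mem_closedBall.mp ht
        calc ‖_‖ ≤ M * ‖t - 0‖ := h1
          _ ≤ M * |h| := mul_le_mul_of_nonneg_left h2 hM0)
      h0mem hs
    have hs' : ‖s - 0‖ ≤ |h| := by
      simpa [Real.norm_eq_abs, Real.dist_eq] using mem_closedBall.mp hs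
    have e0 : (fderiv ℝ f (x + (0:ℝ) • p) p - fderiv ℝ f (x + (0:ℝ) • p) p -
        (0:ℝ) * fderiv ℝ (fun z => fderiv ℝ f z p) (x + (0:ℝ) • p) p) = 0 := by ring
    rw [e0, sub_zero] at key
    calc ‖_‖ ≤ M * |h| * ‖s - 0‖ := key
      _ ≤ M * |h| * |h| := mul_le_mul_of_nonneg_left hs' (mul_nonneg hM0 (abs_nonneg h))
  -- step 3: bound on the second-order remainder of `f` itself
  have hr : ∀ s : ℝ, HasDerivAt
      (fun s => f (x + s • p) - f (x + (0:ℝ) • p) - s * fderiv ℝ f (x + (0:ℝ) • p) p -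
        s ^ 2 * (fderiv ℝ (fun z => fderiv ℝ f z p) (x + (0:ℝ) • p) p / 2))
      (fderiv ℝ f (x + s • p) p - fderiv ℝ f (x + (0:ℝ) • p) p -
        s * fderiv ℝ (fun z => fderiv ℝ f z p) (x + (0:ℝ) • p) p) s := by
    intro s
    have h1 := ((hg s).sub_const (f (x + (0:ℝ) • p))).sub
      (hasDerivAt_mul_const (fderiv ℝ f (x + (0:ℝ) • p) p))
    have h2 := (hasDerivAt_pow 2 s).mul_const
      (fderiv ℝ (fun z => fderiv ℝ f z p) (x + (0:ℝ) • p) p / 2)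
    refine (h1.sub h2).congr_deriv ?_
    push_cast
    ring
  have final := (convex_closedBall (0:ℝ) |h|).norm_image_sub_le_of_norm_hasDerivWithin_le
    (fun t ht => (hr t).hasDerivWithinAt)
    (C := M * |h| * |h|)
    (fun t ht => step2 t ht)
    h0mem hhmem
  have e0 : (f (x + (0:ℝ) • p) - f (x + (0:ℝ) • p) - (0:ℝ) * fderiv ℝ f (x + (0:ℝ) • p) p -
      (0:ℝ) ^ 2 * (fderiv ℝ (fun z => fderiv ℝ f z p) (x + (0:ℝ) • p) p / 2)) = 0 := by ring
  rw [e0, sub_zero] at final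
  rw [hx0] at final
  have etarget : f (x + h • p) - (f x + h * fderiv ℝ f x p +
      h ^ 2 / 2 * fderiv ℝ (fun y => fderiv ℝ f y p) x p) =
      f (x + h • p) - f x - h * fderiv ℝ f x p -
      h ^ 2 * (fderiv ℝ (fun z => fderiv ℝ f z p) x p / 2) := by ring
  rw [etarget]
  have hnorm : ‖h - 0‖ = |h| := by simp [Real.norm_eq_abs]
  rw [hnorm] at final
  calc |f (x + h • p) - f x - h * fderiv ℝ f x p -
      h ^ 2 * (fderiv ℝ (fun z => fderiv ℝ f z p) x p / 2)| ≤ M * |h| * |h| * |h| := final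
    _ = M * |h| ^ 3 := by ring

lemma fderiv2_neg (f : (Fin 2 → ℝ) → ℝ) (x q : Fin 2 → ℝ) :
    fderiv ℝ (fun y => fderiv ℝ f y (-q)) x (-q) =
      fderiv ℝ (fun y => fderiv ℝ f y q) x q := by
  have h1 : (fun y => fderiv ℝ f y (-q)) = fun y => -(fderiv ℝ f y q) := by
    funext y; exact map_neg _ _
  rw [h1, fderiv_fun_neg]
  simp

lemma fderiv2_sub (f : (Fin 2 → ℝ) → ℝ) (hf : ContDiff ℝ 3 f) (x q r : Fin 2 → ℝ) :
    fderiv ℝ (fun y => fderiv ℝ f y (q - r)) x (q - r) =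
      fderiv ℝ (fun y => fderiv ℝ f y q) x q - fderiv ℝ (fun y => fderiv ℝ f y q) x r -
      fderiv ℝ (fun y => fderiv ℝ f y r) x q + fderiv ℝ (fun y => fderiv ℝ f y r) x r := by
  have hq : DifferentiableAt ℝ (fun y => fderiv ℝ f y q) x :=
    (((hf.fderiv_right (m := 2) (by norm_num)).clm_apply contDiff_const).differentiable
      (by norm_num) : Differentiable ℝ (fun y => fderiv ℝ f y q)) x
  have hr : DifferentiableAt ℝ (fun y => fderiv ℝ f y r) x :=
    (((hf.fderiv_right (m := 2) (by norm_num)).clm_apply contDiff_const).differentiable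
      (by norm_num) : Differentiable ℝ (fun y => fderiv ℝ f y r)) x
  have h1 : (fun y => fderiv ℝ f y (q - r)) =
      fun y => (fderiv ℝ f y q) - (fderiv ℝ f y r) := by
    funext y; exact map_sub _ _ _
  rw [h1, fderiv_fun_sub hq hr]
  simp only [ContinuousLinearMap.coe_sub', Pi.sub_apply, map_sub]
  ring

lemma poly_bound (q A B h : ℝ) (hh : |h| ≤ 1) :
    |q + h * A + h ^ 2 / 2 * B| ≤ |q| + |A| + |B| / 2 := by
  have h2 : h ^ 2 ≤ 1 := by nlinarith [abs_nonneg h, sq_abs h]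
  have hA : |h * A| ≤ |A| := by
    rw [abs_mul]; nlinarith [abs_nonneg A, abs_nonneg h]
  have hB : |h ^ 2 / 2 * B| ≤ |B| / 2 := by
    rw [abs_mul, abs_div, abs_pow, abs_two]
    have : |h| ^ 2 ≤ 1 := by nlinarith [abs_nonneg h]
    nlinarith [abs_nonneg B]
  calc |q + h * A + h ^ 2 / 2 * B| ≤ |q + h * A| + |h ^ 2 / 2 * B| := abs_add_le _ _
    _ ≤ |q| + |h * A| + |h ^ 2 / 2 * B| := by linarith [abs_add_le q (h * A)]
    _ ≤ |q| + |A| + |B| / 2 := by linarith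

lemma pair_bound {V T W S c d P Q t : ℝ} (hc : 0 ≤ c) (hd : 0 ≤ d) (hP : 0 ≤ P) (hQ : 0 ≤ Q)
    (h1 : |V - T| ≤ c * t) (h2 : |W - S| ≤ d * t) (hT : |T| ≤ P) (hS : |S| ≤ Q)
    (ht : 0 ≤ t) (ht1 : t ≤ 1) :
    |V * W - T * S| ≤ (c * Q + c * d + P * d) * t := by
  have hW : |W| ≤ Q + d * t := by
    have := abs_sub_abs_le_abs_sub W S
    linarith
  have e : V * W - T * S = (V - T) * W + T * (W - S) := by ring
  have step : |V * W - T * S| ≤ |V - T| * |W| + |T| * |W - S| := by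
    rw [e]
    calc |(V - T) * W + T * (W - S)| ≤ |(V - T) * W| + |T * (W - S)| := abs_add_le _ _
      _ = |V - T| * |W| + |T| * |W - S| := by rw [abs_mul, abs_mul]
  have hVT : 0 ≤ |V - T| := abs_nonneg _
  have hWS : 0 ≤ |W - S| := abs_nonneg _
  have hWn : 0 ≤ |W| := abs_nonneg _
  have hTn : 0 ≤ |T| := abs_nonneg _
  nlinarith [mul_le_mul h1 hW hWn (by nlinarith : (0:ℝ) ≤ c * t),
    mul_le_mul hT h2 hWS hP, mul_nonneg hc hd, mul_nonneg (mul_nonneg hc hd) ht,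
    mul_nonneg hP hd]

lemma abs_sum7 (d1 d2 d3 d4 d5 d6 r : ℝ) :
    |d1 - d2 + d3 - d4 + d5 - d6 + r| ≤ |d1| + |d2| + |d3| + |d4| + |d5| + |d6| + |r| := by
  calc |d1 - d2 + d3 - d4 + d5 - d6 + r| ≤ |d1 - d2 + d3 - d4 + d5 - d6| + |r| := abs_add_le _ _
    _ ≤ |d1 - d2 + d3 - d4 + d5| + |d6| + |r| := by
        linarith [abs_sub (d1 - d2 + d3 - d4 + d5) d6]
    _ ≤ |d1 - d2 + d3 - d4| + |d5| + |d6| + |r| := by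
        linarith [abs_add_le (d1 - d2 + d3 - d4) d5]
    _ ≤ |d1 - d2 + d3| + |d4| + |d5| + |d6| + |r| := by
        linarith [abs_sub (d1 - d2 + d3) d4]
    _ ≤ |d1 - d2| + |d3| + |d4| + |d5| + |d6| + |r| := by
        linarith [abs_add_le (d1 - d2) d3]
    _ ≤ |d1| + |d2| + |d3| + |d4| + |d5| + |d6| + |r| := by
        linarith [abs_sub d1 d2]


/-- Pure-arithmetic core of the stencil estimate. -/
lemma stencil_core
    (vx wx a0 a1 c0 c1 m00 m01 m10 m11 n00 n01 n10 n11 : ℝ)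
    (V1 V2 V3 V4 V5 V6 W1 W2 W3 W4 W5 W6 : ℝ → ℝ)
    (Cv1 Cv2 Cv3 Cv4 Cv5 Cv6 Cw1 Cw2 Cw3 Cw4 Cw5 Cw6 : ℝ)
    (hCv1 : 0 ≤ Cv1) (hCv2 : 0 ≤ Cv2) (hCv3 : 0 ≤ Cv3) (hCv4 : 0 ≤ Cv4)
    (hCv5 : 0 ≤ Cv5) (hCv6 : 0 ≤ Cv6)
    (hCw1 : 0 ≤ Cw1) (hCw2 : 0 ≤ Cw2) (hCw3 : 0 ≤ Cw3) (hCw4 : 0 ≤ Cw4)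
    (hCw5 : 0 ≤ Cw5) (hCw6 : 0 ≤ Cw6)
    (Hv1 : ∀ h : ℝ, |h| ≤ 1 → |V1 h - (vx + h * a0 + h ^ 2 / 2 * m00)| ≤ Cv1 * |h| ^ 3)
    (Hv2 : ∀ h : ℝ, |h| ≤ 1 → |V2 h - (vx + h * a1 + h ^ 2 / 2 * m11)| ≤ Cv2 * |h| ^ 3)
    (Hv3 : ∀ h : ℝ, |h| ≤ 1 →
      |V3 h - (vx + h * (a1 - a0) + h ^ 2 / 2 * (m11 - m10 - (m01 - m00)))| ≤ Cv3 * |h| ^ 3)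
    (Hv4 : ∀ h : ℝ, |h| ≤ 1 → |V4 h - (vx + h * (-a0) + h ^ 2 / 2 * m00)| ≤ Cv4 * |h| ^ 3)
    (Hv5 : ∀ h : ℝ, |h| ≤ 1 → |V5 h - (vx + h * (-a1) + h ^ 2 / 2 * m11)| ≤ Cv5 * |h| ^ 3)
    (Hv6 : ∀ h : ℝ, |h| ≤ 1 →
      |V6 h - (vx + h * (a0 - a1) + h ^ 2 / 2 * (m00 - m01 - (m10 - m11)))| ≤ Cv6 * |h| ^ 3)
    (Hw1 : ∀ h : ℝ, |h| ≤ 1 → |W1 h - (wx + h * c0 + h ^ 2 / 2 * n00)| ≤ Cw1 * |h| ^ 3)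
    (Hw2 : ∀ h : ℝ, |h| ≤ 1 → |W2 h - (wx + h * c1 + h ^ 2 / 2 * n11)| ≤ Cw2 * |h| ^ 3)
    (Hw3 : ∀ h : ℝ, |h| ≤ 1 →
      |W3 h - (wx + h * (c1 - c0) + h ^ 2 / 2 * (n11 - n10 - (n01 - n00)))| ≤ Cw3 * |h| ^ 3)
    (Hw4 : ∀ h : ℝ, |h| ≤ 1 → |W4 h - (wx + h * (-c0) + h ^ 2 / 2 * n00)| ≤ Cw4 * |h| ^ 3)
    (Hw5 : ∀ h : ℝ, |h| ≤ 1 → |W5 h - (wx + h * (-c1) + h ^ 2 / 2 * n11)| ≤ Cw5 * |h| ^ 3)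
    (Hw6 : ∀ h : ℝ, |h| ≤ 1 →
      |W6 h - (wx + h * (c0 - c1) + h ^ 2 / 2 * (n00 - n01 - (n10 - n11)))| ≤ Cw6 * |h| ^ 3) :
    ∃ C > (0 : ℝ), ∀ h : ℝ, |h| ≤ 1 →
      |(V1 h * W2 h - V2 h * W1 h) + (V3 h * W4 h - V4 h * W3 h) +
        (V5 h * W6 h - V6 h * W5 h) - 3 * h ^ 2 * (a0 * c1 - a1 * c0)| ≤ C * |h| ^ 3 := by
  set X := (a0 * (n11 - n01 - n10) + a1 * (n01 + n10 - n00) +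
      c0 * (m01 + m10 - m11) + c1 * (m00 - m01 - m10)) / 2 with hX
  set Y := (m00 * (n01 + n10 - n11) + m01 * (n11 - n00) + m10 * (n11 - n00) +
      m11 * (n00 - n01 - n10)) / 4 with hY
  set Pv1 := |vx| + |a0| + |m00| / 2 with hPv1
  set Pv2 := |vx| + |a1| + |m11| / 2 with hPv2
  set Pv3 := |vx| + |a1 - a0| + |m11 - m10 - (m01 - m00)| / 2 with hPv3
  set Pv4 := |vx| + |(-a0)| + |m00| / 2 with hPv4
  set Pv5 := |vx| + |(-a1)| + |m11| / 2 with hPv5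
  set Pv6 := |vx| + |a0 - a1| + |m00 - m01 - (m10 - m11)| / 2 with hPv6
  set Qw1 := |wx| + |c0| + |n00| / 2 with hQw1
  set Qw2 := |wx| + |c1| + |n11| / 2 with hQw2
  set Qw3 := |wx| + |c1 - c0| + |n11 - n10 - (n01 - n00)| / 2 with hQw3
  set Qw4 := |wx| + |(-c0)| + |n00| / 2 with hQw4
  set Qw5 := |wx| + |(-c1)| + |n11| / 2 with hQw5
  set Qw6 := |wx| + |c0 - c1| + |n00 - n01 - (n10 - n11)| / 2 with hQw6
  set K1 := Cv1 * Qw2 + Cv1 * Cw2 + Pv1 * Cw2 with hK1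
  set K2 := Cv2 * Qw1 + Cv2 * Cw1 + Pv2 * Cw1 with hK2
  set K3 := Cv3 * Qw4 + Cv3 * Cw4 + Pv3 * Cw4 with hK3
  set K4 := Cv4 * Qw3 + Cv4 * Cw3 + Pv4 * Cw3 with hK4
  set K5 := Cv5 * Qw6 + Cv5 * Cw6 + Pv5 * Cw6 with hK5
  set K6 := Cv6 * Qw5 + Cv6 * Cw5 + Pv6 * Cw5 with hK6
  set Ktot := K1 + K2 + K3 + K4 + K5 + K6 + |X| + |Y| with hKtot
  refine ⟨|Ktot| + 1, by positivity, ?_⟩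
  intro h hh
  have ht : (0:ℝ) ≤ |h| ^ 3 := by positivity
  have ht1 : |h| ^ 3 ≤ 1 := pow_le_one₀ (abs_nonneg h) hh
  have P1 := pair_bound hCv1 hCw2 (by positivity) (by positivity) (Hv1 h hh) (Hw2 h hh)
    (poly_bound _ _ _ _ hh) (poly_bound _ _ _ _ hh) ht ht1
  have P2 := pair_bound hCv2 hCw1 (by positivity) (by positivity) (Hv2 h hh) (Hw1 h hh)
    (poly_bound _ _ _ _ hh) (poly_bound _ _ _ _ hh) ht ht1
  have P3 := pair_bound hCv3 hCw4 (by positivity) (by positivity) (Hv3 h hh) (Hw4 h hh)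
    (poly_bound _ _ _ _ hh) (poly_bound _ _ _ _ hh) ht ht1
  have P4 := pair_bound hCv4 hCw3 (by positivity) (by positivity) (Hv4 h hh) (Hw3 h hh)
    (poly_bound _ _ _ _ hh) (poly_bound _ _ _ _ hh) ht ht1
  have P5 := pair_bound hCv5 hCw6 (by positivity) (by positivity) (Hv5 h hh) (Hw6 h hh)
    (poly_bound _ _ _ _ hh) (poly_bound _ _ _ _ hh) ht ht1
  have P6 := pair_bound hCv6 hCw5 (by positivity) (by positivity) (Hv6 h hh) (Hw5 h hh)
    (poly_bound _ _ _ _ hh) (poly_bound _ _ _ _ hh) ht ht1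
  have key : (V1 h * W2 h - V2 h * W1 h) + (V3 h * W4 h - V4 h * W3 h) +
      (V5 h * W6 h - V6 h * W5 h) - 3 * h ^ 2 * (a0 * c1 - a1 * c0) =
      (V1 h * W2 h - (vx + h * a0 + h ^ 2 / 2 * m00) * (wx + h * c1 + h ^ 2 / 2 * n11)) -
      (V2 h * W1 h - (vx + h * a1 + h ^ 2 / 2 * m11) * (wx + h * c0 + h ^ 2 / 2 * n00)) +
      (V3 h * W4 h - (vx + h * (a1 - a0) + h ^ 2 / 2 * (m11 - m10 - (m01 - m00))) *
        (wx + h * (-c0) + h ^ 2 / 2 * n00)) -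
      (V4 h * W3 h - (vx + h * (-a0) + h ^ 2 / 2 * m00) *
        (wx + h * (c1 - c0) + h ^ 2 / 2 * (n11 - n10 - (n01 - n00)))) +
      (V5 h * W6 h - (vx + h * (-a1) + h ^ 2 / 2 * m11) *
        (wx + h * (c0 - c1) + h ^ 2 / 2 * (n00 - n01 - (n10 - n11)))) -
      (V6 h * W5 h - (vx + h * (a0 - a1) + h ^ 2 / 2 * (m00 - m01 - (m10 - m11))) *
        (wx + h * (-c1) + h ^ 2 / 2 * n11)) +
      (h ^ 3 * X + h ^ 4 * Y) := by
    rw [hX, hY]; ring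
  rw [key]
  have hXY : |h ^ 3 * X + h ^ 4 * Y| ≤ (|X| + |Y|) * |h| ^ 3 := by
    have e4 : |h| ^ 4 ≤ |h| ^ 3 := by
      have h1 := mul_le_mul_of_nonneg_left hh (pow_nonneg (abs_nonneg h) 3)
      calc |h| ^ 4 = |h| ^ 3 * |h| := by ring
        _ ≤ |h| ^ 3 * 1 := h1
        _ = |h| ^ 3 := mul_one _
    calc |h ^ 3 * X + h ^ 4 * Y| ≤ |h ^ 3 * X| + |h ^ 4 * Y| := abs_add_le _ _
      _ = |h| ^ 3 * |X| + |h| ^ 4 * |Y| := by rw [abs_mul, abs_mul, abs_pow, abs_pow]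
      _ ≤ |h| ^ 3 * |X| + |h| ^ 3 * |Y| :=
          add_le_add le_rfl (mul_le_mul_of_nonneg_right e4 (abs_nonneg Y))
      _ = (|X| + |Y|) * |h| ^ 3 := by ring
  refine le_trans (abs_sum7 _ _ _ _ _ _ _) ?_
  refine le_trans (add_le_add (add_le_add (add_le_add (add_le_add (add_le_add
    (add_le_add P1 P2) P3) P4) P5) P6) hXY) ?_
  have : K1 * |h| ^ 3 + K2 * |h| ^ 3 + K3 * |h| ^ 3 + K4 * |h| ^ 3 + K5 * |h| ^ 3 +
      K6 * |h| ^ 3 + (|X| + |Y|) * |h| ^ 3 = Ktot * |h| ^ 3 := by rw [hKtot]; ring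
  rw [this]
  exact mul_le_mul_of_nonneg_right (by linarith [le_abs_self Ktot]) ht

/-- The translation-invariant skew Jacobian stencil on the square lattice is a
first-order-accurate discretization of the Jacobian:
`F(h) = 3h²·(v_x w_y − v_y w_x) + O(h³)`. -/
theorem translation_invariant_skew_jacobian_stencil
    (v w : (Fin 2 → ℝ) → ℝ) (hv : ContDiff ℝ 3 v) (hw : ContDiff ℝ 3 w)
    (x : Fin 2 → ℝ) :
    ∃ C > (0 : ℝ), ∃ δ > (0 : ℝ), ∀ h : ℝ, 0 < |h| → |h| < δ →
      |((v (x + h • ![1, 0]) * w (x + h • ![0, 1]) -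
          v (x + h • ![0, 1]) * w (x + h • ![1, 0])) +
        (v (x + h • ![-1, 1]) * w (x + h • ![-1, 0]) -
          v (x + h • ![-1, 0]) * w (x + h • ![-1, 1])) +
        (v (x + h • ![0, -1]) * w (x + h • ![1, -1]) -
          v (x + h • ![1, -1]) * w (x + h • ![0, -1]))) -
        3 * h ^ 2 * (pd 0 v x * pd 1 w x - pd 1 v x * pd 0 w x)|
        ≤ C * |h| ^ 3 := by
  have E10 : ![(1:ℝ), 0] = (Pi.single 0 1 : Fin 2 → ℝ) := by
    funext i; fin_cases i <;> simp [Pi.single_apply]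
  have E01 : ![(0:ℝ), 1] = (Pi.single 1 1 : Fin 2 → ℝ) := by
    funext i; fin_cases i <;> simp [Pi.single_apply]
  have Em11 : ![(-1:ℝ), 1] = (Pi.single 1 1 - Pi.single 0 1 : Fin 2 → ℝ) := by
    funext i; fin_cases i <;> simp [Pi.single_apply]
  have Em10 : ![(-1:ℝ), 0] = (-(Pi.single 0 1) : Fin 2 → ℝ) := by
    funext i; fin_cases i <;> simp [Pi.single_apply]
  have E0m1 : ![(0:ℝ), -1] = (-(Pi.single 1 1) : Fin 2 → ℝ) := by
    funext i; fin_cases i <;> simp [Pi.single_apply]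
  have E1m1 : ![(1:ℝ), -1] = (Pi.single 0 1 - Pi.single 1 1 : Fin 2 → ℝ) := by
    funext i; fin_cases i <;> simp [Pi.single_apply]
  simp only [pd, E10, E01, Em11, Em10, E0m1, E1m1]
  -- Taylor expansions in the six directions for v and w
  obtain ⟨Cv1, hCv1, Hv1⟩ := taylor_dir v hv x (Pi.single 0 1)
  obtain ⟨Cv2, hCv2, Hv2⟩ := taylor_dir v hv x (Pi.single 1 1)
  obtain ⟨Cv3, hCv3, Hv3⟩ := taylor_dir v hv x (Pi.single 1 1 - Pi.single 0 1)
  obtain ⟨Cv4, hCv4, Hv4⟩ := taylor_dir v hv x (-(Pi.single 0 1))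
  obtain ⟨Cv5, hCv5, Hv5⟩ := taylor_dir v hv x (-(Pi.single 1 1))
  obtain ⟨Cv6, hCv6, Hv6⟩ := taylor_dir v hv x (Pi.single 0 1 - Pi.single 1 1)
  obtain ⟨Cw1, hCw1, Hw1⟩ := taylor_dir w hw x (Pi.single 0 1)
  obtain ⟨Cw2, hCw2, Hw2⟩ := taylor_dir w hw x (Pi.single 1 1)
  obtain ⟨Cw3, hCw3, Hw3⟩ := taylor_dir w hw x (Pi.single 1 1 - Pi.single 0 1)
  obtain ⟨Cw4, hCw4, Hw4⟩ := taylor_dir w hw x (-(Pi.single 0 1))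
  obtain ⟨Cw5, hCw5, Hw5⟩ := taylor_dir w hw x (-(Pi.single 1 1))
  obtain ⟨Cw6, hCw6, Hw6⟩ := taylor_dir w hw x (Pi.single 0 1 - Pi.single 1 1)
  -- normalize the Taylor coefficients
  rw [show fderiv ℝ v x (Pi.single 1 1 - Pi.single 0 1) =
      fderiv ℝ v x (Pi.single 1 1) - fderiv ℝ v x (Pi.single 0 1) from map_sub _ _ _,
    fderiv2_sub v hv x (Pi.single 1 1) (Pi.single 0 1)] at Hv3
  rw [show fderiv ℝ v x (-(Pi.single 0 1)) = -fderiv ℝ v x (Pi.single 0 1) from map_neg _ _,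
    fderiv2_neg v x (Pi.single 0 1)] at Hv4
  rw [show fderiv ℝ v x (-(Pi.single 1 1)) = -fderiv ℝ v x (Pi.single 1 1) from map_neg _ _,
    fderiv2_neg v x (Pi.single 1 1)] at Hv5
  rw [show fderiv ℝ v x (Pi.single 0 1 - Pi.single 1 1) =
      fderiv ℝ v x (Pi.single 0 1) - fderiv ℝ v x (Pi.single 1 1) from map_sub _ _ _,
    fderiv2_sub v hv x (Pi.single 0 1) (Pi.single 1 1)] at Hv6
  rw [show fderiv ℝ w x (Pi.single 1 1 - Pi.single 0 1) =
      fderiv ℝ w x (Pi.single 1 1) - fderiv ℝ w x (Pi.single 0 1) from map_sub _ _ _,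
    fderiv2_sub w hw x (Pi.single 1 1) (Pi.single 0 1)] at Hw3
  rw [show fderiv ℝ w x (-(Pi.single 0 1)) = -fderiv ℝ w x (Pi.single 0 1) from map_neg _ _,
    fderiv2_neg w x (Pi.single 0 1)] at Hw4
  rw [show fderiv ℝ w x (-(Pi.single 1 1)) = -fderiv ℝ w x (Pi.single 1 1) from map_neg _ _,
    fderiv2_neg w x (Pi.single 1 1)] at Hw5
  rw [show fderiv ℝ w x (Pi.single 0 1 - Pi.single 1 1) =
      fderiv ℝ w x (Pi.single 0 1) - fderiv ℝ w x (Pi.single 1 1) from map_sub _ _ _,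
    fderiv2_sub w hw x (Pi.single 0 1) (Pi.single 1 1)] at Hw6
  obtain ⟨C, hC, hbound⟩ := stencil_core (v x) (w x)
    (fderiv ℝ v x (Pi.single 0 1)) (fderiv ℝ v x (Pi.single 1 1))
    (fderiv ℝ w x (Pi.single 0 1)) (fderiv ℝ w x (Pi.single 1 1))
    (fderiv ℝ (fun y => fderiv ℝ v y (Pi.single 0 1)) x (Pi.single 0 1))
    (fderiv ℝ (fun y => fderiv ℝ v y (Pi.single 0 1)) x (Pi.single 1 1))
    (fderiv ℝ (fun y => fderiv ℝ v y (Pi.single 1 1)) x (Pi.single 0 1))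
    (fderiv ℝ (fun y => fderiv ℝ v y (Pi.single 1 1)) x (Pi.single 1 1))
    (fderiv ℝ (fun y => fderiv ℝ w y (Pi.single 0 1)) x (Pi.single 0 1))
    (fderiv ℝ (fun y => fderiv ℝ w y (Pi.single 0 1)) x (Pi.single 1 1))
    (fderiv ℝ (fun y => fderiv ℝ w y (Pi.single 1 1)) x (Pi.single 0 1))
    (fderiv ℝ (fun y => fderiv ℝ w y (Pi.single 1 1)) x (Pi.single 1 1))
    (fun h => v (x + h • (Pi.single 0 1 : Fin 2 → ℝ)))
    (fun h => v (x + h • (Pi.single 1 1 : Fin 2 → ℝ)))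
    (fun h => v (x + h • (Pi.single 1 1 - Pi.single 0 1 : Fin 2 → ℝ)))
    (fun h => v (x + h • (-(Pi.single 0 1) : Fin 2 → ℝ)))
    (fun h => v (x + h • (-(Pi.single 1 1) : Fin 2 → ℝ)))
    (fun h => v (x + h • (Pi.single 0 1 - Pi.single 1 1 : Fin 2 → ℝ)))
    (fun h => w (x + h • (Pi.single 0 1 : Fin 2 → ℝ)))
    (fun h => w (x + h • (Pi.single 1 1 : Fin 2 → ℝ)))
    (fun h => w (x + h • (Pi.single 1 1 - Pi.single 0 1 : Fin 2 → ℝ)))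
    (fun h => w (x + h • (-(Pi.single 0 1) : Fin 2 → ℝ)))
    (fun h => w (x + h • (-(Pi.single 1 1) : Fin 2 → ℝ)))
    (fun h => w (x + h • (Pi.single 0 1 - Pi.single 1 1 : Fin 2 → ℝ)))
    Cv1 Cv2 Cv3 Cv4 Cv5 Cv6 Cw1 Cw2 Cw3 Cw4 Cw5 Cw6
    hCv1 hCv2 hCv3 hCv4 hCv5 hCv6 hCw1 hCw2 hCw3 hCw4 hCw5 hCw6
    Hv1 Hv2 (by convert Hv3 using 5; ring) Hv4 Hv5 (by convert Hv6 using 5; ring)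
    Hw1 Hw2 (by convert Hw3 using 5; ring) Hw4 Hw5 (by convert Hw6 using 5; ring)
  exact ⟨C, hC, 1, one_pos, fun h _ hlt => hbound h (le_of_lt hlt)⟩
end

section
/- (Second-order reflection-symmetric Jacobian stencil on the square lattice.) Let v, w : ℝ² → ℝ be four times continuously differentiable, let x ∈ ℝ², and for p ∈ ℤ² write v_p = v(x + h·p), w_p = w(x + h·p). Define F(h) = (v_{(1,0)}w_{(0,1)} − v_{(0,1)}w_{(1,0)}) + (v_{(-1,1)}w_{(-1,0)} − v_{(-1,0)}w_{(-1,1)}) + (v_{(0,-1)}w_{(1,-1)} − v_{(1,-1)}w_{(0,-1)}), and define G(h) = F(h) + F(−h) (i.e., F plus the same expression with every lattice offset negated). Then, as h → 0, G(h) = 6·h²·( v_x(x)w_y(x) − v_y(x)w_x(x) ) + O(h⁴). That is, adding the reflection image of the stencil yields a second-order-accurate skew discretization of the Jacobian. -/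
open Set

/-- The translation-invariant skew Jacobian stencil on the square lattice. -/
noncomputable def jacStencil (v w : (Fin 2 → ℝ) → ℝ) (x : Fin 2 → ℝ) (h : ℝ) : ℝ :=
  (v (x + h • ![1, 0]) * w (x + h • ![0, 1]) -
      v (x + h • ![0, 1]) * w (x + h • ![1, 0])) +
  (v (x + h • ![-1, 1]) * w (x + h • ![-1, 0]) -
      v (x + h • ![-1, 0]) * w (x + h • ![-1, 1])) +
  (v (x + h • ![0, -1]) * w (x + h • ![1, -1]) -
      v (x + h • ![1, -1]) * w (x + h • ![0, -1]))

/-! ### Mean value / Taylor-type bound -/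

private lemma mvt_step {g : ℝ → ℝ} (hg : Differentiable ℝ g) (hg0 : g 0 = 0)
    {K : ℝ} {k : ℕ} (hK : 0 ≤ K) (hd : ∀ t : ℝ, |t| ≤ 1 → |deriv g t| ≤ K * |t| ^ k) :
    ∀ t : ℝ, |t| ≤ 1 → |g t| ≤ K * |t| ^ (k + 1) := by
  intro t ht
  have hconv : Convex ℝ (uIcc (0 : ℝ) t) := convex_uIcc 0 t
  have hmem : ∀ y ∈ uIcc (0 : ℝ) t, |y| ≤ |t| := by
    intro y hy
    rcases le_total 0 t with h | h
    · rw [uIcc_of_le h] at hy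
      rw [abs_of_nonneg hy.1, abs_of_nonneg h]; exact hy.2
    · rw [uIcc_of_ge h] at hy
      rw [abs_of_nonpos (hy.2.trans le_rfl), abs_of_nonpos h]; linarith [hy.1]
  have bound : ∀ y ∈ uIcc (0 : ℝ) t, ‖deriv g y‖ ≤ K * |t| ^ k := by
    intro y hy
    have h1 : |y| ≤ 1 := le_trans (hmem y hy) ht
    calc ‖deriv g y‖ = |deriv g y| := rfl
      _ ≤ K * |y| ^ k := hd y h1
      _ ≤ K * |t| ^ k := by
          apply mul_le_mul_of_nonneg_left _ hK
          exact pow_le_pow_left₀ (abs_nonneg y) (hmem y hy) k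
  have := Convex.norm_image_sub_le_of_norm_deriv_le
    (fun y _ => hg y) bound hconv (left_mem_uIcc) (right_mem_uIcc)
  rw [hg0, sub_zero, sub_zero] at this
  calc |g t| = ‖g t‖ := rfl
    _ ≤ K * |t| ^ k * ‖t‖ := this
    _ = K * |t| ^ (k + 1) := by rw [Real.norm_eq_abs, pow_succ]; ring

private lemma fourth_order_bound {f : ℝ → ℝ} (hf : ContDiff ℝ 4 f)
    (h0 : f 0 = 0) (h1 : iteratedDeriv 1 f 0 = 0) (h2 : iteratedDeriv 2 f 0 = 0)
    (h3 : iteratedDeriv 3 f 0 = 0) :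
    ∃ C > (0 : ℝ), ∀ h : ℝ, |h| ≤ 1 → |f h| ≤ C * |h| ^ 4 := by
  have hcont : Continuous (iteratedDeriv 4 f) :=
    hf.continuous_iteratedDeriv 4 (by norm_num)
  obtain ⟨M, hM⟩ := (isCompact_Icc (a := (-1:ℝ)) (b := 1)).exists_bound_of_continuousOn
    hcont.continuousOn
  set K := max M 0 + 1 with hKdef
  have hKpos : 0 < K := by positivity
  have hK : 0 ≤ K := hKpos.le
  have hdiff : ∀ m : ℕ, m < 4 → Differentiable ℝ (iteratedDeriv m f) := by
    intro m hm
    exact hf.differentiable_iteratedDeriv m (by exact_mod_cast hm)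
  have step4 : ∀ t : ℝ, |t| ≤ 1 → |iteratedDeriv 4 f t| ≤ K * |t| ^ 0 := by
    intro t ht
    have : t ∈ Icc (-1 : ℝ) 1 := abs_le.mp ht
    calc |iteratedDeriv 4 f t| ≤ M := hM t this
      _ ≤ K * |t| ^ 0 := by simp [hKdef]; linarith [le_max_left M 0]
  have step3 : ∀ t : ℝ, |t| ≤ 1 → |iteratedDeriv 3 f t| ≤ K * |t| ^ 1 := by
    refine mvt_step (hdiff 3 (by norm_num)) h3 hK ?_
    intro t ht
    rw [← iteratedDeriv_succ]
    exact step4 t ht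
  have step2 : ∀ t : ℝ, |t| ≤ 1 → |iteratedDeriv 2 f t| ≤ K * |t| ^ 2 := by
    refine mvt_step (hdiff 2 (by norm_num)) h2 hK ?_
    intro t ht
    rw [← iteratedDeriv_succ]
    exact step3 t ht
  have step1 : ∀ t : ℝ, |t| ≤ 1 → |iteratedDeriv 1 f t| ≤ K * |t| ^ 3 := by
    refine mvt_step (hdiff 1 (by norm_num)) h1 hK ?_
    intro t ht
    rw [← iteratedDeriv_succ]
    exact step2 t ht
  have step0 : ∀ t : ℝ, |t| ≤ 1 → |f t| ≤ K * |t| ^ 4 := by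
    refine mvt_step (hdiff 0 (by norm_num)) h0 hK ?_
    intro t ht
    rw [← iteratedDeriv_one]
    exact step1 t ht
  exact ⟨K, hKpos, step0⟩

/-! ### Derivatives of the stencil -/

private lemma line_hasDerivAt (x p : Fin 2 → ℝ) (h : ℝ) :
    HasDerivAt (fun t : ℝ => x + t • p) p h := by
  simpa using ((hasDerivAt_id h).smul_const p).const_add x

private lemma comp_line_hasDerivAt {v : (Fin 2 → ℝ) → ℝ} (hv : Differentiable ℝ v)
    (x p : Fin 2 → ℝ) (h : ℝ) :
    HasDerivAt (fun t : ℝ => v (x + t • p)) (fderiv ℝ v (x + h • p) p) h :=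
  ((hv _).hasFDerivAt).comp_hasDerivAt h (line_hasDerivAt x p h)

private lemma fderiv_line_hasDerivAt {v : (Fin 2 → ℝ) → ℝ} (hv : ContDiff ℝ 4 v)
    (x p : Fin 2 → ℝ) (h : ℝ) :
    HasDerivAt (fun t : ℝ => fderiv ℝ v (x + t • p) p)
      (fderiv ℝ (fderiv ℝ v) (x + h • p) p p) h := by
  have h1 : Differentiable ℝ (fderiv ℝ v) :=
    (hv.fderiv_right (m := 1) (by norm_num)).differentiable (by norm_num)
  have H : HasDerivAt (fun t : ℝ => fderiv ℝ v (x + t • p))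
      (fderiv ℝ (fderiv ℝ v) (x + h • p) p) h :=
    ((h1 _).hasFDerivAt).comp_hasDerivAt h (line_hasDerivAt x p h)
  simpa using H.clm_apply (hasDerivAt_const h p)

/-- first derivative of one product term of the stencil -/
private noncomputable def sd (v w : (Fin 2 → ℝ) → ℝ) (x p q : Fin 2 → ℝ) (h : ℝ) : ℝ :=
  fderiv ℝ v (x + h • p) p * w (x + h • q) + v (x + h • p) * fderiv ℝ w (x + h • q) q

private lemma term_hasDerivAt {v w : (Fin 2 → ℝ) → ℝ} (hv : Differentiable ℝ v)
    (hw : Differentiable ℝ w) (x p q : Fin 2 → ℝ) (h : ℝ) :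
    HasDerivAt (fun t : ℝ => v (x + t • p) * w (x + t • q)) (sd v w x p q h) h :=
  (comp_line_hasDerivAt hv x p h).mul (comp_line_hasDerivAt hw x q h)

/-- second derivative of one product term of the stencil, at `h = 0` -/
private noncomputable def sd2 (v w : (Fin 2 → ℝ) → ℝ) (x p q : Fin 2 → ℝ) : ℝ :=
  (fderiv ℝ (fderiv ℝ v) x p p * w x + fderiv ℝ v x p * fderiv ℝ w x q) +
    (fderiv ℝ v x p * fderiv ℝ w x q + v x * fderiv ℝ (fderiv ℝ w) x q q)

private lemma sd_hasDerivAt_zero {v w : (Fin 2 → ℝ) → ℝ} (hv : ContDiff ℝ 4 v)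
    (hw : ContDiff ℝ 4 w) (x p q : Fin 2 → ℝ) :
    HasDerivAt (fun t : ℝ => sd v w x p q t) (sd2 v w x p q) 0 := by
  have hv1 : Differentiable ℝ v := hv.differentiable (by norm_num)
  have hw1 : Differentiable ℝ w := hw.differentiable (by norm_num)
  have H1 := (fderiv_line_hasDerivAt hv x p 0).mul (comp_line_hasDerivAt hw1 x q 0)
  have H2 := (comp_line_hasDerivAt hv1 x p 0).mul (fderiv_line_hasDerivAt hw x q 0)
  have := H1.add H2
  simp only [zero_smul, add_zero] at this
  exact this

/-- the first derivative of the stencil -/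
private noncomputable def stDeriv (v w : (Fin 2 → ℝ) → ℝ) (x : Fin 2 → ℝ) (h : ℝ) : ℝ :=
  (sd v w x ![1, 0] ![0, 1] h - sd v w x ![0, 1] ![1, 0] h) +
    (sd v w x ![-1, 1] ![-1, 0] h - sd v w x ![-1, 0] ![-1, 1] h) +
    (sd v w x ![0, -1] ![1, -1] h - sd v w x ![1, -1] ![0, -1] h)

private lemma stencil_hasDerivAt {v w : (Fin 2 → ℝ) → ℝ} (hv : Differentiable ℝ v)
    (hw : Differentiable ℝ w) (x : Fin 2 → ℝ) (h : ℝ) :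
    HasDerivAt (fun t : ℝ => jacStencil v w x t) (stDeriv v w x h) h := by
  unfold jacStencil stDeriv
  exact (((term_hasDerivAt hv hw x _ _ h).sub (term_hasDerivAt hv hw x _ _ h)).add
    ((term_hasDerivAt hv hw x _ _ h).sub (term_hasDerivAt hv hw x _ _ h))).add
    ((term_hasDerivAt hv hw x _ _ h).sub (term_hasDerivAt hv hw x _ _ h))

/-- second derivative of the stencil at `0` -/
private noncomputable def stE (v w : (Fin 2 → ℝ) → ℝ) (x : Fin 2 → ℝ) : ℝ :=
  (sd2 v w x ![1, 0] ![0, 1] - sd2 v w x ![0, 1] ![1, 0]) +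
    (sd2 v w x ![-1, 1] ![-1, 0] - sd2 v w x ![-1, 0] ![-1, 1]) +
    (sd2 v w x ![0, -1] ![1, -1] - sd2 v w x ![1, -1] ![0, -1])

private lemma stDeriv_hasDerivAt_zero {v w : (Fin 2 → ℝ) → ℝ} (hv : ContDiff ℝ 4 v)
    (hw : ContDiff ℝ 4 w) (x : Fin 2 → ℝ) :
    HasDerivAt (fun t : ℝ => stDeriv v w x t) (stE v w x) 0 := by
  unfold stDeriv stE
  exact (((sd_hasDerivAt_zero hv hw x _ _).sub (sd_hasDerivAt_zero hv hw x _ _)).add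
    ((sd_hasDerivAt_zero hv hw x _ _).sub (sd_hasDerivAt_zero hv hw x _ _))).add
    ((sd_hasDerivAt_zero hv hw x _ _).sub (sd_hasDerivAt_zero hv hw x _ _))

/-! ### The algebra -/

private lemma vec10 : (![1, 0] : Fin 2 → ℝ) = Pi.single 0 1 := by
  funext i; fin_cases i <;> simp

private lemma vec01 : (![0, 1] : Fin 2 → ℝ) = Pi.single 1 1 := by
  funext i; fin_cases i <;> simp

private lemma vecm10 : (![-1, 0] : Fin 2 → ℝ) = -Pi.single 0 1 := by
  funext i; fin_cases i <;> simp

private lemma vec0m1 : (![0, -1] : Fin 2 → ℝ) = -Pi.single 1 1 := by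
  funext i; fin_cases i <;> simp

private lemma vecm11 : (![-1, 1] : Fin 2 → ℝ) = -Pi.single 0 1 + Pi.single 1 1 := by
  funext i; fin_cases i <;> simp

private lemma vec1m1 : (![1, -1] : Fin 2 → ℝ) = Pi.single 0 1 - Pi.single 1 1 := by
  funext i; fin_cases i <;> simp

private lemma algebra_E (v w : (Fin 2 → ℝ) → ℝ) (x : Fin 2 → ℝ) :
    stE v w x = 6 * (pd 0 v x * pd 1 w x - pd 1 v x * pd 0 w x) := by
  unfold stE sd2 pd
  rw [vec10, vec01, vecm10, vec0m1, vecm11, vec1m1]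
  simp only [map_add, map_neg, map_sub, ContinuousLinearMap.add_apply,
    ContinuousLinearMap.neg_apply, ContinuousLinearMap.sub_apply]
  ring

/-! ### Main theorem -/

/-- Adding the reflection image of the translation-invariant skew Jacobian
stencil yields a second-order-accurate discretization of the Jacobian:
`G(h) = F(h) + F(−h) = 6h²·(v_x w_y − v_y w_x) + O(h⁴)`. -/
theorem reflection_symmetric_jacobian_stencil_second_order
    (v w : (Fin 2 → ℝ) → ℝ) (hv : ContDiff ℝ 4 v) (hw : ContDiff ℝ 4 w)
    (x : Fin 2 → ℝ) :
    ∃ C > (0 : ℝ), ∃ δ > (0 : ℝ), ∀ h : ℝ, 0 < |h| → |h| < δ →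
      |(jacStencil v w x h + jacStencil v w x (-h)) -
        6 * h ^ 2 * (pd 0 v x * pd 1 w x - pd 1 v x * pd 0 w x)|
        ≤ C * |h| ^ 4 := by
  have hv1 : Differentiable ℝ v := hv.differentiable (by norm_num)
  have hw1 : Differentiable ℝ w := hw.differentiable (by norm_num)
  set J : ℝ := pd 0 v x * pd 1 w x - pd 1 v x * pd 0 w x with hJ
  set φ : ℝ → ℝ := fun h => (jacStencil v w x h + jacStencil v w x (-h)) - 6 * h ^ 2 * J
    with hφdef
  -- smoothness of φ
  have hline : ∀ p : Fin 2 → ℝ, ContDiff ℝ 4 (fun t : ℝ => x + t • p) := fun p =>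
    contDiff_const.add (contDiff_id.smul contDiff_const)
  have hterm : ∀ p q : Fin 2 → ℝ, ContDiff ℝ 4 (fun t : ℝ => v (x + t • p) * w (x + t • q)) :=
    fun p q => (hv.comp (hline p)).mul (hw.comp (hline q))
  have hjacCD : ContDiff ℝ 4 (fun t : ℝ => jacStencil v w x t) := by
    unfold jacStencil
    exact (((hterm _ _).sub (hterm _ _)).add ((hterm _ _).sub (hterm _ _))).add
      ((hterm _ _).sub (hterm _ _))
  have hφCD : ContDiff ℝ 4 φ := by
    refine ((hjacCD.add (hjacCD.comp contDiff_neg)).sub ?_)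
    exact (contDiff_const.mul (contDiff_id.pow 2)).mul contDiff_const
  -- φ 0 = 0
  have hφ0 : φ 0 = 0 := by
    simp only [hφdef, jacStencil, neg_zero, zero_smul, add_zero]
    ring_nf
  -- first derivative of φ
  have hφD : ∀ h : ℝ, HasDerivAt φ
      (stDeriv v w x h - stDeriv v w x (-h) - 12 * h * J) h := by
    intro h
    have H1 := stencil_hasDerivAt hv1 hw1 x h
    have H2 : HasDerivAt (fun t : ℝ => jacStencil v w x (-t)) (-stDeriv v w x (-h)) h := by
      have := (stencil_hasDerivAt hv1 hw1 x (-h)).comp h (hasDerivAt_neg h)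
      simpa [Function.comp_def] using this
    have H3 : HasDerivAt (fun t : ℝ => 6 * t ^ 2 * J) (12 * h * J) h := by
      have := ((hasDerivAt_pow 2 h).const_mul (6 : ℝ)).mul_const J
      exact this.congr_deriv (by push_cast; ring_nf)
    have := (H1.add H2).sub H3
    exact this.congr_deriv (by ring)
  have hderivφ : deriv φ = fun h => stDeriv v w x h - stDeriv v w x (-h) - 12 * h * J :=
    funext fun h => (hφD h).deriv
  -- deriv φ 0 = 0
  have hd1 : iteratedDeriv 1 φ 0 = 0 := by
    rw [iteratedDeriv_one, hderivφ]
    simp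
  -- second derivative at 0
  have hd2 : iteratedDeriv 2 φ 0 = 0 := by
    have hE := stDeriv_hasDerivAt_zero hv hw x
    have hEneg : HasDerivAt (fun t : ℝ => stDeriv v w x (-t)) (-stE v w x) 0 := by
      have h0 : HasDerivAt (fun t : ℝ => stDeriv v w x t) (stE v w x) (-0 : ℝ) := by
        rw [neg_zero]; exact hE
      have := h0.comp (0 : ℝ) (hasDerivAt_neg (0 : ℝ))
      simpa [Function.comp_def] using this
    have hlin : HasDerivAt (fun t : ℝ => 12 * t * J) (12 * J) (0 : ℝ) := by
      have := ((hasDerivAt_id (0 : ℝ)).const_mul (12 : ℝ)).mul_const J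
      simpa using this
    have Hψ : HasDerivAt (fun h : ℝ => stDeriv v w x h - stDeriv v w x (-h) - 12 * h * J)
        (stE v w x - (-stE v w x) - 12 * J) 0 := (hE.sub hEneg).sub hlin
    have : iteratedDeriv 2 φ 0 = deriv (deriv φ) 0 := by
      rw [show (2 : ℕ) = 1 + 1 from rfl, iteratedDeriv_succ, iteratedDeriv_one]
    rw [this, hderivφ, Hψ.deriv, algebra_E, hJ]
    ring
  -- third derivative at 0: evenness
  have hφeven : ∀ h : ℝ, φ (-h) = φ h := by
    intro h
    simp only [hφdef, neg_neg, neg_sq]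
    ring
  have hd3 : iteratedDeriv 3 φ 0 = 0 := by
    have hfun : (fun t : ℝ => φ (-t)) = φ := funext hφeven
    have := iteratedDeriv_comp_neg 3 φ 0
    rw [hfun, neg_zero] at this
    simp only [smul_eq_mul] at this
    linarith [this]
  obtain ⟨C, hCpos, hC⟩ := fourth_order_bound hφCD hφ0 hd1 hd2 hd3
  refine ⟨C, hCpos, 1, one_pos, fun h _ hlt => ?_⟩
  have := hC h hlt.le
  simpa [hφdef, hJ] using this
end

section
/- (Three-integral skew 4-tensor on the square lattice.) Let v¹, v², v³ : ℝ² → ℝ be four times continuously differentiable and let x ∈ ℝ². For an ordered triple of lattice points (p, q, r) ∈ (ℤ²)³ and h ∈ ℝ, let D(p,q,r)(h) denote the determinant of the 3×3 matrix whose (j,1), (j,2), (j,3) entries are v^j(x + h·p), v^j(x + h·q), v^j(x + h·r) respectively. Define F(h) = D((1,0),(1,1),(0,1))(h) + D((−1,0),(0,1),(−1,1))(h) + D((−1,0),(−1,−1),(0,−1))(h) + D((1,−1),(1,0),(0,−1))(h). Then, as h → 0, F(h) = 4·h²·( v¹·𝒥(v²,v³) + v²·𝒥(v³,v¹) + v³·𝒥(v¹,v²)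 )(x) + O(h⁴), where 𝒥(v,w) = v_x w_y − v_y w_x. -/
/-- The Jacobian `𝒥(v,w) = v_x w_y − v_y w_x` of two functions on `ℝ²`. -/
noncomputable def jac (v w : (Fin 2 → ℝ) → ℝ) (x : Fin 2 → ℝ) : ℝ :=
  pd 0 v x * pd 1 w x - pd 1 v x * pd 0 w x

/-- The 3×3 determinant `D(p,q,r)(h)` whose rows are the values of
`v¹, v², v³` at the three lattice points `x + h·p`, `x + h·q`, `x + h·r`. -/
noncomputable def D (v₁ v₂ v₃ : (Fin 2 → ℝ) → ℝ) (x : Fin 2 → ℝ)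
    (p q r : Fin 2 → ℝ) (h : ℝ) : ℝ :=
  Matrix.det !![v₁ (x + h • p), v₁ (x + h • q), v₁ (x + h • r);
               v₂ (x + h • p), v₂ (x + h • q), v₂ (x + h • r);
               v₃ (x + h • p), v₃ (x + h • q), v₃ (x + h • r)]

section ArakawaSupport


lemma iterWithin (f : ℝ → ℝ) (hf : ContDiff ℝ 4 f) {k : ℕ} (hk : k ≤ 4) {a b : ℝ}
    (hab : a < b) {y : ℝ} (hy : y ∈ Set.Icc a b) :
    iteratedDerivWithin k f (Set.Icc a b) y = iteratedDeriv k f y := by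
  have H0 : HasFTaylorSeriesUpToOn 4 f (ftaylorSeriesWithin ℝ f Set.univ) Set.univ :=
    (hf.contDiffOn (s := Set.univ)).ftaylorSeriesWithin uniqueDiffOn_univ
  rw [ftaylorSeriesWithin_univ] at H0
  have H : HasFTaylorSeriesUpToOn 4 f (ftaylorSeries ℝ f) (Set.Icc a b) :=
    H0.mono (Set.subset_univ _)
  have h1 : iteratedFDerivWithin ℝ k f (Set.Icc a b) y = iteratedFDeriv ℝ k f y :=
    (H.eq_iteratedFDerivWithin_of_uniqueDiffOn (by exact_mod_cast hk)
      (uniqueDiffOn_Icc hab) hy).symm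
  rw [iteratedDerivWithin, iteratedDeriv, h1]

lemma taylor_bound (u : ℝ → ℝ) (hu : ContDiff ℝ 4 u) :
    ∃ C > (0:ℝ), ∀ h : ℝ, |h| ≤ 1 →
      |u h - (u 0 + deriv u 0 * h + iteratedDeriv 2 u 0 / 2 * h ^ 2
        + iteratedDeriv 3 u 0 / 6 * h ^ 3)| ≤ C * h ^ 4 := by
  have taylorP : ∀ g : ℝ → ℝ, ContDiff ℝ 4 g → ∀ t : ℝ,
      taylorWithinEval g 3 (Set.Icc (0:ℝ) 1) 0 t =
        g 0 + deriv g 0 * t + iteratedDeriv 2 g 0 / 2 * t ^ 2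
          + iteratedDeriv 3 g 0 / 6 * t ^ 3 := by
    intro g hg t
    have h0 : (0:ℝ) ∈ Set.Icc (0:ℝ) 1 := by norm_num
    have e0 := iterWithin g hg (k := 0) (by norm_num) (by norm_num : (0:ℝ) < 1) h0
    have e1 := iterWithin g hg (k := 1) (by norm_num) (by norm_num : (0:ℝ) < 1) h0
    have e2 := iterWithin g hg (k := 2) (by norm_num) (by norm_num : (0:ℝ) < 1) h0
    have e3 := iterWithin g hg (k := 3) (by norm_num) (by norm_num : (0:ℝ) < 1) h0
    rw [taylor_within_apply]
    rw [Finset.sum_range_succ, Finset.sum_range_succ, Finset.sum_range_succ,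
      Finset.sum_range_succ, Finset.sum_range_zero, e0, e1, e2, e3,
      iteratedDeriv_zero, iteratedDeriv_one]
    simp [Nat.factorial]
    ring
  have hcd : ∀ g : ℝ → ℝ, ContDiff ℝ 4 g → ContDiffOn ℝ ((3:ℕ) + 1) g (Set.Icc (0:ℝ) 1) := by
    intro g hg
    exact (hg.of_le (by norm_num)).contDiffOn
  obtain ⟨C₁, hC₁⟩ := exists_taylor_mean_remainder_bound (zero_le_one (α := ℝ)) (hcd u hu)
  have hun : ContDiff ℝ 4 (fun t : ℝ => u (-t)) := hu.comp (contDiff_id.neg)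
  obtain ⟨C₂, hC₂⟩ := exists_taylor_mean_remainder_bound (zero_le_one (α := ℝ)) (hcd _ hun)
  refine ⟨max (max C₁ C₂) 1, by positivity, fun h hh => ?_⟩
  have habs := abs_le.mp hh
  rcases le_or_gt 0 h with hpos | hneg
  · have := hC₁ h ⟨hpos, habs.2⟩
    rw [taylorP u hu h] at this
    rw [Real.norm_eq_abs] at this
    calc |u h - (u 0 + deriv u 0 * h + iteratedDeriv 2 u 0 / 2 * h ^ 2
          + iteratedDeriv 3 u 0 / 6 * h ^ 3)| ≤ C₁ * (h - 0) ^ (3+1) := this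
      _ ≤ max (max C₁ C₂) 1 * h ^ 4 := by
          have : (h - 0) ^ (3+1) = h ^ 4 := by ring
          rw [this]
          have h4 : (0:ℝ) ≤ h ^ 4 := by positivity
          have : C₁ ≤ max (max C₁ C₂) 1 := le_max_of_le_left (le_max_left _ _)
          exact mul_le_mul_of_nonneg_right this h4
  · have := hC₂ (-h) ⟨by linarith, by linarith⟩
    rw [taylorP _ hun (-h)] at this
    rw [Real.norm_eq_abs] at this
    have ed1 : deriv (fun t : ℝ => u (-t)) 0 = -deriv u 0 := by
      rw [← iteratedDeriv_one, ← iteratedDeriv_one]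
      have := iteratedDeriv_comp_neg 1 u 0
      simpa using this
    have ed2 : iteratedDeriv 2 (fun t : ℝ => u (-t)) 0 = iteratedDeriv 2 u 0 := by
      have := iteratedDeriv_comp_neg 2 u 0
      simpa using this
    have ed3 : iteratedDeriv 3 (fun t : ℝ => u (-t)) 0 = -iteratedDeriv 3 u 0 := by
      have := iteratedDeriv_comp_neg 3 u 0
      simpa [pow_succ] using this
    rw [ed1, ed2, ed3] at this
    simp only [neg_neg] at this
    calc |u h - (u 0 + deriv u 0 * h + iteratedDeriv 2 u 0 / 2 * h ^ 2
          + iteratedDeriv 3 u 0 / 6 * h ^ 3)|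
        = |u h - (u (-0) + -deriv u 0 * -h
            + iteratedDeriv 2 u 0 / 2 * (-h) ^ 2 + -iteratedDeriv 3 u 0 / 6 * (-h) ^ 3)| := by
          rw [neg_zero]; ring_nf
      _ ≤ C₂ * (-h - 0) ^ (3+1) := this
      _ ≤ max (max C₁ C₂) 1 * h ^ 4 := by
          have e : (-h - 0) ^ (3+1) = h ^ 4 := by ring
          rw [e]
          have h4 : (0:ℝ) ≤ h ^ 4 := by positivity
          have : C₂ ≤ max (max C₁ C₂) 1 := le_max_of_le_left (le_max_right _ _)
          exact mul_le_mul_of_nonneg_right this h4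

lemma iter_neg (v : (Fin 2 → ℝ) → ℝ) (x p : Fin 2 → ℝ) (k : ℕ) :
    iteratedDeriv k (fun t : ℝ => v (x + t • (-p))) 0
      = (-1:ℝ)^k * iteratedDeriv k (fun t : ℝ => v (x + t • p)) 0 := by
  have e : (fun t : ℝ => v (x + t • (-p)))
      = (fun t : ℝ => (fun s : ℝ => v (x + s • p)) (-t)) := by
    funext t
    rw [smul_neg, ← neg_smul]
  rw [e, iteratedDeriv_comp_neg k (fun s : ℝ => v (x + s • p)) 0]
  simp [smul_eq_mul]

lemma expand' (v : (Fin 2 → ℝ) → ℝ) (hv : ContDiff ℝ 4 v) (x p : Fin 2 → ℝ) (l m n : ℝ)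
    (hl : p 0 * pd 0 v x + p 1 * pd 1 v x = l)
    (hm : iteratedDeriv 2 (fun t : ℝ => v (x + t • p)) 0 = 2 * m)
    (hn : iteratedDeriv 3 (fun t : ℝ => v (x + t • p)) 0 = 6 * n) :
    ∃ C > (0:ℝ), ∀ h : ℝ, |h| ≤ 1 →
      |v (x + h • p) - (v x + l * h + m * h ^ 2 + n * h ^ 3)| ≤ C * h ^ 4 := by
  have hγ : ContDiff ℝ 4 (fun t : ℝ => x + t • p) :=
    contDiff_const.add (contDiff_id.smul contDiff_const)
  have hu : ContDiff ℝ 4 (fun t : ℝ => v (x + t • p)) := hv.comp hγ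
  obtain ⟨C, hC, H⟩ := taylor_bound _ hu
  refine ⟨C, hC, fun h hh => ?_⟩
  have h0 : v (x + (0:ℝ) • p) = v x := by simp
  have hd : deriv (fun t : ℝ => v (x + t • p)) 0 = l := by
    have hγ' : HasDerivAt (fun t : ℝ => x + t • p) p 0 := by
      have h1 : HasDerivAt (fun t : ℝ => t • p) ((1:ℝ) • p) 0 := (hasDerivAt_id 0).smul_const p
      simpa using h1.const_add x
    have hv' : HasFDerivAt v (fderiv ℝ v (x + (0:ℝ) • p)) (x + (0:ℝ) • p) :=
      (hv.differentiable (by norm_num)).differentiableAt.hasFDerivAt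
    have hc : HasDerivAt (fun t : ℝ => v (x + t • p)) (fderiv ℝ v (x + (0:ℝ) • p) p) 0 :=
      hv'.comp_hasDerivAt 0 hγ'
    rw [hc.deriv]
    have hx0 : x + (0:ℝ) • p = x := by simp
    rw [hx0]
    have hpdec : p = p 0 • (Pi.single 0 1 : Fin 2 → ℝ) + p 1 • (Pi.single 1 1 : Fin 2 → ℝ) := by
      funext i
      fin_cases i <;> simp [Pi.single_apply]
    calc fderiv ℝ v x p = fderiv ℝ v x (p 0 • (Pi.single 0 1 : Fin 2 → ℝ) + p 1 • (Pi.single 1 1 : Fin 2 → ℝ)) := by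
          rw [← hpdec]
      _ = l := by
          rw [map_add, map_smul, map_smul, smul_eq_mul, smul_eq_mul, ← hl]
          rfl
  have key := H h hh
  rw [h0, hd, hm, hn] at key
  have e2 : v x + l * h + 2 * m / 2 * h ^ 2 + 6 * n / 6 * h ^ 3
      = v x + l * h + m * h ^ 2 + n * h ^ 3 := by ring
  rw [e2] at key
  exact key


lemma cubic_abs_le (V l m n h B : ℝ) (hh : |h| ≤ 1) (hB : |V| + |l| + |m| + |n| ≤ B) :
    |V + l * h + m * h ^ 2 + n * h ^ 3| ≤ B := by
  have h1 : |l * h| ≤ |l| := by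
    rw [abs_mul]; exact mul_le_of_le_one_right (abs_nonneg _) hh
  have h2 : |m * h ^ 2| ≤ |m| := by
    rw [abs_mul, abs_pow]
    exact mul_le_of_le_one_right (abs_nonneg _) (pow_le_one₀ (abs_nonneg _) hh)
  have h3 : |n * h ^ 3| ≤ |n| := by
    rw [abs_mul, abs_pow]
    exact mul_le_of_le_one_right (abs_nonneg _) (pow_le_one₀ (abs_nonneg _) hh)
  have a1 := abs_add_le (V + l * h + m * h ^ 2) (n * h ^ 3)
  have a2 := abs_add_le (V + l * h) (m * h ^ 2)
  have a3 := abs_add_le V (l * h)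
  linarith

lemma poly_abs3 (q0 q2 q4 h : ℝ) (hh : |h| ≤ 1) :
    |q0 + q2 * h ^ 2 + q4 * h ^ 4| ≤ |q0| + |q2| + |q4| := by
  have h2 : |q2 * h ^ 2| ≤ |q2| := by
    rw [abs_mul, abs_pow]
    exact mul_le_of_le_one_right (abs_nonneg _) (pow_le_one₀ (abs_nonneg _) hh)
  have h4 : |q4 * h ^ 4| ≤ |q4| := by
    rw [abs_mul, abs_pow]
    exact mul_le_of_le_one_right (abs_nonneg _) (pow_le_one₀ (abs_nonneg _) hh)
  have a1 := abs_add_le (q0 + q2 * h ^ 2) (q4 * h ^ 4)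
  have a2 := abs_add_le q0 (q2 * h ^ 2)
  linarith

lemma sub4_abs (a1 a2 a3 a4 b1 b2 b3 b4 : ℝ) :
    |a1 + a2 + a3 + a4 - (b1 + b2 + b3 + b4)|
      ≤ |a1 - b1| + |a2 - b2| + |a3 - b3| + |a4 - b4| := by
  have l1 := le_abs_self (a1 - b1); have m1 := neg_abs_le (a1 - b1)
  have l2 := le_abs_self (a2 - b2); have m2 := neg_abs_le (a2 - b2)
  have l3 := le_abs_self (a3 - b3); have m3 := neg_abs_le (a3 - b3)
  have l4 := le_abs_self (a4 - b4); have m4 := neg_abs_le (a4 - b4)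
  exact abs_le.mpr ⟨by linarith, by linarith⟩

lemma prod3_diff {x y z a b c : ℝ} (K ε : ℝ) (hx : |x| ≤ K) (hy : |y| ≤ K) (hz : |z| ≤ K)
    (ha : |a| ≤ K) (hb : |b| ≤ K) (hc : |c| ≤ K)
    (dx : |x - a| ≤ ε) (dy : |y - b| ≤ ε) (dz : |z - c| ≤ ε) :
    |x * y * z - a * b * c| ≤ 3 * K ^ 2 * ε := by
  have hK : (0:ℝ) ≤ K := le_trans (abs_nonneg _) hx
  have hε : (0:ℝ) ≤ ε := le_trans (abs_nonneg _) dx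
  have e : x * y * z - a * b * c = (x - a) * (y * z) + a * ((y - b) * z) + a * b * (z - c) := by
    ring
  have t1 : |(x - a) * (y * z)| ≤ ε * (K * K) := by
    rw [abs_mul, abs_mul]
    exact mul_le_mul dx (mul_le_mul hy hz (abs_nonneg _) hK) (by positivity) hε
  have t2 : |a * ((y - b) * z)| ≤ K * (ε * K) := by
    rw [abs_mul, abs_mul]
    exact mul_le_mul ha (mul_le_mul dy hz (abs_nonneg _) hε) (by positivity) hK
  have t3 : |a * b * (z - c)| ≤ K * K * ε := by
    rw [abs_mul, abs_mul]
    exact mul_le_mul (mul_le_mul ha hb (abs_nonneg _) hK) dz (abs_nonneg _) (by positivity)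
  rw [e]
  have a1 := abs_add_le ((x - a) * (y * z) + a * ((y - b) * z)) (a * b * (z - c))
  have a2 := abs_add_le ((x - a) * (y * z)) (a * ((y - b) * z))
  nlinarith [sq_nonneg K]


lemma det3_diff {w11 w12 w13 w21 w22 w23 w31 w32 w33 s11 s12 s13 s21 s22 s23 s31 s32 s33 : ℝ} (B ε ε' : ℝ) (hB : 0 ≤ B) (hee : ε ≤ ε')
    (h11 : |s11| ≤ B)
    (h12 : |s12| ≤ B)
    (h13 : |s13| ≤ B)
    (h21 : |s21| ≤ B)
    (h22 : |s22| ≤ B)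
    (h23 : |s23| ≤ B)
    (h31 : |s31| ≤ B)
    (h32 : |s32| ≤ B)
    (h33 : |s33| ≤ B)
    (d11 : |w11 - s11| ≤ ε)
    (d12 : |w12 - s12| ≤ ε)
    (d13 : |w13 - s13| ≤ ε)
    (d21 : |w21 - s21| ≤ ε)
    (d22 : |w22 - s22| ≤ ε)
    (d23 : |w23 - s23| ≤ ε)
    (d31 : |w31 - s31| ≤ ε)
    (d32 : |w32 - s32| ≤ ε)
    (d33 : |w33 - s33| ≤ ε) :
    |(w11 * w22 * w33 - w11 * w23 * w32 - w12 * w21 * w33 + w12 * w23 * w31 + w13 * w21 * w32 - w13 * w22 * w31) - (s11 * s22 * s33 - s11 * s23 * s32 - s12 * s21 * s33 + s12 * s23 * s31 + s13 * s21 * s32 - s13 * s22 * s31)| ≤ 18 * (B + ε') ^ 2 * ε := by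
  have hε : (0:ℝ) ≤ ε := le_trans (abs_nonneg _) d11
  have hε' : (0:ℝ) ≤ ε' := le_trans hε hee
  have hs11 : |s11| ≤ B + ε' := by linarith
  have hw11 : |w11| ≤ B + ε' := by have := abs_sub_abs_le_abs_sub w11 s11; linarith
  have hs12 : |s12| ≤ B + ε' := by linarith
  have hw12 : |w12| ≤ B + ε' := by have := abs_sub_abs_le_abs_sub w12 s12; linarith
  have hs13 : |s13| ≤ B + ε' := by linarith
  have hw13 : |w13| ≤ B + ε' := by have := abs_sub_abs_le_abs_sub w13 s13; linarith
  have hs21 : |s21| ≤ B + ε' := by linarith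
  have hw21 : |w21| ≤ B + ε' := by have := abs_sub_abs_le_abs_sub w21 s21; linarith
  have hs22 : |s22| ≤ B + ε' := by linarith
  have hw22 : |w22| ≤ B + ε' := by have := abs_sub_abs_le_abs_sub w22 s22; linarith
  have hs23 : |s23| ≤ B + ε' := by linarith
  have hw23 : |w23| ≤ B + ε' := by have := abs_sub_abs_le_abs_sub w23 s23; linarith
  have hs31 : |s31| ≤ B + ε' := by linarith
  have hw31 : |w31| ≤ B + ε' := by have := abs_sub_abs_le_abs_sub w31 s31; linarith
  have hs32 : |s32| ≤ B + ε' := by linarith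
  have hw32 : |w32| ≤ B + ε' := by have := abs_sub_abs_le_abs_sub w32 s32; linarith
  have hs33 : |s33| ≤ B + ε' := by linarith
  have hw33 : |w33| ≤ B + ε' := by have := abs_sub_abs_le_abs_sub w33 s33; linarith
  have t0 := prod3_diff (B + ε') ε hw11 hw22 hw33 hs11 hs22 hs33 d11 d22 d33
  have u0 := abs_le.mp t0
  have t1 := prod3_diff (B + ε') ε hw11 hw23 hw32 hs11 hs23 hs32 d11 d23 d32
  have u1 := abs_le.mp t1
  have t2 := prod3_diff (B + ε') ε hw12 hw21 hw33 hs12 hs21 hs33 d12 d21 d33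
  have u2 := abs_le.mp t2
  have t3 := prod3_diff (B + ε') ε hw12 hw23 hw31 hs12 hs23 hs31 d12 d23 d31
  have u3 := abs_le.mp t3
  have t4 := prod3_diff (B + ε') ε hw13 hw21 hw32 hs13 hs21 hs32 d13 d21 d32
  have u4 := abs_le.mp t4
  have t5 := prod3_diff (B + ε') ε hw13 hw22 hw31 hs13 hs22 hs31 d13 d22 d31
  have u5 := abs_le.mp t5
  have e : (w11 * w22 * w33 - w11 * w23 * w32 - w12 * w21 * w33 + w12 * w23 * w31 + w13 * w21 * w32 - w13 * w22 * w31) - (s11 * s22 * s33 - s11 * s23 * s32 - s12 * s21 * s33 + s12 * s23 * s31 + s13 * s21 * s32 - s13 * s22 * s31) =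
      (w11 * w22 * w33 - s11 * s22 * s33) - (w11 * w23 * w32 - s11 * s23 * s32)
      - (w12 * w21 * w33 - s12 * s21 * s33) + (w12 * w23 * w31 - s12 * s23 * s31)
      + (w13 * w21 * w32 - s13 * s21 * s32) - (w13 * w22 * w31 - s13 * s22 * s31) := by ring
  rw [e]
  refine abs_le.mpr ⟨by linarith [u0.1,u1.1,u2.1,u3.1,u4.1,u5.1,u0.2,u1.2,u2.2,u3.2,u4.2,u5.2], by linarith [u0.1,u1.1,u2.1,u3.1,u4.1,u5.1,u0.2,u1.2,u2.2,u3.2,u4.2,u5.2]⟩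

end ArakawaSupport

set_option maxHeartbeats 4000000 in
/-- Three-integral skew 4-tensor on the square lattice:
`F(h) = 4h²·(v¹𝒥(v²,v³) + v²𝒥(v³,v¹) + v³𝒥(v¹,v²)) + O(h⁴)`. -/
theorem three_integral_skew_four_tensor_stencil
    (v₁ v₂ v₃ : (Fin 2 → ℝ) → ℝ)
    (h₁ : ContDiff ℝ 4 v₁) (h₂ : ContDiff ℝ 4 v₂) (h₃ : ContDiff ℝ 4 v₃)
    (x : Fin 2 → ℝ) :
    ∃ C > (0 : ℝ), ∃ δ > (0 : ℝ), ∀ h : ℝ, 0 < |h| → |h| < δ →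
      |(D v₁ v₂ v₃ x ![1, 0] ![1, 1] ![0, 1] h +
        D v₁ v₂ v₃ x ![-1, 0] ![0, 1] ![-1, 1] h +
        D v₁ v₂ v₃ x ![-1, 0] ![-1, -1] ![0, -1] h +
        D v₁ v₂ v₃ x ![1, -1] ![1, 0] ![0, -1] h) -
        4 * h ^ 2 *
          (v₁ x * jac v₂ v₃ x + v₂ x * jac v₃ v₁ x + v₃ x * jac v₁ v₂ x)|
        ≤ C * |h| ^ 4 := by
  -- vector negation identities
  have ea : (![-1, 0] : Fin 2 → ℝ) = -![1, 0] := by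
    funext i; fin_cases i <;> simp
  have eb : (![0, -1] : Fin 2 → ℝ) = -![0, 1] := by
    funext i; fin_cases i <;> simp
  have ec : (![-1, -1] : Fin 2 → ℝ) = -![1, 1] := by
    funext i; fin_cases i <;> simp
  have ed : (![-1, 1] : Fin 2 → ℝ) = -![1, -1] := by
    funext i; fin_cases i <;> simp
  -- second/third derivative atoms
  obtain ⟨M1a, hM1a⟩ : ∃ m : ℝ, iteratedDeriv 2 (fun t : ℝ => v₁ (x + t • ![1, 0])) 0 = 2 * m :=
    ⟨iteratedDeriv 2 (fun t : ℝ => v₁ (x + t • ![1, 0])) 0 / 2, by ring⟩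
  obtain ⟨N1a, hN1a⟩ : ∃ m : ℝ, iteratedDeriv 3 (fun t : ℝ => v₁ (x + t • ![1, 0])) 0 = 6 * m :=
    ⟨iteratedDeriv 3 (fun t : ℝ => v₁ (x + t • ![1, 0])) 0 / 6, by ring⟩
  obtain ⟨M1b, hM1b⟩ : ∃ m : ℝ, iteratedDeriv 2 (fun t : ℝ => v₁ (x + t • ![0, 1])) 0 = 2 * m :=
    ⟨iteratedDeriv 2 (fun t : ℝ => v₁ (x + t • ![0, 1])) 0 / 2, by ring⟩
  obtain ⟨N1b, hN1b⟩ : ∃ m : ℝ, iteratedDeriv 3 (fun t : ℝ => v₁ (x + t • ![0, 1])) 0 = 6 * m :=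
    ⟨iteratedDeriv 3 (fun t : ℝ => v₁ (x + t • ![0, 1])) 0 / 6, by ring⟩
  obtain ⟨M1c, hM1c⟩ : ∃ m : ℝ, iteratedDeriv 2 (fun t : ℝ => v₁ (x + t • ![1, 1])) 0 = 2 * m :=
    ⟨iteratedDeriv 2 (fun t : ℝ => v₁ (x + t • ![1, 1])) 0 / 2, by ring⟩
  obtain ⟨N1c, hN1c⟩ : ∃ m : ℝ, iteratedDeriv 3 (fun t : ℝ => v₁ (x + t • ![1, 1])) 0 = 6 * m :=
    ⟨iteratedDeriv 3 (fun t : ℝ => v₁ (x + t • ![1, 1])) 0 / 6, by ring⟩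
  obtain ⟨M1d, hM1d⟩ : ∃ m : ℝ, iteratedDeriv 2 (fun t : ℝ => v₁ (x + t • ![1, -1])) 0 = 2 * m :=
    ⟨iteratedDeriv 2 (fun t : ℝ => v₁ (x + t • ![1, -1])) 0 / 2, by ring⟩
  obtain ⟨N1d, hN1d⟩ : ∃ m : ℝ, iteratedDeriv 3 (fun t : ℝ => v₁ (x + t • ![1, -1])) 0 = 6 * m :=
    ⟨iteratedDeriv 3 (fun t : ℝ => v₁ (x + t • ![1, -1])) 0 / 6, by ring⟩
  obtain ⟨M2a, hM2a⟩ : ∃ m : ℝ, iteratedDeriv 2 (fun t : ℝ => v₂ (x + t • ![1, 0])) 0 = 2 * m :=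
    ⟨iteratedDeriv 2 (fun t : ℝ => v₂ (x + t • ![1, 0])) 0 / 2, by ring⟩
  obtain ⟨N2a, hN2a⟩ : ∃ m : ℝ, iteratedDeriv 3 (fun t : ℝ => v₂ (x + t • ![1, 0])) 0 = 6 * m :=
    ⟨iteratedDeriv 3 (fun t : ℝ => v₂ (x + t • ![1, 0])) 0 / 6, by ring⟩
  obtain ⟨M2b, hM2b⟩ : ∃ m : ℝ, iteratedDeriv 2 (fun t : ℝ => v₂ (x + t • ![0, 1])) 0 = 2 * m :=
    ⟨iteratedDeriv 2 (fun t : ℝ => v₂ (x + t • ![0, 1])) 0 / 2, by ring⟩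
  obtain ⟨N2b, hN2b⟩ : ∃ m : ℝ, iteratedDeriv 3 (fun t : ℝ => v₂ (x + t • ![0, 1])) 0 = 6 * m :=
    ⟨iteratedDeriv 3 (fun t : ℝ => v₂ (x + t • ![0, 1])) 0 / 6, by ring⟩
  obtain ⟨M2c, hM2c⟩ : ∃ m : ℝ, iteratedDeriv 2 (fun t : ℝ => v₂ (x + t • ![1, 1])) 0 = 2 * m :=
    ⟨iteratedDeriv 2 (fun t : ℝ => v₂ (x + t • ![1, 1])) 0 / 2, by ring⟩
  obtain ⟨N2c, hN2c⟩ : ∃ m : ℝ, iteratedDeriv 3 (fun t : ℝ => v₂ (x + t • ![1, 1])) 0 = 6 * m :=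
    ⟨iteratedDeriv 3 (fun t : ℝ => v₂ (x + t • ![1, 1])) 0 / 6, by ring⟩
  obtain ⟨M2d, hM2d⟩ : ∃ m : ℝ, iteratedDeriv 2 (fun t : ℝ => v₂ (x + t • ![1, -1])) 0 = 2 * m :=
    ⟨iteratedDeriv 2 (fun t : ℝ => v₂ (x + t • ![1, -1])) 0 / 2, by ring⟩
  obtain ⟨N2d, hN2d⟩ : ∃ m : ℝ, iteratedDeriv 3 (fun t : ℝ => v₂ (x + t • ![1, -1])) 0 = 6 * m :=
    ⟨iteratedDeriv 3 (fun t : ℝ => v₂ (x + t • ![1, -1])) 0 / 6, by ring⟩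
  obtain ⟨M3a, hM3a⟩ : ∃ m : ℝ, iteratedDeriv 2 (fun t : ℝ => v₃ (x + t • ![1, 0])) 0 = 2 * m :=
    ⟨iteratedDeriv 2 (fun t : ℝ => v₃ (x + t • ![1, 0])) 0 / 2, by ring⟩
  obtain ⟨N3a, hN3a⟩ : ∃ m : ℝ, iteratedDeriv 3 (fun t : ℝ => v₃ (x + t • ![1, 0])) 0 = 6 * m :=
    ⟨iteratedDeriv 3 (fun t : ℝ => v₃ (x + t • ![1, 0])) 0 / 6, by ring⟩
  obtain ⟨M3b, hM3b⟩ : ∃ m : ℝ, iteratedDeriv 2 (fun t : ℝ => v₃ (x + t • ![0, 1])) 0 = 2 * m :=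
    ⟨iteratedDeriv 2 (fun t : ℝ => v₃ (x + t • ![0, 1])) 0 / 2, by ring⟩
  obtain ⟨N3b, hN3b⟩ : ∃ m : ℝ, iteratedDeriv 3 (fun t : ℝ => v₃ (x + t • ![0, 1])) 0 = 6 * m :=
    ⟨iteratedDeriv 3 (fun t : ℝ => v₃ (x + t • ![0, 1])) 0 / 6, by ring⟩
  obtain ⟨M3c, hM3c⟩ : ∃ m : ℝ, iteratedDeriv 2 (fun t : ℝ => v₃ (x + t • ![1, 1])) 0 = 2 * m :=
    ⟨iteratedDeriv 2 (fun t : ℝ => v₃ (x + t • ![1, 1])) 0 / 2, by ring⟩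
  obtain ⟨N3c, hN3c⟩ : ∃ m : ℝ, iteratedDeriv 3 (fun t : ℝ => v₃ (x + t • ![1, 1])) 0 = 6 * m :=
    ⟨iteratedDeriv 3 (fun t : ℝ => v₃ (x + t • ![1, 1])) 0 / 6, by ring⟩
  obtain ⟨M3d, hM3d⟩ : ∃ m : ℝ, iteratedDeriv 2 (fun t : ℝ => v₃ (x + t • ![1, -1])) 0 = 2 * m :=
    ⟨iteratedDeriv 2 (fun t : ℝ => v₃ (x + t • ![1, -1])) 0 / 2, by ring⟩
  obtain ⟨N3d, hN3d⟩ : ∃ m : ℝ, iteratedDeriv 3 (fun t : ℝ => v₃ (x + t • ![1, -1])) 0 = 6 * m :=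
    ⟨iteratedDeriv 3 (fun t : ℝ => v₃ (x + t • ![1, -1])) 0 / 6, by ring⟩
  -- Taylor expansions for all 24 function/direction pairs
  obtain ⟨C1a, hC1a, H1a⟩ :=
    expand' v₁ h₁ x ![1, 0] (pd 0 v₁ x) M1a N1a
      (by simp only [Matrix.cons_val_zero, Matrix.cons_val_one, Matrix.head_cons]; ring) hM1a hN1a
  obtain ⟨C1b, hC1b, H1b⟩ :=
    expand' v₁ h₁ x ![0, 1] (pd 1 v₁ x) M1b N1b
      (by simp only [Matrix.cons_val_zero, Matrix.cons_val_one, Matrix.head_cons]; ring) hM1b hN1b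
  obtain ⟨C1c, hC1c, H1c⟩ :=
    expand' v₁ h₁ x ![1, 1] ((pd 0 v₁ x + pd 1 v₁ x)) M1c N1c
      (by simp only [Matrix.cons_val_zero, Matrix.cons_val_one, Matrix.head_cons]; ring) hM1c hN1c
  obtain ⟨C1d, hC1d, H1d⟩ :=
    expand' v₁ h₁ x ![1, -1] ((pd 0 v₁ x - pd 1 v₁ x)) M1d N1d
      (by simp only [Matrix.cons_val_zero, Matrix.cons_val_one, Matrix.head_cons]; ring) hM1d hN1d
  obtain ⟨C1na, hC1na, H1na⟩ :=
    expand' v₁ h₁ x ![-1, 0] (-pd 0 v₁ x) M1a (-N1a)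
      (by simp only [Matrix.cons_val_zero, Matrix.cons_val_one, Matrix.head_cons]; ring) (by rw [ea, iter_neg v₁ x ![1, 0] 2, hM1a]; ring) (by rw [ea, iter_neg v₁ x ![1, 0] 3, hN1a]; ring)
  obtain ⟨C1nb, hC1nb, H1nb⟩ :=
    expand' v₁ h₁ x ![0, -1] (-pd 1 v₁ x) M1b (-N1b)
      (by simp only [Matrix.cons_val_zero, Matrix.cons_val_one, Matrix.head_cons]; ring) (by rw [eb, iter_neg v₁ x ![0, 1] 2, hM1b]; ring) (by rw [eb, iter_neg v₁ x ![0, 1] 3, hN1b]; ring)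
  obtain ⟨C1nc, hC1nc, H1nc⟩ :=
    expand' v₁ h₁ x ![-1, -1] (-(pd 0 v₁ x + pd 1 v₁ x)) M1c (-N1c)
      (by simp only [Matrix.cons_val_zero, Matrix.cons_val_one, Matrix.head_cons]; ring) (by rw [ec, iter_neg v₁ x ![1, 1] 2, hM1c]; ring) (by rw [ec, iter_neg v₁ x ![1, 1] 3, hN1c]; ring)
  obtain ⟨C1nd, hC1nd, H1nd⟩ :=
    expand' v₁ h₁ x ![-1, 1] (-(pd 0 v₁ x - pd 1 v₁ x)) M1d (-N1d)
      (by simp only [Matrix.cons_val_zero, Matrix.cons_val_one, Matrix.head_cons]; ring) (by rw [ed, iter_neg v₁ x ![1, -1] 2, hM1d]; ring) (by rw [ed, iter_neg v₁ x ![1, -1] 3, hN1d]; ring)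
  obtain ⟨C2a, hC2a, H2a⟩ :=
    expand' v₂ h₂ x ![1, 0] (pd 0 v₂ x) M2a N2a
      (by simp only [Matrix.cons_val_zero, Matrix.cons_val_one, Matrix.head_cons]; ring) hM2a hN2a
  obtain ⟨C2b, hC2b, H2b⟩ :=
    expand' v₂ h₂ x ![0, 1] (pd 1 v₂ x) M2b N2b
      (by simp only [Matrix.cons_val_zero, Matrix.cons_val_one, Matrix.head_cons]; ring) hM2b hN2b
  obtain ⟨C2c, hC2c, H2c⟩ :=
    expand' v₂ h₂ x ![1, 1] ((pd 0 v₂ x + pd 1 v₂ x)) M2c N2c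
      (by simp only [Matrix.cons_val_zero, Matrix.cons_val_one, Matrix.head_cons]; ring) hM2c hN2c
  obtain ⟨C2d, hC2d, H2d⟩ :=
    expand' v₂ h₂ x ![1, -1] ((pd 0 v₂ x - pd 1 v₂ x)) M2d N2d
      (by simp only [Matrix.cons_val_zero, Matrix.cons_val_one, Matrix.head_cons]; ring) hM2d hN2d
  obtain ⟨C2na, hC2na, H2na⟩ :=
    expand' v₂ h₂ x ![-1, 0] (-pd 0 v₂ x) M2a (-N2a)
      (by simp only [Matrix.cons_val_zero, Matrix.cons_val_one, Matrix.head_cons]; ring) (by rw [ea, iter_neg v₂ x ![1, 0] 2, hM2a]; ring) (by rw [ea, iter_neg v₂ x ![1, 0] 3, hN2a]; ring)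
  obtain ⟨C2nb, hC2nb, H2nb⟩ :=
    expand' v₂ h₂ x ![0, -1] (-pd 1 v₂ x) M2b (-N2b)
      (by simp only [Matrix.cons_val_zero, Matrix.cons_val_one, Matrix.head_cons]; ring) (by rw [eb, iter_neg v₂ x ![0, 1] 2, hM2b]; ring) (by rw [eb, iter_neg v₂ x ![0, 1] 3, hN2b]; ring)
  obtain ⟨C2nc, hC2nc, H2nc⟩ :=
    expand' v₂ h₂ x ![-1, -1] (-(pd 0 v₂ x + pd 1 v₂ x)) M2c (-N2c)
      (by simp only [Matrix.cons_val_zero, Matrix.cons_val_one, Matrix.head_cons]; ring) (by rw [ec, iter_neg v₂ x ![1, 1] 2, hM2c]; ring) (by rw [ec, iter_neg v₂ x ![1, 1] 3, hN2c]; ring)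
  obtain ⟨C2nd, hC2nd, H2nd⟩ :=
    expand' v₂ h₂ x ![-1, 1] (-(pd 0 v₂ x - pd 1 v₂ x)) M2d (-N2d)
      (by simp only [Matrix.cons_val_zero, Matrix.cons_val_one, Matrix.head_cons]; ring) (by rw [ed, iter_neg v₂ x ![1, -1] 2, hM2d]; ring) (by rw [ed, iter_neg v₂ x ![1, -1] 3, hN2d]; ring)
  obtain ⟨C3a, hC3a, H3a⟩ :=
    expand' v₃ h₃ x ![1, 0] (pd 0 v₃ x) M3a N3a
      (by simp only [Matrix.cons_val_zero, Matrix.cons_val_one, Matrix.head_cons]; ring) hM3a hN3a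
  obtain ⟨C3b, hC3b, H3b⟩ :=
    expand' v₃ h₃ x ![0, 1] (pd 1 v₃ x) M3b N3b
      (by simp only [Matrix.cons_val_zero, Matrix.cons_val_one, Matrix.head_cons]; ring) hM3b hN3b
  obtain ⟨C3c, hC3c, H3c⟩ :=
    expand' v₃ h₃ x ![1, 1] ((pd 0 v₃ x + pd 1 v₃ x)) M3c N3c
      (by simp only [Matrix.cons_val_zero, Matrix.cons_val_one, Matrix.head_cons]; ring) hM3c hN3c
  obtain ⟨C3d, hC3d, H3d⟩ :=
    expand' v₃ h₃ x ![1, -1] ((pd 0 v₃ x - pd 1 v₃ x)) M3d N3d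
      (by simp only [Matrix.cons_val_zero, Matrix.cons_val_one, Matrix.head_cons]; ring) hM3d hN3d
  obtain ⟨C3na, hC3na, H3na⟩ :=
    expand' v₃ h₃ x ![-1, 0] (-pd 0 v₃ x) M3a (-N3a)
      (by simp only [Matrix.cons_val_zero, Matrix.cons_val_one, Matrix.head_cons]; ring) (by rw [ea, iter_neg v₃ x ![1, 0] 2, hM3a]; ring) (by rw [ea, iter_neg v₃ x ![1, 0] 3, hN3a]; ring)
  obtain ⟨C3nb, hC3nb, H3nb⟩ :=
    expand' v₃ h₃ x ![0, -1] (-pd 1 v₃ x) M3b (-N3b)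
      (by simp only [Matrix.cons_val_zero, Matrix.cons_val_one, Matrix.head_cons]; ring) (by rw [eb, iter_neg v₃ x ![0, 1] 2, hM3b]; ring) (by rw [eb, iter_neg v₃ x ![0, 1] 3, hN3b]; ring)
  obtain ⟨C3nc, hC3nc, H3nc⟩ :=
    expand' v₃ h₃ x ![-1, -1] (-(pd 0 v₃ x + pd 1 v₃ x)) M3c (-N3c)
      (by simp only [Matrix.cons_val_zero, Matrix.cons_val_one, Matrix.head_cons]; ring) (by rw [ec, iter_neg v₃ x ![1, 1] 2, hM3c]; ring) (by rw [ec, iter_neg v₃ x ![1, 1] 3, hN3c]; ring)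
  obtain ⟨C3nd, hC3nd, H3nd⟩ :=
    expand' v₃ h₃ x ![-1, 1] (-(pd 0 v₃ x - pd 1 v₃ x)) M3d (-N3d)
      (by simp only [Matrix.cons_val_zero, Matrix.cons_val_one, Matrix.head_cons]; ring) (by rw [ed, iter_neg v₃ x ![1, -1] 2, hM3d]; ring) (by rw [ed, iter_neg v₃ x ![1, -1] 3, hN3d]; ring)
  -- constants
  obtain ⟨CE, hCE⟩ : ∃ c : ℝ, c = C1a + C1b + C1c + C1d + C1na + C1nb + C1nc + C1nd + C2a + C2b + C2c + C2d + C2na + C2nb + C2nc + C2nd + C3a + C3b + C3c + C3d + C3na + C3nb + C3nc + C3nd := ⟨_, rfl⟩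
  have hCEpos : 0 < CE := by rw [hCE]; linarith
  obtain ⟨B0, hB0⟩ : ∃ c : ℝ, c = 1 + (|v₁ x| + |pd 0 v₁ x| + |pd 1 v₁ x| + |pd 0 v₁ x + pd 1 v₁ x| + |pd 0 v₁ x - pd 1 v₁ x| + |M1a| + |M1b| + |M1c| + |M1d| + |N1a| + |N1b| + |N1c| + |N1d| + |v₂ x| + |pd 0 v₂ x| + |pd 1 v₂ x| + |pd 0 v₂ x + pd 1 v₂ x| + |pd 0 v₂ x - pd 1 v₂ x| + |M2a| + |M2b| + |M2c| + |M2d| + |N2a| + |N2b| + |N2c| + |N2d| + |v₃ x| + |pd 0 v₃ x| + |pd 1 v₃ x| + |pd 0 v₃ x + pd 1 v₃ x| + |pd 0 v₃ x - pd 1 v₃ x| + |M3a| + |M3b| + |M3c| + |M3d| + |N3a| + |N3b| + |N3c| + |N3d|) := ⟨_, rfl⟩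
  have nn0 : (0:ℝ) ≤ |v₁ x| := abs_nonneg _
  have nn1 : (0:ℝ) ≤ |pd 0 v₁ x| := abs_nonneg _
  have nn2 : (0:ℝ) ≤ |pd 1 v₁ x| := abs_nonneg _
  have nn3 : (0:ℝ) ≤ |pd 0 v₁ x + pd 1 v₁ x| := abs_nonneg _
  have nn4 : (0:ℝ) ≤ |pd 0 v₁ x - pd 1 v₁ x| := abs_nonneg _
  have nn5 : (0:ℝ) ≤ |M1a| := abs_nonneg _
  have nn6 : (0:ℝ) ≤ |M1b| := abs_nonneg _
  have nn7 : (0:ℝ) ≤ |M1c| := abs_nonneg _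
  have nn8 : (0:ℝ) ≤ |M1d| := abs_nonneg _
  have nn9 : (0:ℝ) ≤ |N1a| := abs_nonneg _
  have nn10 : (0:ℝ) ≤ |N1b| := abs_nonneg _
  have nn11 : (0:ℝ) ≤ |N1c| := abs_nonneg _
  have nn12 : (0:ℝ) ≤ |N1d| := abs_nonneg _
  have nn13 : (0:ℝ) ≤ |v₂ x| := abs_nonneg _
  have nn14 : (0:ℝ) ≤ |pd 0 v₂ x| := abs_nonneg _
  have nn15 : (0:ℝ) ≤ |pd 1 v₂ x| := abs_nonneg _
  have nn16 : (0:ℝ) ≤ |pd 0 v₂ x + pd 1 v₂ x| := abs_nonneg _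
  have nn17 : (0:ℝ) ≤ |pd 0 v₂ x - pd 1 v₂ x| := abs_nonneg _
  have nn18 : (0:ℝ) ≤ |M2a| := abs_nonneg _
  have nn19 : (0:ℝ) ≤ |M2b| := abs_nonneg _
  have nn20 : (0:ℝ) ≤ |M2c| := abs_nonneg _
  have nn21 : (0:ℝ) ≤ |M2d| := abs_nonneg _
  have nn22 : (0:ℝ) ≤ |N2a| := abs_nonneg _
  have nn23 : (0:ℝ) ≤ |N2b| := abs_nonneg _
  have nn24 : (0:ℝ) ≤ |N2c| := abs_nonneg _
  have nn25 : (0:ℝ) ≤ |N2d| := abs_nonneg _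
  have nn26 : (0:ℝ) ≤ |v₃ x| := abs_nonneg _
  have nn27 : (0:ℝ) ≤ |pd 0 v₃ x| := abs_nonneg _
  have nn28 : (0:ℝ) ≤ |pd 1 v₃ x| := abs_nonneg _
  have nn29 : (0:ℝ) ≤ |pd 0 v₃ x + pd 1 v₃ x| := abs_nonneg _
  have nn30 : (0:ℝ) ≤ |pd 0 v₃ x - pd 1 v₃ x| := abs_nonneg _
  have nn31 : (0:ℝ) ≤ |M3a| := abs_nonneg _
  have nn32 : (0:ℝ) ≤ |M3b| := abs_nonneg _
  have nn33 : (0:ℝ) ≤ |M3c| := abs_nonneg _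
  have nn34 : (0:ℝ) ≤ |M3d| := abs_nonneg _
  have nn35 : (0:ℝ) ≤ |N3a| := abs_nonneg _
  have nn36 : (0:ℝ) ≤ |N3b| := abs_nonneg _
  have nn37 : (0:ℝ) ≤ |N3c| := abs_nonneg _
  have nn38 : (0:ℝ) ≤ |N3d| := abs_nonneg _
  have hB0nn : (0:ℝ) ≤ B0 := by rw [hB0]; linarith
  obtain ⟨q0, hq0⟩ : ∃ c : ℝ, c =
      (2)*M1a*M2c*v₃ x + (-2)*M1a*M2d*v₃ x + (-2)*M1a*M3c*v₂ x + (2)*M1a*M3d*v₂ x + (4)*M1a*pd 0 v₂ x*pd 1 v₃ x + (-4)*M1a*pd 0 v₃ x*pd 1 v₂ x + (-2)*M1b*M2c*v₃ x + (2)*M1b*M2d*v₃ x + (2)*M1b*M3c*v₂ x + (-2)*M1b*M3d*v₂ x + (4)*M1b*pd 0 v₂ x*pd 1 v₃ x + (-4)*M1b*pd 0 v₃ x*pd 1 v₂ x + (-2)*M1c*M2a*v₃ x + (2)*M1c*M2b*v₃ x + (2)*M1c*M3a*v₂ x + (-2)*M1c*M3b*v₂ x + (-2)*M1c*pd 0 v₂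 x*pd 1 v₃ x + (2)*M1c*pd 0 v₃ x*pd 1 v₂ x + (2)*M1d*M2a*v₃ x + (-2)*M1d*M2b*v₃ x + (-2)*M1d*M3a*v₂ x + (2)*M1d*M3b*v₂ x + (-2)*M1d*pd 0 v₂ x*pd 1 v₃ x + (2)*M1d*pd 0 v₃ x*pd 1 v₂ x + (2)*M2a*M3c*v₁ x + (-2)*M2a*M3d*v₁ x + (-4)*M2a*pd 0 v₁ x*pd 1 v₃ x + (4)*M2a*pd 0 v₃ x*pd 1 v₁ x + (-2)*M2b*M3c*v₁ x + (2)*M2b*M3d*v₁ x + (-4)*M2b*pd 0 v₁ x*pd 1 v₃ x + (4)*M2b*pd 0 v₃ x*pd 1 v₁ x + (-2)*M2c*M3a*v₁ x + (2)*M2c*M3b*v₁ x + (2)*M2c*pd 0 v₁ x*pd 1 v₃ x + (-2)*M2c*pd 0 v₃ x*pd 1 v₁ x + (2)*M2d*M3a*v₁ x + (-2)*M2d*M3b*v₁ x + (2)*M2d*pd 0 v₁ x*pd 1 v₃ x + (-2)*M2d*pd 0 v₃ x*pd 1 v₁ x + (4)*M3a*pd 0 v₁ x*pd 1 v₂ x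 + (-4)*M3a*pd 0 v₂ x*pd 1 v₁ x + (4)*M3b*pd 0 v₁ x*pd 1 v₂ x + (-4)*M3b*pd 0 v₂ x*pd 1 v₁ x + (-2)*M3c*pd 0 v₁ x*pd 1 v₂ x + (2)*M3c*pd 0 v₂ x*pd 1 v₁ x + (-2)*M3d*pd 0 v₁ x*pd 1 v₂ x + (2)*M3d*pd 0 v₂ x*pd 1 v₁ x + (-2)*N1c*pd 0 v₂ x*v₃ x + (2)*N1c*pd 0 v₃ x*v₂ x + (2)*N1c*pd 1 v₂ x*v₃ x + (-2)*N1c*pd 1 v₃ x*v₂ x + (2)*N1d*pd 0 v₂ x*v₃ x + (-2)*N1d*pd 0 v₃ x*v₂ x + (2)*N1d*pd 1 v₂ x*v₃ x + (-2)*N1d*pd 1 v₃ x*v₂ x + (2)*N2c*pd 0 v₁ x*v₃ x + (-2)*N2c*pd 0 v₃ x*v₁ x + (-2)*N2c*pd 1 v₁ x*v₃ x + (2)*N2c*pd 1 v₃ x*v₁ x + (-2)*N2d*pd 0 v₁ x*v₃ x + (2)*N2d*pd 0 v₃ x*v₁ x + (-2)*N2d*pd 1 v₁ x*v₃ x + (2)*N2d*pd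 1 v₃ x*v₁ x + (-2)*N3c*pd 0 v₁ x*v₂ x + (2)*N3c*pd 0 v₂ x*v₁ x + (2)*N3c*pd 1 v₁ x*v₂ x + (-2)*N3c*pd 1 v₂ x*v₁ x + (2)*N3d*pd 0 v₁ x*v₂ x + (-2)*N3d*pd 0 v₂ x*v₁ x + (2)*N3d*pd 1 v₁ x*v₂ x + (-2)*N3d*pd 1 v₂ x*v₁ x := ⟨_, rfl⟩
  obtain ⟨q2, hq2⟩ : ∃ c : ℝ, c =
      (-2)*M1a*M2b*M3c + (2)*M1a*M2b*M3d + (2)*M1a*M2c*M3b + (-2)*M1a*M2d*M3b + (-4)*M1a*N2b*pd 0 v₃ x + (2)*M1a*N2c*pd 1 v₃ x + (2)*M1a*N2d*pd 1 v₃ x + (4)*M1a*N3b*pd 0 v₂ x + (-2)*M1a*N3c*pd 1 v₂ x + (-2)*M1a*N3d*pd 1 v₂ x + (2)*M1b*M2a*M3c + (-2)*M1b*M2a*M3d + (-2)*M1b*M2c*M3a + (2)*M1b*M2d*M3a + (4)*M1b*N2a*pd 1 v₃ x + (-2)*M1b*N2c*pd 0 v₃ x + (2)*M1b*N2d*pd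 0 v₃ x + (-4)*M1b*N3a*pd 1 v₂ x + (2)*M1b*N3c*pd 0 v₂ x + (-2)*M1b*N3d*pd 0 v₂ x + (-2)*M1c*M2a*M3b + (2)*M1c*M2b*M3a + (-2)*M1c*N2a*pd 1 v₃ x + (2)*M1c*N2b*pd 0 v₃ x + (2)*M1c*N3a*pd 1 v₂ x + (-2)*M1c*N3b*pd 0 v₂ x + (2)*M1d*M2a*M3b + (-2)*M1d*M2b*M3a + (-2)*M1d*N2a*pd 1 v₃ x + (2)*M1d*N2b*pd 0 v₃ x + (2)*M1d*N3a*pd 1 v₂ x + (-2)*M1d*N3b*pd 0 v₂ x + (4)*M2a*N1b*pd 0 v₃ x + (-2)*M2a*N1c*pd 1 v₃ x + (-2)*M2a*N1d*pd 1 v₃ x + (-4)*M2a*N3b*pd 0 v₁ x + (2)*M2a*N3c*pd 1 v₁ x + (2)*M2a*N3d*pd 1 v₁ x + (-4)*M2b*N1a*pd 1 v₃ x + (2)*M2b*N1c*pd 0 v₃ x + (-2)*M2b*N1d*pd 0 v₃ x + (4)*M2b*N3a*pd 1 v₁ x + (-2)*M2b*N3c*pd 0 v₁ x + (2)*M2b*N3d*pd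 0 v₁ x + (2)*M2c*N1a*pd 1 v₃ x + (-2)*M2c*N1b*pd 0 v₃ x + (-2)*M2c*N3a*pd 1 v₁ x + (2)*M2c*N3b*pd 0 v₁ x + (2)*M2d*N1a*pd 1 v₃ x + (-2)*M2d*N1b*pd 0 v₃ x + (-2)*M2d*N3a*pd 1 v₁ x + (2)*M2d*N3b*pd 0 v₁ x + (-4)*M3a*N1b*pd 0 v₂ x + (2)*M3a*N1c*pd 1 v₂ x + (2)*M3a*N1d*pd 1 v₂ x + (4)*M3a*N2b*pd 0 v₁ x + (-2)*M3a*N2c*pd 1 v₁ x + (-2)*M3a*N2d*pd 1 v₁ x + (4)*M3b*N1a*pd 1 v₂ x + (-2)*M3b*N1c*pd 0 v₂ x + (2)*M3b*N1d*pd 0 v₂ x + (-4)*M3b*N2a*pd 1 v₁ x + (2)*M3b*N2c*pd 0 v₁ x + (-2)*M3b*N2d*pd 0 v₁ x + (-2)*M3c*N1a*pd 1 v₂ x + (2)*M3c*N1b*pd 0 v₂ x + (2)*M3c*N2a*pd 1 v₁ x + (-2)*M3c*N2b*pd 0 v₁ x + (-2)*M3d*N1a*pd 1 v₂ x + (2)*M3d*N1b*pd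 0 v₂ x + (2)*M3d*N2a*pd 1 v₁ x + (-2)*M3d*N2b*pd 0 v₁ x + (-4)*N1a*N2b*v₃ x + (2)*N1a*N2c*v₃ x + (-2)*N1a*N2d*v₃ x + (4)*N1a*N3b*v₂ x + (-2)*N1a*N3c*v₂ x + (2)*N1a*N3d*v₂ x + (4)*N1b*N2a*v₃ x + (-2)*N1b*N2c*v₃ x + (-2)*N1b*N2d*v₃ x + (-4)*N1b*N3a*v₂ x + (2)*N1b*N3c*v₂ x + (2)*N1b*N3d*v₂ x + (-2)*N1c*N2a*v₃ x + (2)*N1c*N2b*v₃ x + (2)*N1c*N3a*v₂ x + (-2)*N1c*N3b*v₂ x + (2)*N1d*N2a*v₃ x + (2)*N1d*N2b*v₃ x + (-2)*N1d*N3a*v₂ x + (-2)*N1d*N3b*v₂ x + (-4)*N2a*N3b*v₁ x + (2)*N2a*N3c*v₁ x + (-2)*N2a*N3d*v₁ x + (4)*N2b*N3a*v₁ x + (-2)*N2b*N3c*v₁ x + (-2)*N2b*N3d*v₁ x + (-2)*N2c*N3a*v₁ x + (2)*N2c*N3b*v₁ x + (2)*N2d*N3a*v₁ x + (2)*N2d*N3b*v₁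 x := ⟨_, rfl⟩
  obtain ⟨q4, hq4⟩ : ∃ c : ℝ, c =
      (-2)*M1a*N2b*N3c + (-2)*M1a*N2b*N3d + (2)*M1a*N2c*N3b + (2)*M1a*N2d*N3b + (2)*M1b*N2a*N3c + (-2)*M1b*N2a*N3d + (-2)*M1b*N2c*N3a + (2)*M1b*N2d*N3a + (-2)*M1c*N2a*N3b + (2)*M1c*N2b*N3a + (-2)*M1d*N2a*N3b + (2)*M1d*N2b*N3a + (2)*M2a*N1b*N3c + (2)*M2a*N1b*N3d + (-2)*M2a*N1c*N3b + (-2)*M2a*N1d*N3b + (-2)*M2b*N1a*N3c + (2)*M2b*N1a*N3d + (2)*M2b*N1c*N3a + (-2)*M2b*N1d*N3a + (2)*M2c*N1a*N3b + (-2)*M2c*N1b*N3a + (2)*M2d*N1a*N3b + (-2)*M2d*N1b*N3a + (-2)*M3a*N1b*N2c + (-2)*M3a*N1b*N2d + (2)*M3a*N1c*N2b + (2)*M3a*N1d*N2b + (2)*M3b*N1a*N2c + (-2)*M3b*N1a*N2d + (-2)*M3b*N1c*N2a + (2)*M3b*N1d*N2a + (-2)*M3c*N1a*N2b + (2)*M3c*N1b*N2a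 + (-2)*M3d*N1a*N2b + (2)*M3d*N1b*N2a := ⟨_, rfl⟩
  obtain ⟨CQ, hCQ⟩ : ∃ c : ℝ, c = |q0| + |q2| + |q4| := ⟨_, rfl⟩
  have hCQnn : (0:ℝ) ≤ CQ := by rw [hCQ]; positivity
  have hB2All : ∀ h : ℝ, |h| ≤ 1 → |((v₁ x + (pd 0 v₁ x) * h + M1a * h ^ 2 + N1a * h ^ 3) * (v₂ x + ((pd 0 v₂ x + pd 1 v₂ x)) * h + M2c * h ^ 2 + N2c * h ^ 3) * (v₃ x + (pd 1 v₃ x) * h + M3b * h ^ 2 + N3b * h ^ 3) -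
      (v₁ x + (pd 0 v₁ x) * h + M1a * h ^ 2 + N1a * h ^ 3) * (v₂ x + (pd 1 v₂ x) * h + M2b * h ^ 2 + N2b * h ^ 3) * (v₃ x + ((pd 0 v₃ x + pd 1 v₃ x)) * h + M3c * h ^ 2 + N3c * h ^ 3) -
      (v₁ x + ((pd 0 v₁ x + pd 1 v₁ x)) * h + M1c * h ^ 2 + N1c * h ^ 3) * (v₂ x + (pd 0 v₂ x) * h + M2a * h ^ 2 + N2a * h ^ 3) * (v₃ x + (pd 1 v₃ x) * h + M3b * h ^ 2 + N3b * h ^ 3) +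
      (v₁ x + ((pd 0 v₁ x + pd 1 v₁ x)) * h + M1c * h ^ 2 + N1c * h ^ 3) * (v₂ x + (pd 1 v₂ x) * h + M2b * h ^ 2 + N2b * h ^ 3) * (v₃ x + (pd 0 v₃ x) * h + M3a * h ^ 2 + N3a * h ^ 3) +
      (v₁ x + (pd 1 v₁ x) * h + M1b * h ^ 2 + N1b * h ^ 3) * (v₂ x + (pd 0 v₂ x) * h + M2a * h ^ 2 + N2a * h ^ 3) * (v₃ x + ((pd 0 v₃ x + pd 1 v₃ x)) * h + M3c * h ^ 2 + N3c * h ^ 3) -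
      (v₁ x + (pd 1 v₁ x) * h + M1b * h ^ 2 + N1b * h ^ 3) * (v₂ x + ((pd 0 v₂ x + pd 1 v₂ x)) * h + M2c * h ^ 2 + N2c * h ^ 3) * (v₃ x + (pd 0 v₃ x) * h + M3a * h ^ 2 + N3a * h ^ 3)) +
      ((v₁ x + (-pd 0 v₁ x) * h + M1a * h ^ 2 + (-N1a) * h ^ 3) * (v₂ x + (pd 1 v₂ x) * h + M2b * h ^ 2 + N2b * h ^ 3) * (v₃ x + (-(pd 0 v₃ x - pd 1 v₃ x)) * h + M3d * h ^ 2 + (-N3d) * h ^ 3) -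
      (v₁ x + (-pd 0 v₁ x) * h + M1a * h ^ 2 + (-N1a) * h ^ 3) * (v₂ x + (-(pd 0 v₂ x - pd 1 v₂ x)) * h + M2d * h ^ 2 + (-N2d) * h ^ 3) * (v₃ x + (pd 1 v₃ x) * h + M3b * h ^ 2 + N3b * h ^ 3) -
      (v₁ x + (pd 1 v₁ x) * h + M1b * h ^ 2 + N1b * h ^ 3) * (v₂ x + (-pd 0 v₂ x) * h + M2a * h ^ 2 + (-N2a) * h ^ 3) * (v₃ x + (-(pd 0 v₃ x - pd 1 v₃ x)) * h + M3d * h ^ 2 + (-N3d) * h ^ 3) +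
      (v₁ x + (pd 1 v₁ x) * h + M1b * h ^ 2 + N1b * h ^ 3) * (v₂ x + (-(pd 0 v₂ x - pd 1 v₂ x)) * h + M2d * h ^ 2 + (-N2d) * h ^ 3) * (v₃ x + (-pd 0 v₃ x) * h + M3a * h ^ 2 + (-N3a) * h ^ 3) +
      (v₁ x + (-(pd 0 v₁ x - pd 1 v₁ x)) * h + M1d * h ^ 2 + (-N1d) * h ^ 3) * (v₂ x + (-pd 0 v₂ x) * h + M2a * h ^ 2 + (-N2a) * h ^ 3) * (v₃ x + (pd 1 v₃ x) * h + M3b * h ^ 2 + N3b * h ^ 3) -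
      (v₁ x + (-(pd 0 v₁ x - pd 1 v₁ x)) * h + M1d * h ^ 2 + (-N1d) * h ^ 3) * (v₂ x + (pd 1 v₂ x) * h + M2b * h ^ 2 + N2b * h ^ 3) * (v₃ x + (-pd 0 v₃ x) * h + M3a * h ^ 2 + (-N3a) * h ^ 3)) +
      ((v₁ x + (-pd 0 v₁ x) * h + M1a * h ^ 2 + (-N1a) * h ^ 3) * (v₂ x + (-(pd 0 v₂ x + pd 1 v₂ x)) * h + M2c * h ^ 2 + (-N2c) * h ^ 3) * (v₃ x + (-pd 1 v₃ x) * h + M3b * h ^ 2 + (-N3b) * h ^ 3) -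
      (v₁ x + (-pd 0 v₁ x) * h + M1a * h ^ 2 + (-N1a) * h ^ 3) * (v₂ x + (-pd 1 v₂ x) * h + M2b * h ^ 2 + (-N2b) * h ^ 3) * (v₃ x + (-(pd 0 v₃ x + pd 1 v₃ x)) * h + M3c * h ^ 2 + (-N3c) * h ^ 3) -
      (v₁ x + (-(pd 0 v₁ x + pd 1 v₁ x)) * h + M1c * h ^ 2 + (-N1c) * h ^ 3) * (v₂ x + (-pd 0 v₂ x) * h + M2a * h ^ 2 + (-N2a) * h ^ 3) * (v₃ x + (-pd 1 v₃ x) * h + M3b * h ^ 2 + (-N3b) * h ^ 3) +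
      (v₁ x + (-(pd 0 v₁ x + pd 1 v₁ x)) * h + M1c * h ^ 2 + (-N1c) * h ^ 3) * (v₂ x + (-pd 1 v₂ x) * h + M2b * h ^ 2 + (-N2b) * h ^ 3) * (v₃ x + (-pd 0 v₃ x) * h + M3a * h ^ 2 + (-N3a) * h ^ 3) +
      (v₁ x + (-pd 1 v₁ x) * h + M1b * h ^ 2 + (-N1b) * h ^ 3) * (v₂ x + (-pd 0 v₂ x) * h + M2a * h ^ 2 + (-N2a) * h ^ 3) * (v₃ x + (-(pd 0 v₃ x + pd 1 v₃ x)) * h + M3c * h ^ 2 + (-N3c) * h ^ 3) -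
      (v₁ x + (-pd 1 v₁ x) * h + M1b * h ^ 2 + (-N1b) * h ^ 3) * (v₂ x + (-(pd 0 v₂ x + pd 1 v₂ x)) * h + M2c * h ^ 2 + (-N2c) * h ^ 3) * (v₃ x + (-pd 0 v₃ x) * h + M3a * h ^ 2 + (-N3a) * h ^ 3)) +
      ((v₁ x + ((pd 0 v₁ x - pd 1 v₁ x)) * h + M1d * h ^ 2 + N1d * h ^ 3) * (v₂ x + (pd 0 v₂ x) * h + M2a * h ^ 2 + N2a * h ^ 3) * (v₃ x + (-pd 1 v₃ x) * h + M3b * h ^ 2 + (-N3b) * h ^ 3) -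
      (v₁ x + ((pd 0 v₁ x - pd 1 v₁ x)) * h + M1d * h ^ 2 + N1d * h ^ 3) * (v₂ x + (-pd 1 v₂ x) * h + M2b * h ^ 2 + (-N2b) * h ^ 3) * (v₃ x + (pd 0 v₃ x) * h + M3a * h ^ 2 + N3a * h ^ 3) -
      (v₁ x + (pd 0 v₁ x) * h + M1a * h ^ 2 + N1a * h ^ 3) * (v₂ x + ((pd 0 v₂ x - pd 1 v₂ x)) * h + M2d * h ^ 2 + N2d * h ^ 3) * (v₃ x + (-pd 1 v₃ x) * h + M3b * h ^ 2 + (-N3b) * h ^ 3) +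
      (v₁ x + (pd 0 v₁ x) * h + M1a * h ^ 2 + N1a * h ^ 3) * (v₂ x + (-pd 1 v₂ x) * h + M2b * h ^ 2 + (-N2b) * h ^ 3) * (v₃ x + ((pd 0 v₃ x - pd 1 v₃ x)) * h + M3d * h ^ 2 + N3d * h ^ 3) +
      (v₁ x + (-pd 1 v₁ x) * h + M1b * h ^ 2 + (-N1b) * h ^ 3) * (v₂ x + ((pd 0 v₂ x - pd 1 v₂ x)) * h + M2d * h ^ 2 + N2d * h ^ 3) * (v₃ x + (pd 0 v₃ x) * h + M3a * h ^ 2 + N3a * h ^ 3) -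
      (v₁ x + (-pd 1 v₁ x) * h + M1b * h ^ 2 + (-N1b) * h ^ 3) * (v₂ x + (pd 0 v₂ x) * h + M2a * h ^ 2 + N2a * h ^ 3) * (v₃ x + ((pd 0 v₃ x - pd 1 v₃ x)) * h + M3d * h ^ 2 + N3d * h ^ 3)) -
      4 * h ^ 2 * (v₁ x * jac v₂ v₃ x + v₂ x * jac v₃ v₁ x + v₃ x * jac v₁ v₂ x)| ≤ CQ * h ^ 4 := by
    intro h hh1
    have h4nn : (0:ℝ) ≤ h ^ 4 := by positivity
    have e : ((v₁ x + (pd 0 v₁ x) * h + M1a * h ^ 2 + N1a * h ^ 3) * (v₂ x + ((pd 0 v₂ x + pd 1 v₂ x)) * h + M2c * h ^ 2 + N2c * h ^ 3) * (v₃ x + (pd 1 v₃ x) * h + M3b * h ^ 2 + N3b * h ^ 3) -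
      (v₁ x + (pd 0 v₁ x) * h + M1a * h ^ 2 + N1a * h ^ 3) * (v₂ x + (pd 1 v₂ x) * h + M2b * h ^ 2 + N2b * h ^ 3) * (v₃ x + ((pd 0 v₃ x + pd 1 v₃ x)) * h + M3c * h ^ 2 + N3c * h ^ 3) -
      (v₁ x + ((pd 0 v₁ x + pd 1 v₁ x)) * h + M1c * h ^ 2 + N1c * h ^ 3) * (v₂ x + (pd 0 v₂ x) * h + M2a * h ^ 2 + N2a * h ^ 3) * (v₃ x + (pd 1 v₃ x) * h + M3b * h ^ 2 + N3b * h ^ 3) +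
      (v₁ x + ((pd 0 v₁ x + pd 1 v₁ x)) * h + M1c * h ^ 2 + N1c * h ^ 3) * (v₂ x + (pd 1 v₂ x) * h + M2b * h ^ 2 + N2b * h ^ 3) * (v₃ x + (pd 0 v₃ x) * h + M3a * h ^ 2 + N3a * h ^ 3) +
      (v₁ x + (pd 1 v₁ x) * h + M1b * h ^ 2 + N1b * h ^ 3) * (v₂ x + (pd 0 v₂ x) * h + M2a * h ^ 2 + N2a * h ^ 3) * (v₃ x + ((pd 0 v₃ x + pd 1 v₃ x)) * h + M3c * h ^ 2 + N3c * h ^ 3) -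
      (v₁ x + (pd 1 v₁ x) * h + M1b * h ^ 2 + N1b * h ^ 3) * (v₂ x + ((pd 0 v₂ x + pd 1 v₂ x)) * h + M2c * h ^ 2 + N2c * h ^ 3) * (v₃ x + (pd 0 v₃ x) * h + M3a * h ^ 2 + N3a * h ^ 3)) +
      ((v₁ x + (-pd 0 v₁ x) * h + M1a * h ^ 2 + (-N1a) * h ^ 3) * (v₂ x + (pd 1 v₂ x) * h + M2b * h ^ 2 + N2b * h ^ 3) * (v₃ x + (-(pd 0 v₃ x - pd 1 v₃ x)) * h + M3d * h ^ 2 + (-N3d) * h ^ 3) -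
      (v₁ x + (-pd 0 v₁ x) * h + M1a * h ^ 2 + (-N1a) * h ^ 3) * (v₂ x + (-(pd 0 v₂ x - pd 1 v₂ x)) * h + M2d * h ^ 2 + (-N2d) * h ^ 3) * (v₃ x + (pd 1 v₃ x) * h + M3b * h ^ 2 + N3b * h ^ 3) -
      (v₁ x + (pd 1 v₁ x) * h + M1b * h ^ 2 + N1b * h ^ 3) * (v₂ x + (-pd 0 v₂ x) * h + M2a * h ^ 2 + (-N2a) * h ^ 3) * (v₃ x + (-(pd 0 v₃ x - pd 1 v₃ x)) * h + M3d * h ^ 2 + (-N3d) * h ^ 3) +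
      (v₁ x + (pd 1 v₁ x) * h + M1b * h ^ 2 + N1b * h ^ 3) * (v₂ x + (-(pd 0 v₂ x - pd 1 v₂ x)) * h + M2d * h ^ 2 + (-N2d) * h ^ 3) * (v₃ x + (-pd 0 v₃ x) * h + M3a * h ^ 2 + (-N3a) * h ^ 3) +
      (v₁ x + (-(pd 0 v₁ x - pd 1 v₁ x)) * h + M1d * h ^ 2 + (-N1d) * h ^ 3) * (v₂ x + (-pd 0 v₂ x) * h + M2a * h ^ 2 + (-N2a) * h ^ 3) * (v₃ x + (pd 1 v₃ x) * h + M3b * h ^ 2 + N3b * h ^ 3) -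
      (v₁ x + (-(pd 0 v₁ x - pd 1 v₁ x)) * h + M1d * h ^ 2 + (-N1d) * h ^ 3) * (v₂ x + (pd 1 v₂ x) * h + M2b * h ^ 2 + N2b * h ^ 3) * (v₃ x + (-pd 0 v₃ x) * h + M3a * h ^ 2 + (-N3a) * h ^ 3)) +
      ((v₁ x + (-pd 0 v₁ x) * h + M1a * h ^ 2 + (-N1a) * h ^ 3) * (v₂ x + (-(pd 0 v₂ x + pd 1 v₂ x)) * h + M2c * h ^ 2 + (-N2c) * h ^ 3) * (v₃ x + (-pd 1 v₃ x) * h + M3b * h ^ 2 + (-N3b) * h ^ 3) -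
      (v₁ x + (-pd 0 v₁ x) * h + M1a * h ^ 2 + (-N1a) * h ^ 3) * (v₂ x + (-pd 1 v₂ x) * h + M2b * h ^ 2 + (-N2b) * h ^ 3) * (v₃ x + (-(pd 0 v₃ x + pd 1 v₃ x)) * h + M3c * h ^ 2 + (-N3c) * h ^ 3) -
      (v₁ x + (-(pd 0 v₁ x + pd 1 v₁ x)) * h + M1c * h ^ 2 + (-N1c) * h ^ 3) * (v₂ x + (-pd 0 v₂ x) * h + M2a * h ^ 2 + (-N2a) * h ^ 3) * (v₃ x + (-pd 1 v₃ x) * h + M3b * h ^ 2 + (-N3b) * h ^ 3) +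
      (v₁ x + (-(pd 0 v₁ x + pd 1 v₁ x)) * h + M1c * h ^ 2 + (-N1c) * h ^ 3) * (v₂ x + (-pd 1 v₂ x) * h + M2b * h ^ 2 + (-N2b) * h ^ 3) * (v₃ x + (-pd 0 v₃ x) * h + M3a * h ^ 2 + (-N3a) * h ^ 3) +
      (v₁ x + (-pd 1 v₁ x) * h + M1b * h ^ 2 + (-N1b) * h ^ 3) * (v₂ x + (-pd 0 v₂ x) * h + M2a * h ^ 2 + (-N2a) * h ^ 3) * (v₃ x + (-(pd 0 v₃ x + pd 1 v₃ x)) * h + M3c * h ^ 2 + (-N3c) * h ^ 3) -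
      (v₁ x + (-pd 1 v₁ x) * h + M1b * h ^ 2 + (-N1b) * h ^ 3) * (v₂ x + (-(pd 0 v₂ x + pd 1 v₂ x)) * h + M2c * h ^ 2 + (-N2c) * h ^ 3) * (v₃ x + (-pd 0 v₃ x) * h + M3a * h ^ 2 + (-N3a) * h ^ 3)) +
      ((v₁ x + ((pd 0 v₁ x - pd 1 v₁ x)) * h + M1d * h ^ 2 + N1d * h ^ 3) * (v₂ x + (pd 0 v₂ x) * h + M2a * h ^ 2 + N2a * h ^ 3) * (v₃ x + (-pd 1 v₃ x) * h + M3b * h ^ 2 + (-N3b) * h ^ 3) -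
      (v₁ x + ((pd 0 v₁ x - pd 1 v₁ x)) * h + M1d * h ^ 2 + N1d * h ^ 3) * (v₂ x + (-pd 1 v₂ x) * h + M2b * h ^ 2 + (-N2b) * h ^ 3) * (v₃ x + (pd 0 v₃ x) * h + M3a * h ^ 2 + N3a * h ^ 3) -
      (v₁ x + (pd 0 v₁ x) * h + M1a * h ^ 2 + N1a * h ^ 3) * (v₂ x + ((pd 0 v₂ x - pd 1 v₂ x)) * h + M2d * h ^ 2 + N2d * h ^ 3) * (v₃ x + (-pd 1 v₃ x) * h + M3b * h ^ 2 + (-N3b) * h ^ 3) +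
      (v₁ x + (pd 0 v₁ x) * h + M1a * h ^ 2 + N1a * h ^ 3) * (v₂ x + (-pd 1 v₂ x) * h + M2b * h ^ 2 + (-N2b) * h ^ 3) * (v₃ x + ((pd 0 v₃ x - pd 1 v₃ x)) * h + M3d * h ^ 2 + N3d * h ^ 3) +
      (v₁ x + (-pd 1 v₁ x) * h + M1b * h ^ 2 + (-N1b) * h ^ 3) * (v₂ x + ((pd 0 v₂ x - pd 1 v₂ x)) * h + M2d * h ^ 2 + N2d * h ^ 3) * (v₃ x + (pd 0 v₃ x) * h + M3a * h ^ 2 + N3a * h ^ 3) -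
      (v₁ x + (-pd 1 v₁ x) * h + M1b * h ^ 2 + (-N1b) * h ^ 3) * (v₂ x + (pd 0 v₂ x) * h + M2a * h ^ 2 + N2a * h ^ 3) * (v₃ x + ((pd 0 v₃ x - pd 1 v₃ x)) * h + M3d * h ^ 2 + N3d * h ^ 3)) -
        4 * h ^ 2 * (v₁ x * jac v₂ v₃ x + v₂ x * jac v₃ v₁ x + v₃ x * jac v₁ v₂ x) = h ^ 4 * (q0 + q2 * h ^ 2 + q4 * h ^ 4) := by
      rw [hq0, hq2, hq4]; simp only [jac]; ring
    rw [e, abs_mul, abs_of_nonneg h4nn, hCQ]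
    exact le_trans (mul_le_mul_of_nonneg_left (poly_abs3 q0 q2 q4 h hh1) h4nn) (le_of_eq (by ring))
  clear hq0 hq2 hq4
  refine ⟨72 * (B0 + CE) ^ 2 * CE + CQ,
    add_pos_of_pos_of_nonneg (mul_pos (mul_pos (by norm_num : (0:ℝ) < 72)
      (pow_pos (add_pos_of_nonneg_of_pos hB0nn hCEpos) 2)) hCEpos) hCQnn,
    1, one_pos, fun h h0 hδ => ?_⟩
  have hh1 : |h| ≤ 1 := le_of_lt hδ
  have h4nn : (0:ℝ) ≤ h ^ 4 := by positivity
  have e4 : |h| ^ 4 = h ^ 4 := by rw [← abs_pow]; exact abs_of_nonneg h4nn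
  have h4le1 : h ^ 4 ≤ 1 := e4 ▸ pow_le_one₀ (abs_nonneg h) hh1
  have hee : CE * h ^ 4 ≤ CE := by
    calc CE * h ^ 4 ≤ CE * 1 := mul_le_mul_of_nonneg_left h4le1 (le_of_lt hCEpos)
      _ = CE := mul_one CE
  -- upgraded error bounds and entry bounds
  have A1a := (H1a h hh1).trans (mul_le_mul_of_nonneg_right (show C1a ≤ CE by rw [hCE]; linarith) h4nn)
  have bs1a := cubic_abs_le (v₁ x) (pd 0 v₁ x) M1a N1a h B0 hh1 (by rw [hB0]; linarith)
  have A1b := (H1b h hh1).trans (mul_le_mul_of_nonneg_right (show C1b ≤ CE by rw [hCE]; linarith) h4nn)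
  have bs1b := cubic_abs_le (v₁ x) (pd 1 v₁ x) M1b N1b h B0 hh1 (by rw [hB0]; linarith)
  have A1c := (H1c h hh1).trans (mul_le_mul_of_nonneg_right (show C1c ≤ CE by rw [hCE]; linarith) h4nn)
  have bs1c := cubic_abs_le (v₁ x) ((pd 0 v₁ x + pd 1 v₁ x)) M1c N1c h B0 hh1 (by rw [hB0]; linarith)
  have A1d := (H1d h hh1).trans (mul_le_mul_of_nonneg_right (show C1d ≤ CE by rw [hCE]; linarith) h4nn)
  have bs1d := cubic_abs_le (v₁ x) ((pd 0 v₁ x - pd 1 v₁ x)) M1d N1d h B0 hh1 (by rw [hB0]; linarith)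
  have A1na := (H1na h hh1).trans (mul_le_mul_of_nonneg_right (show C1na ≤ CE by rw [hCE]; linarith) h4nn)
  have bs1na := cubic_abs_le (v₁ x) (-pd 0 v₁ x) M1a (-N1a) h B0 hh1 (by rw [abs_neg, abs_neg, hB0]; linarith)
  have A1nb := (H1nb h hh1).trans (mul_le_mul_of_nonneg_right (show C1nb ≤ CE by rw [hCE]; linarith) h4nn)
  have bs1nb := cubic_abs_le (v₁ x) (-pd 1 v₁ x) M1b (-N1b) h B0 hh1 (by rw [abs_neg, abs_neg, hB0]; linarith)
  have A1nc := (H1nc h hh1).trans (mul_le_mul_of_nonneg_right (show C1nc ≤ CE by rw [hCE]; linarith) h4nn)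
  have bs1nc := cubic_abs_le (v₁ x) (-(pd 0 v₁ x + pd 1 v₁ x)) M1c (-N1c) h B0 hh1 (by rw [abs_neg, abs_neg, hB0]; linarith)
  have A1nd := (H1nd h hh1).trans (mul_le_mul_of_nonneg_right (show C1nd ≤ CE by rw [hCE]; linarith) h4nn)
  have bs1nd := cubic_abs_le (v₁ x) (-(pd 0 v₁ x - pd 1 v₁ x)) M1d (-N1d) h B0 hh1 (by rw [abs_neg, abs_neg, hB0]; linarith)
  have A2a := (H2a h hh1).trans (mul_le_mul_of_nonneg_right (show C2a ≤ CE by rw [hCE]; linarith) h4nn)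
  have bs2a := cubic_abs_le (v₂ x) (pd 0 v₂ x) M2a N2a h B0 hh1 (by rw [hB0]; linarith)
  have A2b := (H2b h hh1).trans (mul_le_mul_of_nonneg_right (show C2b ≤ CE by rw [hCE]; linarith) h4nn)
  have bs2b := cubic_abs_le (v₂ x) (pd 1 v₂ x) M2b N2b h B0 hh1 (by rw [hB0]; linarith)
  have A2c := (H2c h hh1).trans (mul_le_mul_of_nonneg_right (show C2c ≤ CE by rw [hCE]; linarith) h4nn)
  have bs2c := cubic_abs_le (v₂ x) ((pd 0 v₂ x + pd 1 v₂ x)) M2c N2c h B0 hh1 (by rw [hB0]; linarith)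
  have A2d := (H2d h hh1).trans (mul_le_mul_of_nonneg_right (show C2d ≤ CE by rw [hCE]; linarith) h4nn)
  have bs2d := cubic_abs_le (v₂ x) ((pd 0 v₂ x - pd 1 v₂ x)) M2d N2d h B0 hh1 (by rw [hB0]; linarith)
  have A2na := (H2na h hh1).trans (mul_le_mul_of_nonneg_right (show C2na ≤ CE by rw [hCE]; linarith) h4nn)
  have bs2na := cubic_abs_le (v₂ x) (-pd 0 v₂ x) M2a (-N2a) h B0 hh1 (by rw [abs_neg, abs_neg, hB0]; linarith)
  have A2nb := (H2nb h hh1).trans (mul_le_mul_of_nonneg_right (show C2nb ≤ CE by rw [hCE]; linarith) h4nn)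
  have bs2nb := cubic_abs_le (v₂ x) (-pd 1 v₂ x) M2b (-N2b) h B0 hh1 (by rw [abs_neg, abs_neg, hB0]; linarith)
  have A2nc := (H2nc h hh1).trans (mul_le_mul_of_nonneg_right (show C2nc ≤ CE by rw [hCE]; linarith) h4nn)
  have bs2nc := cubic_abs_le (v₂ x) (-(pd 0 v₂ x + pd 1 v₂ x)) M2c (-N2c) h B0 hh1 (by rw [abs_neg, abs_neg, hB0]; linarith)
  have A2nd := (H2nd h hh1).trans (mul_le_mul_of_nonneg_right (show C2nd ≤ CE by rw [hCE]; linarith) h4nn)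
  have bs2nd := cubic_abs_le (v₂ x) (-(pd 0 v₂ x - pd 1 v₂ x)) M2d (-N2d) h B0 hh1 (by rw [abs_neg, abs_neg, hB0]; linarith)
  have A3a := (H3a h hh1).trans (mul_le_mul_of_nonneg_right (show C3a ≤ CE by rw [hCE]; linarith) h4nn)
  have bs3a := cubic_abs_le (v₃ x) (pd 0 v₃ x) M3a N3a h B0 hh1 (by rw [hB0]; linarith)
  have A3b := (H3b h hh1).trans (mul_le_mul_of_nonneg_right (show C3b ≤ CE by rw [hCE]; linarith) h4nn)
  have bs3b := cubic_abs_le (v₃ x) (pd 1 v₃ x) M3b N3b h B0 hh1 (by rw [hB0]; linarith)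
  have A3c := (H3c h hh1).trans (mul_le_mul_of_nonneg_right (show C3c ≤ CE by rw [hCE]; linarith) h4nn)
  have bs3c := cubic_abs_le (v₃ x) ((pd 0 v₃ x + pd 1 v₃ x)) M3c N3c h B0 hh1 (by rw [hB0]; linarith)
  have A3d := (H3d h hh1).trans (mul_le_mul_of_nonneg_right (show C3d ≤ CE by rw [hCE]; linarith) h4nn)
  have bs3d := cubic_abs_le (v₃ x) ((pd 0 v₃ x - pd 1 v₃ x)) M3d N3d h B0 hh1 (by rw [hB0]; linarith)
  have A3na := (H3na h hh1).trans (mul_le_mul_of_nonneg_right (show C3na ≤ CE by rw [hCE]; linarith) h4nn)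
  have bs3na := cubic_abs_le (v₃ x) (-pd 0 v₃ x) M3a (-N3a) h B0 hh1 (by rw [abs_neg, abs_neg, hB0]; linarith)
  have A3nb := (H3nb h hh1).trans (mul_le_mul_of_nonneg_right (show C3nb ≤ CE by rw [hCE]; linarith) h4nn)
  have bs3nb := cubic_abs_le (v₃ x) (-pd 1 v₃ x) M3b (-N3b) h B0 hh1 (by rw [abs_neg, abs_neg, hB0]; linarith)
  have A3nc := (H3nc h hh1).trans (mul_le_mul_of_nonneg_right (show C3nc ≤ CE by rw [hCE]; linarith) h4nn)
  have bs3nc := cubic_abs_le (v₃ x) (-(pd 0 v₃ x + pd 1 v₃ x)) M3c (-N3c) h B0 hh1 (by rw [abs_neg, abs_neg, hB0]; linarith)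
  have A3nd := (H3nd h hh1).trans (mul_le_mul_of_nonneg_right (show C3nd ≤ CE by rw [hCE]; linarith) h4nn)
  have bs3nd := cubic_abs_le (v₃ x) (-(pd 0 v₃ x - pd 1 v₃ x)) M3d (-N3d) h B0 hh1 (by rw [abs_neg, abs_neg, hB0]; linarith)
  -- per-cell determinant difference bounds
  have d1 := det3_diff B0 (CE * h ^ 4) CE hB0nn hee bs1a bs1c bs1b bs2a bs2c bs2b bs3a bs3c bs3b A1a A1c A1b A2a A2c A2b A3a A3c A3b
  have d2 := det3_diff B0 (CE * h ^ 4) CE hB0nn hee bs1na bs1b bs1nd bs2na bs2b bs2nd bs3na bs3b bs3nd A1na A1b A1nd A2na A2b A2nd A3na A3b A3nd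
  have d3 := det3_diff B0 (CE * h ^ 4) CE hB0nn hee bs1na bs1nc bs1nb bs2na bs2nc bs2nb bs3na bs3nc bs3nb A1na A1nc A1nb A2na A2nc A2nb A3na A3nc A3nb
  have d4 := det3_diff B0 (CE * h ^ 4) CE hB0nn hee bs1d bs1a bs1nb bs2d bs2a bs2nb bs3d bs3a bs3nb A1d A1a A1nb A2d A2a A2nb A3d A3a A3nb
  -- main-term bound
  have hB2 := hB2All h hh1
  simp only [D, Matrix.det_fin_three, Matrix.cons_val_zero, Matrix.cons_val_one,
    Matrix.head_cons, Matrix.cons_val_two, Matrix.tail_cons, Matrix.cons_val_fin_one,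
    Matrix.of_apply]
  rw [e4]
  refine le_trans (abs_sub_le _ (((v₁ x + (pd 0 v₁ x) * h + M1a * h ^ 2 + N1a * h ^ 3) * (v₂ x + ((pd 0 v₂ x + pd 1 v₂ x)) * h + M2c * h ^ 2 + N2c * h ^ 3) * (v₃ x + (pd 1 v₃ x) * h + M3b * h ^ 2 + N3b * h ^ 3) -
      (v₁ x + (pd 0 v₁ x) * h + M1a * h ^ 2 + N1a * h ^ 3) * (v₂ x + (pd 1 v₂ x) * h + M2b * h ^ 2 + N2b * h ^ 3) * (v₃ x + ((pd 0 v₃ x + pd 1 v₃ x)) * h + M3c * h ^ 2 + N3c * h ^ 3) -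
      (v₁ x + ((pd 0 v₁ x + pd 1 v₁ x)) * h + M1c * h ^ 2 + N1c * h ^ 3) * (v₂ x + (pd 0 v₂ x) * h + M2a * h ^ 2 + N2a * h ^ 3) * (v₃ x + (pd 1 v₃ x) * h + M3b * h ^ 2 + N3b * h ^ 3) +
      (v₁ x + ((pd 0 v₁ x + pd 1 v₁ x)) * h + M1c * h ^ 2 + N1c * h ^ 3) * (v₂ x + (pd 1 v₂ x) * h + M2b * h ^ 2 + N2b * h ^ 3) * (v₃ x + (pd 0 v₃ x) * h + M3a * h ^ 2 + N3a * h ^ 3) +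
      (v₁ x + (pd 1 v₁ x) * h + M1b * h ^ 2 + N1b * h ^ 3) * (v₂ x + (pd 0 v₂ x) * h + M2a * h ^ 2 + N2a * h ^ 3) * (v₃ x + ((pd 0 v₃ x + pd 1 v₃ x)) * h + M3c * h ^ 2 + N3c * h ^ 3) -
      (v₁ x + (pd 1 v₁ x) * h + M1b * h ^ 2 + N1b * h ^ 3) * (v₂ x + ((pd 0 v₂ x + pd 1 v₂ x)) * h + M2c * h ^ 2 + N2c * h ^ 3) * (v₃ x + (pd 0 v₃ x) * h + M3a * h ^ 2 + N3a * h ^ 3)) + ((v₁ x + (-pd 0 v₁ x) * h + M1a * h ^ 2 + (-N1a) * h ^ 3) * (v₂ x + (pd 1 v₂ x) * h + M2b * h ^ 2 + N2b * h ^ 3) * (v₃ x + (-(pd 0 v₃ x - pd 1 v₃ x)) * h + M3d * h ^ 2 + (-N3d) * h ^ 3) -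
      (v₁ x + (-pd 0 v₁ x) * h + M1a * h ^ 2 + (-N1a) * h ^ 3) * (v₂ x + (-(pd 0 v₂ x - pd 1 v₂ x)) * h + M2d * h ^ 2 + (-N2d) * h ^ 3) * (v₃ x + (pd 1 v₃ x) * h + M3b * h ^ 2 + N3b * h ^ 3) -
      (v₁ x + (pd 1 v₁ x) * h + M1b * h ^ 2 + N1b * h ^ 3) * (v₂ x + (-pd 0 v₂ x) * h + M2a * h ^ 2 + (-N2a) * h ^ 3) * (v₃ x + (-(pd 0 v₃ x - pd 1 v₃ x)) * h + M3d * h ^ 2 + (-N3d) * h ^ 3) +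
      (v₁ x + (pd 1 v₁ x) * h + M1b * h ^ 2 + N1b * h ^ 3) * (v₂ x + (-(pd 0 v₂ x - pd 1 v₂ x)) * h + M2d * h ^ 2 + (-N2d) * h ^ 3) * (v₃ x + (-pd 0 v₃ x) * h + M3a * h ^ 2 + (-N3a) * h ^ 3) +
      (v₁ x + (-(pd 0 v₁ x - pd 1 v₁ x)) * h + M1d * h ^ 2 + (-N1d) * h ^ 3) * (v₂ x + (-pd 0 v₂ x) * h + M2a * h ^ 2 + (-N2a) * h ^ 3) * (v₃ x + (pd 1 v₃ x) * h + M3b * h ^ 2 + N3b * h ^ 3) -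
      (v₁ x + (-(pd 0 v₁ x - pd 1 v₁ x)) * h + M1d * h ^ 2 + (-N1d) * h ^ 3) * (v₂ x + (pd 1 v₂ x) * h + M2b * h ^ 2 + N2b * h ^ 3) * (v₃ x + (-pd 0 v₃ x) * h + M3a * h ^ 2 + (-N3a) * h ^ 3)) + ((v₁ x + (-pd 0 v₁ x) * h + M1a * h ^ 2 + (-N1a) * h ^ 3) * (v₂ x + (-(pd 0 v₂ x + pd 1 v₂ x)) * h + M2c * h ^ 2 + (-N2c) * h ^ 3) * (v₃ x + (-pd 1 v₃ x) * h + M3b * h ^ 2 + (-N3b) * h ^ 3) -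
      (v₁ x + (-pd 0 v₁ x) * h + M1a * h ^ 2 + (-N1a) * h ^ 3) * (v₂ x + (-pd 1 v₂ x) * h + M2b * h ^ 2 + (-N2b) * h ^ 3) * (v₃ x + (-(pd 0 v₃ x + pd 1 v₃ x)) * h + M3c * h ^ 2 + (-N3c) * h ^ 3) -
      (v₁ x + (-(pd 0 v₁ x + pd 1 v₁ x)) * h + M1c * h ^ 2 + (-N1c) * h ^ 3) * (v₂ x + (-pd 0 v₂ x) * h + M2a * h ^ 2 + (-N2a) * h ^ 3) * (v₃ x + (-pd 1 v₃ x) * h + M3b * h ^ 2 + (-N3b) * h ^ 3) +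
      (v₁ x + (-(pd 0 v₁ x + pd 1 v₁ x)) * h + M1c * h ^ 2 + (-N1c) * h ^ 3) * (v₂ x + (-pd 1 v₂ x) * h + M2b * h ^ 2 + (-N2b) * h ^ 3) * (v₃ x + (-pd 0 v₃ x) * h + M3a * h ^ 2 + (-N3a) * h ^ 3) +
      (v₁ x + (-pd 1 v₁ x) * h + M1b * h ^ 2 + (-N1b) * h ^ 3) * (v₂ x + (-pd 0 v₂ x) * h + M2a * h ^ 2 + (-N2a) * h ^ 3) * (v₃ x + (-(pd 0 v₃ x + pd 1 v₃ x)) * h + M3c * h ^ 2 + (-N3c) * h ^ 3) -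
      (v₁ x + (-pd 1 v₁ x) * h + M1b * h ^ 2 + (-N1b) * h ^ 3) * (v₂ x + (-(pd 0 v₂ x + pd 1 v₂ x)) * h + M2c * h ^ 2 + (-N2c) * h ^ 3) * (v₃ x + (-pd 0 v₃ x) * h + M3a * h ^ 2 + (-N3a) * h ^ 3)) + ((v₁ x + ((pd 0 v₁ x - pd 1 v₁ x)) * h + M1d * h ^ 2 + N1d * h ^ 3) * (v₂ x + (pd 0 v₂ x) * h + M2a * h ^ 2 + N2a * h ^ 3) * (v₃ x + (-pd 1 v₃ x) * h + M3b * h ^ 2 + (-N3b) * h ^ 3) -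
      (v₁ x + ((pd 0 v₁ x - pd 1 v₁ x)) * h + M1d * h ^ 2 + N1d * h ^ 3) * (v₂ x + (-pd 1 v₂ x) * h + M2b * h ^ 2 + (-N2b) * h ^ 3) * (v₃ x + (pd 0 v₃ x) * h + M3a * h ^ 2 + N3a * h ^ 3) -
      (v₁ x + (pd 0 v₁ x) * h + M1a * h ^ 2 + N1a * h ^ 3) * (v₂ x + ((pd 0 v₂ x - pd 1 v₂ x)) * h + M2d * h ^ 2 + N2d * h ^ 3) * (v₃ x + (-pd 1 v₃ x) * h + M3b * h ^ 2 + (-N3b) * h ^ 3) +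
      (v₁ x + (pd 0 v₁ x) * h + M1a * h ^ 2 + N1a * h ^ 3) * (v₂ x + (-pd 1 v₂ x) * h + M2b * h ^ 2 + (-N2b) * h ^ 3) * (v₃ x + ((pd 0 v₃ x - pd 1 v₃ x)) * h + M3d * h ^ 2 + N3d * h ^ 3) +
      (v₁ x + (-pd 1 v₁ x) * h + M1b * h ^ 2 + (-N1b) * h ^ 3) * (v₂ x + ((pd 0 v₂ x - pd 1 v₂ x)) * h + M2d * h ^ 2 + N2d * h ^ 3) * (v₃ x + (pd 0 v₃ x) * h + M3a * h ^ 2 + N3a * h ^ 3) -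
      (v₁ x + (-pd 1 v₁ x) * h + M1b * h ^ 2 + (-N1b) * h ^ 3) * (v₂ x + (pd 0 v₂ x) * h + M2a * h ^ 2 + N2a * h ^ 3) * (v₃ x + ((pd 0 v₃ x - pd 1 v₃ x)) * h + M3d * h ^ 2 + N3d * h ^ 3))) _)
    (le_trans (add_le_add (le_trans (sub4_abs _ _ _ _ _ _ _ _)
      (add_le_add (add_le_add (add_le_add d1 d2) d3) d4)) hB2) (le_of_eq (by ring)))
end
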